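/- arXiv:1303.3345 — 9 statements merged into one kernel-verified Lean document; each statement's English description precedes it below -/
import Mathlib

section
/- Suppose f : ℝ → ℝ is continuous with x·f(x) > 0 for all x ≠ 0 and f(0) = 0, g : [0,∞) → ℝ is continuous, and g is integrable on (0,∞) (g ∈ L¹(0,∞)). Then every continuous solution x of x'(t) = -f(x(t)) + g(t) for t > 0, x(0) = ξ, satisfies lim_{t→∞} x(t) = 0. -/
/-!
Add to `x` the tail `∫ₜ^∞ g = ∫₀^∞ g - ∫₀^t g`, which tends to `0`: the result `z` satisfies
`z' = -f(x)` with `x - z → 0`. Once `|x - z| < ε`, the derivative `z'` is negative wherever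
`z = ε`, so `z` can never climb back above `ε`; and `z` cannot stay above `ε` forever, since then
`x` would stay in a compact subinterval of `(0, ∞)` on which `f` is bounded below by some
`m > 0`, forcing `z' ≤ -m`. Symmetrically `z` eventually stays above `-ε`.
-/

open Filter Real Set Topology MeasureTheory

noncomputable section

/-- A function `f : (0,∞) → (0,∞)` is regularly varying at `0` with index `β` if
`f(λx)/f(x) → λ^β` as `x → 0⁺` for every `λ > 0`. -/
def RVat0 (f : ℝ → ℝ) (β : ℝ) : Prop :=
  ∀ lam : ℝ, 0 < lam →
    Tendsto (fun x => f (lam * x) / f x) (nhdsWithin 0 (Set.Ioi 0)) (nhds (lam ^ β))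

/-- A function `h : (0,∞) → (0,∞)` is regularly varying at `∞` with index `α` if
`h(λt)/h(t) → λ^α` as `t → ∞` for every `λ > 0`. -/
def RVatInf (h : ℝ → ℝ) (α : ℝ) : Prop :=
  ∀ lam : ℝ, 0 < lam →
    Tendsto (fun t => h (lam * t) / h t) atTop (nhds (lam ^ α))

/-- A continuous solution of the perturbed ODE `x'(t) = -f(x(t)) + g(t)`, `t > 0`,
with initial condition `x(0) = ξ`. -/
def IsSol (f g : ℝ → ℝ) (ξ : ℝ) (x : ℝ → ℝ) : Prop :=
  ContinuousOn x (Set.Ici 0) ∧ x 0 = ξ ∧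
    ∀ t : ℝ, 0 < t → HasDerivAt x (-f (x t) + g t) t

section

variable {f x z : ℝ → ℝ}

theorem exists_lt_of_hasDerivAt_neg_comp (hf : Continuous f) (hf_pos : ∀ y, 0 < y → 0 < f y)
    {T ε : ℝ} (hε : 0 < ε) (hz : ∀ t ≥ T, HasDerivAt z (-f (x t)) t)
    (hxz : ∀ t ≥ T, |x t - z t| < ε / 2) : ∃ t ≥ T, z t < ε := by
  by_contra! hge
  have hx_pos : ∀ t ≥ T, ε / 2 < x t := fun t ht => by
    linarith [hge t ht, (abs_lt.1 (hxz t ht)).1]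
  have hz_cont : ContinuousOn z (Ici T) := fun t ht =>
    (hz t ht).continuousAt.continuousWithinAt
  have hz_anti : AntitoneOn z (Ici T) := by
    refine antitoneOn_of_hasDerivWithinAt_nonpos (convex_Ici T) hz_cont
      (fun t ht => (hz t (interior_subset ht)).hasDerivWithinAt) fun t ht => ?_
    have := hf_pos _ ((half_pos hε).trans (hx_pos t (interior_subset ht)))
    linarith
  obtain ⟨m, hm, hfm⟩ := isCompact_Icc.exists_forall_le' (s := Icc (ε / 2) (z T + ε / 2))
    hf.continuousOn fun y hy => hf_pos y ((half_pos hε).trans_le hy.1)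
  have hfx : ∀ t ≥ T, m ≤ f (x t) := fun t ht => hfm _
    ⟨(hx_pos t ht).le, by linarith [(abs_lt.1 (hxz t ht)).2, hz_anti self_mem_Ici ht ht]⟩
  have hlin_anti : AntitoneOn (fun t => z t + m * t) (Ici T) := by
    refine antitoneOn_of_hasDerivWithinAt_nonpos (convex_Ici T)
      (hz_cont.add (continuousOn_const.mul continuousOn_id))
      (fun t ht => ((hz t (interior_subset ht)).add
        ((hasDerivAt_id t).const_mul m)).hasDerivWithinAt) fun t ht => ?_
    have := hfx t (interior_subset ht)
    simp only [mul_one]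
    linarith
  -- at `t = T + z T / m` the linear decay would have brought `z` down to `0`
  have hT : T ≤ T + z T / m :=
    le_add_of_nonneg_right (div_nonneg (by linarith [hge T le_rfl]) hm.le)
  have hdecay := hlin_anti self_mem_Ici hT hT
  have hmul : m * (T + z T / m) = m * T + z T := by field_simp
  linarith [hge _ hT]

theorem le_of_hasDerivAt_neg_comp (hf_pos : ∀ y, 0 < y → 0 < f y) {a ε : ℝ}
    (hz : ∀ t ≥ a, HasDerivAt z (-f (x t)) t) (hxz : ∀ t ≥ a, |x t - z t| < ε)
    (hza : z a ≤ ε) : ∀ t ≥ a, z t ≤ ε := by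
  intro t hat
  refine image_le_of_deriv_right_lt_deriv_boundary (f := z) (B := fun _ => ε) (B' := fun _ => 0)
    (fun s hs => (hz s hs.1).continuousAt.continuousWithinAt)
    (fun s hs => (hz s hs.1).hasDerivWithinAt) hza (fun _ => hasDerivAt_const _ _)
    (fun s hs hzs => ?_) ⟨hat, le_rfl⟩
  have := hf_pos (x s) (by linarith [(abs_lt.1 (hxz s hs.1)).1])
  linarith

theorem eventually_lt_of_hasDerivAt_neg_comp (hf : Continuous f)
    (hf_pos : ∀ y, 0 < y → 0 < f y) (hxz : Tendsto (fun t => x t - z t) atTop (𝓝 0))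
    (hz : ∀ᶠ t in atTop, HasDerivAt z (-f (x t)) t) {ε : ℝ} (hε : 0 < ε) :
    ∀ᶠ t in atTop, z t < ε := by
  have hclose : ∀ᶠ t in atTop, |x t - z t| < ε / 4 := by
    simpa [Real.dist_0_eq_abs] using hxz.eventually (Metric.ball_mem_nhds 0 (by positivity))
  obtain ⟨T, hT⟩ := eventually_atTop.1 (hz.and hclose)
  obtain ⟨t₀, ht₀, hzt₀⟩ := exists_lt_of_hasDerivAt_neg_comp hf hf_pos (ε := ε / 2)
    (by positivity) (fun t ht => (hT t ht).1) fun t ht => by linarith [(hT t ht).2]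
  have hle := le_of_hasDerivAt_neg_comp hf_pos (ε := ε / 2)
    (fun t ht => (hT t (ht₀.trans ht)).1) (fun t ht => by linarith [(hT t (ht₀.trans ht)).2])
    hzt₀.le
  exact eventually_atTop.2 ⟨t₀, fun t ht => by linarith [hle t ht]⟩

theorem tendsto_zero_of_hasDerivAt_neg_comp (hf : Continuous f)
    (hf_sign : ∀ y, y ≠ 0 → 0 < y * f y) (hxz : Tendsto (fun t => x t - z t) atTop (𝓝 0))
    (hz : ∀ᶠ t in atTop, HasDerivAt z (-f (x t)) t) : Tendsto x atTop (𝓝 0) := by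
  have hf_pos : ∀ y, 0 < y → 0 < f y := fun y hy => pos_of_mul_pos_right (hf_sign y hy.ne') hy.le
  have hf_neg_pos : ∀ y, 0 < y → 0 < -f (-y) := fun y hy => by
    have := hf_sign (-y) (neg_ne_zero.2 hy.ne')
    nlinarith
  have hz_tendsto : Tendsto z atTop (𝓝 0) := by
    refine tendsto_order.2 ⟨fun a ha => ?_, fun a ha =>
      eventually_lt_of_hasDerivAt_neg_comp hf hf_pos hxz hz ha⟩
    have hneg := eventually_lt_of_hasDerivAt_neg_comp (x := -x) (z := -z) (by fun_prop)
      hf_neg_pos (by simpa [neg_add_eq_sub] using hxz.neg)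
      (hz.mono fun t ht => by simpa using ht.neg) (neg_pos.2 ha)
    exact hneg.mono fun t ht => by simp only [Pi.neg_apply] at ht; linarith
  simpa using hxz.add hz_tendsto

end

theorem tendsto_integral_Ioi_sub_intervalIntegral {g : ℝ → ℝ} {a : ℝ}
    (hg : IntegrableOn g (Ioi a)) :
    Tendsto (fun t => (∫ u in Ioi a, g u) - ∫ u in a..t, g u) atTop (𝓝 0) := by
  simpa using (intervalIntegral_tendsto_integral_Ioi a hg tendsto_id).const_sub
    (∫ u in Ioi a, g u)

theorem hasDerivAt_integral_Ioi_sub_intervalIntegral {g : ℝ → ℝ} {a t : ℝ}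
    (hg : IntegrableOn g (Ioi a)) (hgc : ContinuousOn g (Ioi a)) (ht : a < t) :
    HasDerivAt (fun t => (∫ u in Ioi a, g u) - ∫ u in a..t, g u) (-g t) t :=
  (intervalIntegral.integral_hasDerivAt_right
    ((intervalIntegrable_iff_integrableOn_Ioc_of_le ht.le).2 (hg.mono_set Ioc_subset_Ioi_self))
    (hgc.stronglyMeasurableAtFilter isOpen_Ioi t ht)
    (hgc.continuousAt (Ioi_mem_nhds ht))).const_sub _

theorem stmt_0_general (f g : ℝ → ℝ) (ξ : ℝ)
    (hf_cont : Continuous f)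
    (hf_sign : ∀ y : ℝ, y ≠ 0 → 0 < y * f y)
    (hg_cont : ContinuousOn g (Set.Ici 0))
    (hg_int : IntegrableOn g (Set.Ioi 0))
    (x : ℝ → ℝ) (hx : IsSol f g ξ x) :
    Tendsto x atTop (nhds 0) := by
  obtain ⟨-, -, hx'⟩ := hx
  set tail : ℝ → ℝ := fun t => (∫ u in Ioi 0, g u) - ∫ u in (0)..t, g u
  refine tendsto_zero_of_hasDerivAt_neg_comp (z := fun t => x t + tail t) hf_cont hf_sign ?_ ?_
  · simpa [tail] using (tendsto_integral_Ioi_sub_intervalIntegral hg_int).neg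
  · filter_upwards [eventually_gt_atTop 0] with t ht
    have htail := hasDerivAt_integral_Ioi_sub_intervalIntegral hg_int
      (hg_cont.mono Ioi_subset_Ici_self) ht
    exact ((hx' t ht).add htail).congr_deriv (by ring)

/-- If `f` is continuous with `x f(x) > 0` for `x ≠ 0`, `f(0) = 0`, `g` is continuous on
`[0,∞)` and integrable on `(0,∞)`, then every continuous solution of
`x' = -f(x) + g`, `x(0) = ξ`, tends to `0` at `∞`. -/
theorem stmt_0 (f g : ℝ → ℝ) (ξ : ℝ)
    (hf_cont : Continuous f)
    (hf_sign : ∀ y : ℝ, y ≠ 0 → 0 < y * f y) (hf_zero : f 0 = 0)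
    (hg_cont : ContinuousOn g (Set.Ici 0))
    (hg_int : IntegrableOn g (Set.Ioi 0))
    (x : ℝ → ℝ) (hx : IsSol f g ξ x) :
    Tendsto x atTop (nhds 0) :=
  stmt_0_general f g ξ hf_cont hf_sign hg_cont hg_int x hx
end
end

section
/- Assume the base hypotheses and Condition (M). If lim_{t→∞} g(t)/(f∘F⁻¹)(t) = 0, then the unique continuous solution x of x'(t) = -f(x(t)) + g(t), x(0) = ξ > 0, satisfies lim_{t→∞} F(x(t))/t = 1. -/
/-!
`Finv` solves the unforced equation `y' = -f y`, so both bounds come from comparing `x` with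
time changes of `Finv`. Since `g > 0`, `x` stays above `Finv (t + C)`, whence
`F (x t) ≤ t + C`. Since `g → 0`, `x` is eventually bounded and comes arbitrarily close to `0`;
from such a late time `T` on it stays below the slowed-down solution
`Finv ((1 - ε) (t - T) + c)`, because at a contact point Condition (M) makes `f` quasi-monotone
near `0`, so that `g t ≪ f (Finv t) ≤ 2 f (x t)`.
-/

open Filter Real Set Topology MeasureTheory

noncomputable section

lemma le_of_hasDerivAt_lt_of_eq {u v : ℝ → ℝ} {a b : ℝ} (hab : a ≤ b)
    (hu : ContinuousOn u (Icc a b)) (hv : ContinuousOn v (Icc a b)) (ha : u a ≤ v a)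
    (hcontact : ∀ t ∈ Ico a b, u t = v t →
      ∃ u' v', HasDerivAt u u' t ∧ HasDerivAt v v' t ∧ u' < v') :
    u b ≤ v b := by
  by_contra! hb
  set y := fun t => u t - v t
  set S := {t ∈ Icc a b | y t ≤ 0}
  have hS : IsClosed S := (hu.sub hv).preimage_isClosed_of_isClosed isClosed_Icc isClosed_Iic
  have hrS : sSup S ∈ S :=
    hS.csSup_mem ⟨a, ⟨le_rfl, hab⟩, sub_nonpos.2 ha⟩ ⟨b, fun t ht => ht.1.2⟩
  set r := sSup S
  have hrb : r < b := hrS.1.2.lt_of_ne fun h => (sub_pos.2 hb).not_ge (h ▸ hrS.2)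
  have hpos : ∀ t ∈ Ioc r b, 0 < y t := fun t ht => lt_of_not_ge fun h =>
    ht.1.not_ge (le_csSup ⟨b, fun s hs => hs.1.2⟩ ⟨⟨hrS.1.1.trans ht.1.le, ht.2⟩, h⟩)
  have : (𝓝[Ioc r b] r).NeBot := left_nhdsWithin_Ioc_neBot hrb
  have hyr : y r = 0 := by
    have hcont : Tendsto y (𝓝[Ioc r b] r) (𝓝 (y r)) :=
      ((hu.sub hv) r hrS.1).mono fun t ht => ⟨hrS.1.1.trans ht.1.le, ht.2⟩
    exact le_antisymm hrS.2 (ge_of_tendsto hcont (eventually_mem_nhdsWithin.mono fun t ht =>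
      (hpos t ht).le))
  obtain ⟨u', v', hu', hv', hlt⟩ := hcontact r ⟨hrS.1.1, hrb⟩ (sub_eq_zero.1 hyr)
  have hslope : Tendsto (slope y r) (𝓝[Ioc r b] r) (𝓝 (u' - v')) :=
    (hu'.sub hv').tendsto_slope.mono_left (nhdsWithin_mono _ fun t ht => ht.1.ne')
  have : 0 ≤ u' - v' := ge_of_tendsto hslope (eventually_mem_nhdsWithin.mono fun t ht => by
    rw [slope_def_field, hyr, sub_zero]
    exact div_nonneg (hpos t ht).le (sub_pos.2 ht.1).le)
  linarith

lemma antitoneOn_Ici_of_hasDerivAt_nonpos {u u' : ℝ → ℝ} {T : ℝ}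
    (hd : ∀ t, T ≤ t → HasDerivAt u (u' t) t) (hnonpos : ∀ t, T < t → u' t ≤ 0) :
    AntitoneOn u (Ici T) := by
  refine antitoneOn_of_hasDerivWithinAt_nonpos (f' := u') (convex_Ici T)
    (fun t ht => (hd t ht).continuousAt.continuousWithinAt) (fun t ht => ?_) (fun t ht => ?_)
  all_goals rw [interior_Ici] at ht
  exacts [(hd t ht.le).hasDerivWithinAt, hnonpos t ht]

lemma eventually_lt_mul_of_tendsto_div {α : Type*} {l : Filter α} {a b : α → ℝ}
    (hab : Tendsto (fun t => a t / b t) l (𝓝 0)) (hb : ∀ᶠ t in l, 0 < b t) {ε : ℝ}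
    (hε : 0 < ε) : ∀ᶠ t in l, a t < ε * b t := by
  filter_upwards [hab.eventually (gt_mem_nhds hε), hb] with t h hbt
  rwa [div_lt_iff₀ hbt] at h

lemma tendsto_zero_of_tendsto_div {α : Type*} {l : Filter α} {a b : α → ℝ}
    (hab : Tendsto (fun t => a t / b t) l (𝓝 0)) (hb : Tendsto b l (𝓝 0))
    (hb0 : ∀ᶠ t in l, b t ≠ 0) : Tendsto a l (𝓝 0) := by
  refine (by simpa using hab.mul hb : Tendsto (fun t => a t / b t * b t) l (𝓝 0)).congr' ?_
  filter_upwards [hb0] with t ht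
  exact div_mul_cancel₀ _ ht

lemma tendsto_div_self_of_affine_bounds {u : ℝ → ℝ} {C : ℝ}
    (hlow : ∀ ε, 0 < ε → ε < 1 → ∃ K, ∀ᶠ t in atTop, (1 - ε) * t - K ≤ u t)
    (hup : ∀ᶠ t in atTop, u t ≤ t + C) : Tendsto (fun t => u t / t) atTop (𝓝 1) := by
  have hinv (K : ℝ) : Tendsto (fun t : ℝ => K / t) atTop (𝓝 0) :=
    tendsto_const_nhds.div_atTop tendsto_id
  refine tendsto_order.2 ⟨fun a ha => ?_, fun b hb => ?_⟩
  · set ε := min (1 / 2) ((1 - a) / 2)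
    have hε : 0 < ε := lt_min (by norm_num) (by linarith)
    have haε : a < 1 - ε := by linarith [min_le_right (1 / 2 : ℝ) ((1 - a) / 2)]
    obtain ⟨K, hK⟩ := hlow ε hε (by linarith [min_le_left (1 / 2 : ℝ) ((1 - a) / 2)])
    have hlim : Tendsto (fun t => (1 - ε) - K / t) atTop (𝓝 (1 - ε)) := by
      simpa using tendsto_const_nhds.sub (hinv K)
    filter_upwards [hK, hlim.eventually_const_lt haε, eventually_gt_atTop 0] with t hKt hat ht
    calc a < (1 - ε) - K / t := hat
      _ = ((1 - ε) * t - K) / t := by field_simp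
      _ ≤ u t / t := by gcongr
  · have hlim : Tendsto (fun t => 1 + C / t) atTop (𝓝 1) := by
      simpa using tendsto_const_nhds.add (hinv C)
    filter_upwards [hup, hlim.eventually_lt_const hb, eventually_gt_atTop 0] with t hCt hbt ht
    calc u t / t ≤ (t + C) / t := by gcongr
      _ = 1 + C / t := by field_simp
      _ < b := hbt

section RightInverse

variable {F G : ℝ → ℝ}

lemma rightInverse_le_iff (hF : StrictAntiOn F (Ioi 0))
    (hG : ∀ t, 0 ≤ t → 0 < G t ∧ F (G t) = t) {y t : ℝ} (hy : 0 < y) (ht : 0 ≤ t) :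
    G t ≤ y ↔ F y ≤ t := by
  conv_rhs => rw [← (hG t ht).2]
  exact (hF.le_iff_ge hy (hG t ht).1).symm

lemma rightInverse_lt_iff (hF : StrictAntiOn F (Ioi 0))
    (hG : ∀ t, 0 ≤ t → 0 < G t ∧ F (G t) = t) {y t : ℝ} (hy : 0 < y) (ht : 0 ≤ t) :
    G t < y ↔ F y < t := by
  conv_rhs => rw [← (hG t ht).2]
  exact (hF.lt_iff_gt hy (hG t ht).1).symm

lemma le_rightInverse_iff (hF : StrictAntiOn F (Ioi 0))
    (hG : ∀ t, 0 ≤ t → 0 < G t ∧ F (G t) = t) {y t : ℝ} (hy : 0 < y) (ht : 0 ≤ t) :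
    y ≤ G t ↔ t ≤ F y := by
  conv_rhs => rw [← (hG t ht).2]
  exact (hF.le_iff_ge (hG t ht).1 hy).symm

lemma rightInverse_anti (hF : StrictAntiOn F (Ioi 0))
    (hG : ∀ t, 0 ≤ t → 0 < G t ∧ F (G t) = t) {s t : ℝ} (hs : 0 ≤ s) (hst : s ≤ t) :
    G t ≤ G s := by
  rw [rightInverse_le_iff hF hG (hG s hs).1 (hs.trans hst), (hG s hs).2]
  exact hst

lemma continuousAt_rightInverse (hF : StrictAntiOn F (Ioi 0))
    (hG : ∀ t, 0 ≤ t → 0 < G t ∧ F (G t) = t) {s : ℝ} (hs : 0 < s) :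
    ContinuousAt G s := by
  refine tendsto_order.2 ⟨fun a ha => ?_, fun b hb => ?_⟩
  · rcases le_or_gt a 0 with ha0 | ha0
    · filter_upwards [lt_mem_nhds hs] with t ht using ha0.trans_lt (hG t ht.le).1
    · have hsa : s < F a := lt_of_not_ge fun h =>
        ha.not_ge ((rightInverse_le_iff hF hG ha0 hs.le).2 h)
      filter_upwards [lt_mem_nhds hs, gt_mem_nhds hsa] with t ht₀ ht
      exact lt_of_not_ge fun h => ht.not_ge ((rightInverse_le_iff hF hG ha0 ht₀.le).1 h)
  · have hb0 : 0 < b := (hG s hs.le).1.trans hb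
    have hbs : F b < s := (rightInverse_lt_iff hF hG hb0 hs.le).1 hb
    filter_upwards [lt_mem_nhds hs, lt_mem_nhds hbs] with t ht₀ ht
    exact (rightInverse_lt_iff hF hG hb0 ht₀.le).2 ht

variable {f : ℝ → ℝ}

lemma hasDerivAt_of_eq_integral_one_div (hf : Continuous f) (hfpos : ∀ y, 0 < y → 0 < f y)
    (hF : ∀ y, 0 < y → F y = ∫ u in y..(1:ℝ), 1 / f u) {y : ℝ} (hy : 0 < y) :
    HasDerivAt F (-(f y)⁻¹) y := by
  have hsub : uIcc y 1 ⊆ Ioi 0 := fun u hu => lt_of_lt_of_le (lt_min hy one_pos) hu.1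
  have hint : IntervalIntegrable (fun u => 1 / f u) volume y 1 :=
    (continuousOn_const.div hf.continuousOn fun u hu => (hfpos u (hsub hu)).ne').intervalIntegrable
  have hd := intervalIntegral.integral_hasDerivAt_left hint
    (measurable_const.div hf.measurable).stronglyMeasurable.stronglyMeasurableAtFilter
    (continuousAt_const.div hf.continuousAt (hfpos y hy).ne')
  simpa only [one_div] using hd.congr_of_eventuallyEq (eventually_of_mem (Ioi_mem_nhds hy) hF)

lemma hasDerivAt_rightInverse (hf : Continuous f) (hfpos : ∀ y, 0 < y → 0 < f y)
    (hF : ∀ y, 0 < y → F y = ∫ u in y..(1:ℝ), 1 / f u) (hF_anti : StrictAntiOn F (Ioi 0))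
    (hG : ∀ t, 0 ≤ t → 0 < G t ∧ F (G t) = t) {s : ℝ} (hs : 0 < s) :
    HasDerivAt G (-f (G s)) s := by
  have hGs := (hG s hs.le).1
  simpa using HasDerivAt.of_local_left_inverse (continuousAt_rightInverse hF_anti hG hs)
    (hasDerivAt_of_eq_integral_one_div hf hfpos hF hGs) (by simp [(hfpos _ hGs).ne'])
    (eventually_of_mem (Ioi_mem_nhds hs) fun t ht => (hG t (le_of_lt ht)).2)

end RightInverse

lemma exists_le_two_mul_of_tendsto_div {f φ : ℝ → ℝ} {δ : ℝ} (hδ : 0 < δ)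
    (hφ : MonotoneOn φ (Ioo 0 δ)) (hfpos : ∀ y, 0 < y → 0 < f y)
    (hlim : Tendsto (fun y => f y / φ y) (𝓝[>] 0) (𝓝 1)) :
    ∃ δ' > 0, ∀ y z, 0 < y → y ≤ z → z < δ' → f y ≤ 2 * f z := by
  have hnear : ∀ᶠ y in 𝓝[>] 0, f y / φ y ∈ Ioo (2 / 3 : ℝ) (4 / 3) ∧ y < δ :=
    (hlim.eventually (Ioo_mem_nhds (by norm_num) (by norm_num))).and
      (nhdsWithin_le_nhds (gt_mem_nhds hδ))
  obtain ⟨δ', hδ', hsub⟩ := mem_nhdsGT_iff_exists_Ioo_subset.1 hnear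
  refine ⟨δ', hδ', fun y z hy hyz hz => ?_⟩
  have hφpos : ∀ w, 0 < w → 2 / 3 < f w / φ w → 0 < φ w := fun w hw h =>
    lt_of_not_ge fun hφ => by linarith [div_nonpos_of_nonneg_of_nonpos (hfpos w hw).le hφ]
  obtain ⟨⟨hy23, hy43⟩, hyδ⟩ := hsub ⟨hy, hyz.trans_lt hz⟩
  obtain ⟨⟨hz23, -⟩, hzδ⟩ := hsub ⟨hy.trans_le hyz, hz⟩
  have hφy := hφpos y hy hy23
  have hφz := hφpos z (hy.trans_le hyz) hz23
  have hfy : f y < 4 / 3 * φ y := (div_lt_iff₀ hφy).1 hy43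
  have hfz : 2 / 3 * φ z < f z := (lt_div_iff₀ hφz).1 hz23
  have hφyz : φ y ≤ φ z := hφ ⟨hy, hyδ⟩ ⟨hy.trans_le hyz, hzδ⟩ hyz
  linarith

section Solution

variable {f g F G x : ℝ → ℝ} {ξ : ℝ}

lemma IsSol.unforced_le (hx : IsSol f g ξ x) (hg : ∀ t, 0 < t → 0 < g t)
    (hGc : ∀ s, 0 < s → ContinuousAt G s) (hGd : ∀ s, 0 < s → HasDerivAt G (-f (G s)) s)
    {C : ℝ} (hC : 0 < C) (hCξ : G C < ξ) {t : ℝ} (ht : 0 ≤ t) : G (t + C) ≤ x t := by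
  obtain ⟨hxc, hx0, hxd⟩ := hx
  refine le_of_hasDerivAt_lt_of_eq (u := fun s => G (s + C)) ht (fun s hs => ?_)
    (hxc.mono Icc_subset_Ici_self) (by simpa [hx0] using hCξ.le) ?_
  · exact ((hGc _ (by linarith [hs.1])).comp
      (continuous_add_const C).continuousAt).continuousWithinAt
  · rintro s ⟨hs0, -⟩ hs
    have hs0' : 0 < s := hs0.lt_of_ne (by rintro rfl; simp [hx0] at hs; linarith)
    refine ⟨_, _, (hGd (s + C) (by linarith)).comp_add_const s C, hxd s hs0', ?_⟩
    rw [hs]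
    linarith [hg s hs0']

lemma IsSol.exists_eventually_le (hx : IsSol f g ξ x) (hfx : ∀ t, 0 < t → 0 ≤ f (x t))
    (hGpos : ∀ t, 0 ≤ t → 0 < G t) (hGd : ∀ s, 0 < s → HasDerivAt G (-f (G s)) s)
    (hgG : ∀ᶠ t in atTop, g t ≤ f (G t)) : ∃ K, ∀ᶠ t in atTop, x t ≤ K := by
  obtain ⟨T, hT⟩ := eventually_atTop.1 (hgG.and (eventually_gt_atTop 0))
  have hanti : AntitoneOn (fun t => x t + G t) (Ici T) :=
    antitoneOn_Ici_of_hasDerivAt_nonpos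
      (fun t ht => (hx.2.2 t (hT t ht).2).add (hGd t (hT t ht).2))
      fun t ht => by linarith [(hT t ht.le).1, hfx t (hT t ht.le).2]
  refine ⟨x T + G T, eventually_atTop.2 ⟨T, fun t ht => ?_⟩⟩
  linarith [hanti (mem_Ici.2 le_rfl) (mem_Ici.2 ht) ht, hGpos t ((hT T le_rfl).2.le.trans ht)]

lemma IsSol.frequently_le (hx : IsSol f g ξ x) (hf : Continuous f)
    (hfpos : ∀ y, 0 < y → 0 < f y) (hbdd : ∃ K, ∀ᶠ t in atTop, x t ≤ K)
    (hg : Tendsto g atTop (𝓝 0)) {η : ℝ} (hη : 0 < η) : ∃ᶠ t in atTop, x t ≤ η := by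
  obtain ⟨K, hK⟩ := hbdd
  obtain ⟨m, hm, hfm⟩ := isCompact_Icc.exists_forall_le' (a := 0) hf.continuousOn
    fun y (hy : y ∈ Icc η K) => hfpos y (hη.trans_le hy.1)
  by_contra! hlarge
  obtain ⟨T, hT⟩ := eventually_atTop.1 (hlarge.and (hK.and
    ((hg.eventually (gt_mem_nhds (half_pos hm))).and (eventually_gt_atTop 0))))
  -- while `x` stays in `[η, K]`, it decreases at rate at least `m / 2`
  have hanti : AntitoneOn (fun t => x t + m / 2 * t) (Ici T) := by
    refine antitoneOn_Ici_of_hasDerivAt_nonpos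
      (fun t ht => (hx.2.2 t (hT t ht).2.2.2).add ((hasDerivAt_id t).const_mul (m / 2)))
      fun t ht => ?_
    obtain ⟨hηx, hxK, hgm, -⟩ := hT t ht.le
    linarith [hfm (x t) ⟨hηx.le, hxK⟩]
  have hxT : 0 < x T := hη.trans (hT T le_rfl).1
  set t := T + 2 * x T / m
  have hTt : T ≤ t := le_add_of_nonneg_right (by positivity)
  have hmt : m / 2 * t = m / 2 * T + x T := by simp only [t]; field_simp
  linarith [hanti (mem_Ici.2 le_rfl) (mem_Ici.2 hTt) hTt, (hT t hTt).1]

lemma IsSol.exists_eventually_affine_le (hx : IsSol f g ξ x) (hxpos : ∀ t, 0 ≤ t → 0 < x t)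
    (hF : StrictAntiOn F (Ioi 0)) (hG : ∀ t, 0 ≤ t → 0 < G t ∧ F (G t) = t)
    (hGc : ∀ s, 0 < s → ContinuousAt G s) (hGd : ∀ s, 0 < s → HasDerivAt G (-f (G s)) s)
    (hG0 : Tendsto G atTop (𝓝 0)) {δ : ℝ} (hδ : 0 < δ)
    (hquasi : ∀ y z, 0 < y → y ≤ z → z < δ → f y ≤ 2 * f z)
    (hsmall : ∀ η, 0 < η → ∃ᶠ t in atTop, x t ≤ η) {ε : ℝ} (hε0 : 0 ≤ ε) (hε1 : ε ≤ 1)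
    (hgε : ∀ᶠ t in atTop, g t < ε / 2 * f (G t)) :
    ∃ K, ∀ᶠ t in atTop, (1 - ε) * t - K ≤ F (x t) := by
  obtain ⟨c, hc0, hcδ⟩ : ∃ c, 0 < c ∧ G c < δ :=
    ((eventually_gt_atTop 0).and (hG0.eventually (gt_mem_nhds hδ))).exists
  obtain ⟨T₀, hT₀⟩ := eventually_atTop.1 hgε
  obtain ⟨T, hT, hxT⟩ := frequently_atTop.1 (hsmall (G c) (hG c hc0.le).1) (max (max T₀ c) 1)
  have hT₀T : T₀ ≤ T := (le_max_left _ _).trans ((le_max_left _ _).trans hT)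
  have hcT : c ≤ T := (le_max_right _ _).trans ((le_max_left _ _).trans hT)
  have hT0 : 0 < T := one_pos.trans_le ((le_max_right _ _).trans hT)
  -- `G ∘ s` solves the unforced equation slowed down by the factor `1 - ε`
  set s : ℝ → ℝ := fun t => (1 - ε) * (t - T) + c
  have hcs : ∀ t, T ≤ t → c ≤ s t := fun t ht => by
    simp only [s]; nlinarith
  have hst : ∀ t, T ≤ t → s t ≤ t := fun t ht => by
    simp only [s]; nlinarith
  have hs : ∀ t, HasDerivAt s (1 - ε) t := fun t => by
    simpa only [mul_one] using (((hasDerivAt_id' t).sub_const T).const_mul (1 - ε)).add_const c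
  have hbarrier : ∀ t, T ≤ t → x t ≤ G (s t) := by
    intro t ht
    refine le_of_hasDerivAt_lt_of_eq (v := fun t => G (s t)) ht
      (hx.1.mono fun r hr => hT0.le.trans hr.1)
      (fun r hr => ((hGc _ (hc0.trans_le (hcs r hr.1))).comp
        (hs r).continuousAt).continuousWithinAt)
      (by simpa [s] using hxT) ?_
    rintro r ⟨hTr, -⟩ hxr
    have hr0 : 0 < r := hT0.trans_le hTr
    have hGr : G r ≤ x r :=
      hxr ▸ rightInverse_anti hF hG (hc0.le.trans (hcs r hTr)) (hst r hTr)
    have hxδ : x r < δ := hxr ▸ (rightInverse_anti hF hG hc0.le (hcs r hTr)).trans_lt hcδ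
    refine ⟨_, _, hx.2.2 r hr0, (hGd (s r) (hc0.trans_le (hcs r hTr))).comp r (hs r), ?_⟩
    -- quasi-monotonicity of `f` gives `g r < ε / 2 * f (G r) ≤ ε * f (x r)`
    rw [← hxr]
    nlinarith [hquasi (G r) (x r) (hG r hr0.le).1 hGr hxδ, hT₀ r (hT₀T.trans hTr)]
  refine ⟨(1 - ε) * T - c, eventually_atTop.2 ⟨T, fun t ht => ?_⟩⟩
  have := (le_rightInverse_iff hF hG (hxpos t (hT0.le.trans ht)) (hc0.le.trans (hcs t ht))).1
    (hbarrier t ht)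
  simp only [s] at this
  linarith

end Solution

theorem stmt_1_general
    (f g F Finv : ℝ → ℝ) (ξ : ℝ) (x : ℝ → ℝ)
    (hf_cont : Continuous f)
    (hf_sign : ∀ y : ℝ, y ≠ 0 → 0 < y * f y) (hf_zero : f 0 = 0)
    (hg_pos : ∀ t : ℝ, 0 < t → 0 < g t)
    (hF : ∀ y : ℝ, 0 < y → F y = ∫ u in y..(1:ℝ), 1 / f u)
    (hF_anti : StrictAntiOn F (Set.Ioi 0))
    (hFinv : ∀ t : ℝ, 0 ≤ t → 0 < Finv t ∧ F (Finv t) = t)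
    (hFinv_to0 : Tendsto Finv atTop (nhds 0))
    (hξ : 0 < ξ) (hx : IsSol f g ξ x)
    (hM : ∃ δ : ℝ, 0 < δ ∧ ∃ φ : ℝ → ℝ, StrictMonoOn φ (Set.Ioo 0 δ) ∧
      Tendsto (fun y => f y / φ y) (nhdsWithin 0 (Set.Ioi 0)) (nhds 1))
    (hL0 : Tendsto (fun t => g t / f (Finv t)) atTop (nhds 0)) :
    Tendsto (fun t => F (x t) / t) atTop (nhds 1) := by
  have hfpos : ∀ y, 0 < y → 0 < f y := fun y hy => pos_of_mul_pos_right (hf_sign y hy.ne') hy.le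
  have hGc : ∀ s, 0 < s → ContinuousAt Finv s :=
    fun _ => continuousAt_rightInverse hF_anti hFinv
  have hGd : ∀ s, 0 < s → HasDerivAt Finv (-f (Finv s)) s :=
    fun _ => hasDerivAt_rightInverse hf_cont hfpos hF hF_anti hFinv
  set C := max (F ξ) 0 + 1
  have hC : 0 < C := by positivity
  have hlow : ∀ t, 0 ≤ t → Finv (t + C) ≤ x t := fun t ht =>
    hx.unforced_le hg_pos hGc hGd hC ((rightInverse_lt_iff hF_anti hFinv hξ hC.le).2
      (by linarith [le_max_left (F ξ) 0])) ht
  have hxpos : ∀ t, 0 ≤ t → 0 < x t := fun t ht =>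
    (hFinv _ (by positivity)).1.trans_le (hlow t ht)
  have hfG : ∀ᶠ t in atTop, 0 < f (Finv t) :=
    (eventually_ge_atTop 0).mono fun t ht => hfpos _ (hFinv t ht).1
  have hg : Tendsto g atTop (𝓝 0) := tendsto_zero_of_tendsto_div hL0
    (hf_zero ▸ (hf_cont.tendsto 0).comp hFinv_to0) (hfG.mono fun _ h => h.ne')
  have hbdd : ∃ K, ∀ᶠ t in atTop, x t ≤ K :=
    hx.exists_eventually_le (fun t ht => (hfpos _ (hxpos t ht.le)).le)
      (fun t ht => (hFinv t ht).1) hGd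
      ((eventually_lt_mul_of_tendsto_div hL0 hfG one_pos).mono fun t h => by linarith)
  have hsmall : ∀ η, 0 < η → ∃ᶠ t in atTop, x t ≤ η :=
    fun η => hx.frequently_le hf_cont hfpos hbdd hg
  obtain ⟨δ, hδ, φ, hφ, hφlim⟩ := hM
  obtain ⟨δ', hδ', hquasi⟩ := exists_le_two_mul_of_tendsto_div hδ hφ.monotoneOn hfpos hφlim
  refine tendsto_div_self_of_affine_bounds (C := C) (fun ε hε hε1 =>
    hx.exists_eventually_affine_le hxpos hF_anti hFinv hGc hGd hFinv_to0 hδ' hquasi hsmall hε.le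
      hε1.le (eventually_lt_mul_of_tendsto_div hL0 hfG (half_pos hε)))
    (eventually_atTop.2 ⟨0, fun t ht => ?_⟩)
  exact (rightInverse_le_iff hF_anti hFinv (hxpos t ht) (by positivity)).1 (hlow t ht)

/-- Theorem 2.2 (Theorem `gsmall`): under the base hypotheses and Condition (M), if
`g(t)/(f∘F⁻¹)(t) → 0` as `t → ∞`, then the unique continuous solution of
`x' = -f(x) + g`, `x(0) = ξ > 0`, obeys `F(x(t))/t → 1` as `t → ∞`. -/
theorem stmt_1
    (f g F Finv : ℝ → ℝ) (ξ : ℝ) (x : ℝ → ℝ)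
    (hf_cont : Continuous f) (hf_lip : LocallyLipschitz f)
    (hf_sign : ∀ y : ℝ, y ≠ 0 → 0 < y * f y) (hf_zero : f 0 = 0)
    (hg_cont : ContinuousOn g (Set.Ici 0)) (hg_pos : ∀ t : ℝ, 0 < t → 0 < g t)
    (hF : ∀ y : ℝ, 0 < y → F y = ∫ u in y..(1:ℝ), 1 / f u)
    (hF_top : Tendsto F (nhdsWithin 0 (Set.Ioi 0)) atTop)
    (hF_anti : StrictAntiOn F (Set.Ioi 0))
    (hFinv : ∀ t : ℝ, 0 ≤ t → 0 < Finv t ∧ F (Finv t) = t)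
    (hFinv_to0 : Tendsto Finv atTop (nhds 0))
    (hξ : 0 < ξ) (hx : IsSol f g ξ x)
    (hM : ∃ δ : ℝ, 0 < δ ∧ ∃ φ : ℝ → ℝ, StrictMonoOn φ (Set.Ioo 0 δ) ∧
      Tendsto (fun y => f y / φ y) (nhdsWithin 0 (Set.Ioi 0)) (nhds 1))
    (hL0 : Tendsto (fun t => g t / f (Finv t)) atTop (nhds 0)) :
    Tendsto (fun t => F (x t) / t) atTop (nhds 1) :=
  stmt_1_general f g F Finv ξ x hf_cont hf_sign hf_zero hg_pos hF hF_anti hFinv hFinv_to0 hξ hx hM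
    hL0
end
end

section
/- Assume the base hypotheses and Condition (M). Suppose lim_{t→∞} g(t)/(f∘F⁻¹)(t) = +∞, the unique continuous solution x of x'(t) = -f(x(t)) + g(t), x(0) = ξ > 0, satisfies x(t) → 0 as t → ∞, and either f ∈ RV₀(β) for some β > 1 or f∘F⁻¹ ∈ RV_∞(-1). Then lim_{t→∞} F(x(t))/t = 0. -/
open Filter Real Set Topology MeasureTheory

noncomputable section

lemma my_sol_pos (f g : ℝ → ℝ) (ξ : ℝ) (x : ℝ → ℝ)
    (hf_sign : ∀ y : ℝ, y ≠ 0 → 0 < y * f y) (hf_zero : f 0 = 0)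
    (hg_pos : ∀ t : ℝ, 0 < t → 0 < g t)
    (hξ : 0 < ξ) (hx : IsSol f g ξ x) : ∀ t : ℝ, 0 ≤ t → 0 < x t := by
  obtain ⟨hcont, hx0, hderiv⟩ := hx
  intro t ht
  by_contra hle
  push_neg at hle
  have htpos : 0 < t := by
    rcases ht.lt_or_eq with h | h
    · exact h
    · rw [← h, hx0] at hle; linarith
  set S : Set ℝ := Icc 0 t ∩ x ⁻¹' Iic 0 with hS
  have hSne : S.Nonempty := ⟨t, ⟨ht, le_refl t⟩, hle⟩
  have hSclosed : IsClosed S :=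
    (hcont.mono (Icc_subset_Ici_self)).preimage_isClosed_of_isClosed isClosed_Icc isClosed_Iic
  have hSbdd : BddBelow S := ⟨0, fun u hu => hu.1.1⟩
  set s := sInf S with hs
  have hsS : s ∈ S := hSclosed.csInf_mem hSne hSbdd
  have hsx : x s ≤ 0 := hsS.2
  have hs0 : 0 < s := by
    rcases hsS.1.1.lt_or_eq with h | h
    · exact h
    · rw [← h, hx0] at hsx; linarith
  have hpos_before : ∀ u : ℝ, 0 ≤ u → u < s → 0 < x u := by
    intro u hu hus
    by_contra hxu
    push_neg at hxu
    have : u ∈ S := ⟨⟨hu, le_trans hus.le hsS.1.2⟩, hxu⟩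
    exact absurd (csInf_le hSbdd this) (not_le.2 hus)
  -- derivative at s is positive
  have hfd : f (x s) ≤ 0 := by
    rcases hsx.lt_or_eq with h | h
    · nlinarith [hf_sign (x s) (ne_of_lt h)]
    · rw [h, hf_zero]
  have hdpos : 0 < -f (x s) + g s := by
    have := hg_pos s hs0; linarith
  have hslope := (hasDerivAt_iff_tendsto_slope.1 (hderiv s hs0))
  have hev : ∀ᶠ u in 𝓝[<] s, 0 < slope x s u := by
    have hmono : 𝓝[<] s ≤ 𝓝[≠] s :=
      nhdsWithin_mono s (fun u hu => ne_of_lt hu)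
    exact (hslope.mono_left hmono).eventually_const_lt hdpos
  have hmem : Ioo 0 s ∈ 𝓝[<] s := Ioo_mem_nhdsLT hs0
  obtain ⟨u, hu1, hu2⟩ := (hev.and (eventually_of_mem hmem (fun u hu => hu))).exists
  have hxu : 0 < x u := hpos_before u hu2.1.le hu2.2
  have : x u - x s < 0 := by
    have hden : u - s < 0 := by linarith [hu2.2]
    by_contra hge
    push_neg at hge
    have : slope x s u ≤ 0 := by
      rw [slope_def_field]
      exact div_nonpos_iff.2 (Or.inl ⟨by linarith, hden.le⟩)
    linarith
  linarith

set_option maxHeartbeats 1000000 in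
lemma my_key_rv0 (f F : ℝ → ℝ) (β : ℝ) (hβ : 1 < β)
    (fpos : ∀ y : ℝ, 0 < y → 0 < f y)
    (hf_cont : Continuous f)
    (hF : ∀ y : ℝ, 0 < y → F y = ∫ u in y..(1:ℝ), 1 / f u)
    (hF_top : Tendsto F (nhdsWithin 0 (Set.Ioi 0)) atTop)
    (hrv2 : Tendsto (fun y => f (2 * y) / f y) (nhdsWithin 0 (Set.Ioi 0)) (nhds ((2:ℝ) ^ β)))
    (δ' : ℝ) (hδ'pos : 0 < δ')
    (hMc : ∀ a b : ℝ, 0 < a → a ≤ b → b < δ' → f a ≤ 2 * f b)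
    (ε : ℝ) (hε0 : 0 < ε) :
    ∃ C x₂ : ℝ, 0 < C ∧ 0 < x₂ ∧
      ∀ a b : ℝ, 0 < a → a ≤ b → b ≤ x₂ → ε * F a ≤ F b → f b ≤ C * f a := by
  -- continuity/integrability of 1/f on (0,∞)
  have hc1 : ContinuousOn (fun u : ℝ => 1 / f u) (Ioi 0) :=
    ContinuousOn.div continuousOn_const hf_cont.continuousOn
      (fun u hu => (fpos u hu).ne')
  have hII : ∀ a b : ℝ, 0 < a → 0 < b →
      IntervalIntegrable (fun u : ℝ => 1 / f u) volume a b := by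
    intro a b ha hb
    apply ContinuousOn.intervalIntegrable
    apply hc1.mono
    intro u hu
    exact lt_of_lt_of_le (lt_min ha hb) hu.1
  have h2β : (2:ℝ) < (2:ℝ) ^ β := by
    nth_rewrite 1 [← Real.rpow_one 2]
    exact (Real.rpow_lt_rpow_left_iff (by norm_num)).mpr hβ
  obtain ⟨q, hq2, hqlt⟩ : ∃ q : ℝ, 2 < q ∧ q < 2 ^ β :=
    ⟨((2:ℝ) + 2 ^ β) / 2, by linarith, by linarith⟩
  have hqpos : 0 < q := by linarith
  obtain ⟨Q, hQq, hQ1⟩ : ∃ Q : ℝ, (2:ℝ) ^ β < Q ∧ 1 < Q :=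
    ⟨(2:ℝ) ^ β + 1, by linarith, by linarith⟩
  have hQpos : 0 < Q := by linarith
  obtain ⟨θ, hθq, hθ0, hθ1⟩ : ∃ θ : ℝ, θ * q = 2 ∧ 0 < θ ∧ θ < 1 :=
    ⟨2 / q, by field_simp, by positivity, by rw [div_lt_one hqpos]; linarith⟩
  have h1θ : 0 < 1 - θ := by linarith
  -- extract x₁ where ratio bounds hold
  have hev : ∀ᶠ y in 𝓝[>](0:ℝ), f (2 * y) / f y ∈ Ioo q Q :=
    hrv2.eventually (Ioo_mem_nhds hqlt hQq)
  rw [eventually_nhdsWithin_iff, Metric.eventually_nhds_iff] at hev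
  obtain ⟨δ₃, hδ₃, hball⟩ := hev
  set x₁ : ℝ := min (δ₃ / 2) (min (δ' / 4) (4⁻¹)) with hx₁def
  have hx₁pos : 0 < x₁ := by
    apply lt_min (by linarith) (lt_min (by linarith) (by norm_num))
  have hx₁δ₃ : x₁ < δ₃ := lt_of_le_of_lt (min_le_left _ _) (by linarith)
  have hx₁δ' : x₁ ≤ δ' / 4 := le_trans (min_le_right _ _) (min_le_left _ _)
  have hx₁4 : x₁ ≤ 4⁻¹ := le_trans (min_le_right _ _) (min_le_right _ _)
  have hratio : ∀ y : ℝ, 0 < y → y ≤ x₁ →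
      q * f y < f (2 * y) ∧ f (2 * y) < Q * f y := by
    intro y hy hyx
    have hd : dist y 0 < δ₃ := by
      rw [Real.dist_eq, sub_zero, abs_of_pos hy]; linarith
    have := hball hd hy
    have hfy := fpos y hy
    exact ⟨(lt_div_iff₀ hfy).1 this.1, (div_lt_iff₀ hfy).1 this.2⟩
  -- doubling bounds
  have DL : ∀ n : ℕ, ∀ y : ℝ, 0 < y → 2 ^ n * y ≤ 2 * x₁ →
      q ^ n * f y ≤ f (2 ^ n * y) := by
    intro n
    induction n with
    | zero => intro y hy _; simp
    | succ n ih =>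
      intro y hy hle
      have he : (2:ℝ) ^ (n + 1) * y = 2 * (2 ^ n * y) := by ring
      have h1 : (2:ℝ) ^ n * y ≤ x₁ := by rw [he] at hle; linarith
      have h3 := ih y hy (by linarith)
      have h4 := (hratio (2 ^ n * y) (by positivity) h1).1
      rw [he]
      calc q ^ (n + 1) * f y = q * (q ^ n * f y) := by ring
        _ ≤ q * f (2 ^ n * y) := mul_le_mul_of_nonneg_left h3 hqpos.le
        _ ≤ f (2 * (2 ^ n * y)) := h4.le
  have DU : ∀ n : ℕ, ∀ y : ℝ, 0 < y → 2 ^ n * y ≤ 2 * x₁ →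
      f (2 ^ n * y) ≤ Q ^ n * f y := by
    intro n
    induction n with
    | zero => intro y hy _; simp
    | succ n ih =>
      intro y hy hle
      have he : (2:ℝ) ^ (n + 1) * y = 2 * (2 ^ n * y) := by ring
      have h1 : (2:ℝ) ^ n * y ≤ x₁ := by rw [he] at hle; linarith
      have h3 := ih y hy (by linarith)
      have h4 := (hratio (2 ^ n * y) (by positivity) h1).2
      have hfny := fpos (2 ^ n * y) (by positivity)
      rw [he]
      calc f (2 * (2 ^ n * y)) ≤ Q * f (2 ^ n * y) := h4.le
        _ ≤ Q * (Q ^ n * f y) := mul_le_mul_of_nonneg_left h3 hQpos.le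
        _ = Q ^ (n + 1) * f y := by ring
  -- block upper bound
  have BL : ∀ y c : ℝ, 0 < y → y ≤ c → c ≤ 2 * y → 2 * y < δ' →
      (∫ u in y..c, 1 / f u) ≤ (c - y) * (2 / f y) := by
    intro y c hy hyc hc2y h2yδ
    have hint : (∫ _u in y..c, (2 / f y)) = (c - y) * (2 / f y) := by
      rw [intervalIntegral.integral_const]; simp [smul_eq_mul]
    rw [← hint]
    apply intervalIntegral.integral_mono_on hyc (hII y c hy (by linarith))
      intervalIntegrable_const
    intro u hu
    have hupos : 0 < u := lt_of_lt_of_le hy hu.1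
    have hfu := fpos u hupos
    have hfy := fpos y hy
    have hm := hMc y u hy hu.1 (by linarith [hu.2])
    rw [div_le_div_iff₀ hfu hfy]
    linarith
  -- block lower bound
  have BLlow : ∀ y : ℝ, 0 < y → 2 * y < δ' →
      y * (1 / (2 * f (2 * y))) ≤ ∫ u in y..2 * y, 1 / f u := by
    intro y hy h2yδ
    have hf2y := fpos (2 * y) (by linarith)
    have hint : (∫ _u in y..2 * y, (1 / (2 * f (2 * y)))) = y * (1 / (2 * f (2 * y))) := by
      rw [intervalIntegral.integral_const]; rw [smul_eq_mul]; ring_nf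
    rw [← hint]
    apply intervalIntegral.integral_mono_on (by linarith) intervalIntegrable_const
      (hII y (2 * y) hy (by linarith))
    intro u hu
    have hupos : 0 < u := lt_of_lt_of_le hy hu.1
    have hfu := fpos u hupos
    have hm := hMc u (2 * y) hupos hu.2 h2yδ
    rw [div_le_div_iff₀ (by linarith) hfu]
    linarith
  -- dyadic induction
  have IND : ∀ n : ℕ, ∀ y : ℝ, 0 < y → y ≤ x₁ → x₁ ≤ 2 ^ n * y →
      (∫ u in y..x₁, 1 / f u) ≤ (2 * y / f y) * ∑ j ∈ Finset.range n, θ ^ j := by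
    intro n
    induction n with
    | zero =>
      intro y hy hyx hxy
      have : y = x₁ := le_antisymm hyx (by simpa using hxy)
      simp [this]
    | succ n ih =>
      intro y hy hyx hxy
      have hfy := fpos y hy
      have h2yδ : 2 * y < δ' := by
        have := hx₁δ'; linarith
      have hsum1 : (1:ℝ) ≤ ∑ j ∈ Finset.range (n + 1), θ ^ j := by
        have := Finset.single_le_sum (f := fun j => θ ^ j)
          (fun i _ => pow_nonneg hθ0.le i) (Finset.mem_range.2 (Nat.succ_pos n))
        simpa using this
      rcases le_or_gt x₁ (2 * y) with hcase | hcase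
      · calc (∫ u in y..x₁, 1 / f u) ≤ (x₁ - y) * (2 / f y) :=
              BL y x₁ hy hyx hcase h2yδ
          _ ≤ y * (2 / f y) := by
              have h1 : x₁ - y ≤ y := by linarith
              have h2 : (0:ℝ) ≤ 2 / f y := by positivity
              exact mul_le_mul_of_nonneg_right h1 h2
          _ = (2 * y / f y) * 1 := by ring
          _ ≤ (2 * y / f y) * ∑ j ∈ Finset.range (n + 1), θ ^ j := by
              apply mul_le_mul_of_nonneg_left hsum1 (by positivity)
      · have hsplit : (∫ u in y..2 * y, 1 / f u) + (∫ u in 2 * y..x₁, 1 / f u) =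
            ∫ u in y..x₁, 1 / f u :=
          intervalIntegral.integral_add_adjacent_intervals
            (hII y (2 * y) hy (by linarith)) (hII (2 * y) x₁ (by linarith) hx₁pos)
        rw [← hsplit]
        have hxy' : x₁ ≤ 2 ^ n * (2 * y) := by
          have he : (2:ℝ) ^ n * (2 * y) = 2 ^ (n + 1) * y := by ring
          rw [he]; exact hxy
        have hIH := ih (2 * y) (by linarith) hcase.le hxy'
        have hrq := (hratio y hy hyx).1
        have hf2y := fpos (2 * y) (by linarith)
        have hB1 : (∫ u in y..2 * y, 1 / f u) ≤ 2 * y / f y := by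
          have := BL y (2 * y) hy (by linarith) (le_refl _) h2yδ
          calc (∫ u in y..2 * y, 1 / f u) ≤ (2 * y - y) * (2 / f y) := this
            _ = 2 * y / f y := by ring
        have hB2 : (∫ u in 2 * y..x₁, 1 / f u) ≤
            (2 * y / f y) * (θ * ∑ j ∈ Finset.range n, θ ^ j) := by
          refine le_trans hIH ?_
          have hk : 2 * (2 * y) / f (2 * y) ≤ (2 * y / f y) * θ := by
            rw [div_le_iff₀ hf2y]
            have hnn : (0:ℝ) ≤ (2 * y / f y) * θ :=
              mul_nonneg (div_nonneg (by linarith) hfy.le) hθ0.le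
            have h5 : (2 * y / f y) * θ * (q * f y) ≤ (2 * y / f y) * θ * f (2 * y) :=
              mul_le_mul_of_nonneg_left hrq.le hnn
            have e : (2 * y / f y) * θ * (q * f y) = 2 * y * (θ * q) := by
              field_simp
            rw [e, hθq] at h5
            linarith
          have hsnn : (0:ℝ) ≤ ∑ j ∈ Finset.range n, θ ^ j :=
            Finset.sum_nonneg fun i _ => pow_nonneg hθ0.le i
          calc (2 * (2 * y) / f (2 * y)) * ∑ j ∈ Finset.range n, θ ^ j
              ≤ ((2 * y / f y) * θ) * ∑ j ∈ Finset.range n, θ ^ j :=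
                mul_le_mul_of_nonneg_right hk hsnn
            _ = (2 * y / f y) * (θ * ∑ j ∈ Finset.range n, θ ^ j) := by ring
        calc (∫ u in y..2 * y, 1 / f u) + (∫ u in 2 * y..x₁, 1 / f u)
            ≤ 2 * y / f y + (2 * y / f y) * (θ * ∑ j ∈ Finset.range n, θ ^ j) :=
              add_le_add hB1 hB2
          _ = (2 * y / f y) * (θ * ∑ j ∈ Finset.range n, θ ^ j + 1) := by ring
          _ = (2 * y / f y) * ∑ j ∈ Finset.range (n + 1), θ ^ j := by
              rw [geom_sum_succ]
  -- geometric sum bound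
  have hsum_le : ∀ n : ℕ, (∑ j ∈ Finset.range n, θ ^ j) ≤ 1 / (1 - θ) := by
    intro n
    have hpow : (0:ℝ) ≤ θ ^ n := pow_nonneg hθ0.le n
    rw [geom_sum_eq (ne_of_lt hθ1) n]
    rw [show (θ ^ n - 1) / (θ - 1) = (1 - θ ^ n) / (1 - θ) by
      rw [div_eq_div_iff (by linarith) (by linarith)]; ring]
    gcongr
    linarith
  -- extract x₂ where F y is large
  have hFev : ∀ᶠ y in 𝓝[>](0:ℝ), 2 * |F x₁| ≤ F y :=
    hF_top.eventually (eventually_ge_atTop _)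
  rw [eventually_nhdsWithin_iff, Metric.eventually_nhds_iff] at hFev
  obtain ⟨δ₄, hδ₄, hF4⟩ := hFev
  set x₂ : ℝ := min x₁ (δ₄ / 2) with hx₂def
  have hx₂pos : 0 < x₂ := lt_min hx₁pos (by linarith)
  have hx₂x₁ : x₂ ≤ x₁ := min_le_left _ _
  have hx₂δ₄ : x₂ < δ₄ := lt_of_le_of_lt (min_le_right _ _) (by linarith)
  -- upper bound on F
  have SA : ∀ y : ℝ, 0 < y → y ≤ x₂ → F y ≤ (4 / (1 - θ)) * (y / f y) := by
    intro y hy hyx₂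
    have hfy := fpos y hy
    have hyx₁ : y ≤ x₁ := le_trans hyx₂ hx₂x₁
    obtain ⟨n, hn⟩ := pow_unbounded_of_one_lt (x₁ / y) (one_lt_two (α := ℝ))
    have hxn : x₁ ≤ 2 ^ n * y := by
      rw [div_lt_iff₀ hy] at hn; linarith
    have hI := IND n y hy hyx₁ hxn
    have hIbound : (∫ u in y..x₁, 1 / f u) ≤ (2 * y / f y) * (1 / (1 - θ)) :=
      le_trans hI (mul_le_mul_of_nonneg_left (hsum_le n) (by positivity))
    have hsplit : F y = (∫ u in y..x₁, 1 / f u) + F x₁ := by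
      rw [hF y hy, hF x₁ hx₁pos,
        intervalIntegral.integral_add_adjacent_intervals (hII y x₁ hy hx₁pos)
          (hII x₁ 1 hx₁pos one_pos)]
    have hFy2 : 2 * |F x₁| ≤ F y := by
      apply hF4 _ hy
      rw [Real.dist_eq, sub_zero, abs_of_pos hy]
      linarith
    have habs : F x₁ ≤ |F x₁| := le_abs_self _
    have habs0 : (0:ℝ) ≤ |F x₁| := abs_nonneg _
    have hkey : F y ≤ 2 * ((2 * y / f y) * (1 / (1 - θ))) := by linarith
    calc F y ≤ 2 * ((2 * y / f y) * (1 / (1 - θ))) := hkey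
      _ = (4 / (1 - θ)) * (y / f y) := by ring
  -- lower bound on F
  have SB : ∀ y : ℝ, 0 < y → y ≤ x₂ → (1 / (2 * Q)) * (y / f y) ≤ F y := by
    intro y hy hyx₂
    have hyx₁ : y ≤ x₁ := le_trans hyx₂ hx₂x₁
    have h2y1 : 2 * y ≤ 2⁻¹ := by
      have := hx₁4; linarith
    have h2yδ : 2 * y < δ' := by have := hx₁δ'; linarith
    have hf2y := fpos (2 * y) (by linarith)
    have hfy := fpos y hy
    have hsplit : F y = (∫ u in y..2 * y, 1 / f u) + (∫ u in 2 * y..1, 1 / f u) := by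
      rw [hF y hy,
        intervalIntegral.integral_add_adjacent_intervals (hII y (2 * y) hy (by linarith))
          (hII (2 * y) 1 (by linarith) one_pos)]
    have hpos2 : (0:ℝ) ≤ ∫ u in 2 * y..1, 1 / f u := by
      apply intervalIntegral.integral_nonneg (by linarith)
      intro u hu
      have : 0 < u := lt_of_lt_of_le (by linarith) hu.1
      have hfu := fpos u this
      positivity
    have hlow := BLlow y hy h2yδ
    have hQ2 := (hratio y hy hyx₁).2
    have hstep : (1 / (2 * Q)) * (y / f y) ≤ y * (1 / (2 * f (2 * y))) := by
      have h1 : (1 / (2 * Q)) * (y / f y) = y / (2 * Q * f y) := by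
        rw [div_mul_div_comm, one_mul]
      have h2 : y * (1 / (2 * f (2 * y))) = y / (2 * f (2 * y)) := mul_one_div y _
      rw [h1, h2, div_le_div_iff₀ (by positivity) (by positivity)]
      linarith [mul_le_mul_of_nonneg_left hQ2.le hy.le]
    rw [hsplit]
    linarith
  -- choose K and C
  have hρpos : 0 < ε * (1 - θ) / (32 * Q) :=
    div_pos (mul_pos hε0 h1θ) (by linarith)
  obtain ⟨K, hK⟩ := exists_pow_lt_of_lt_one hρpos hθ1
  refine ⟨2 * Q ^ (K + 1) + 2, x₂, by positivity, hx₂pos, ?_⟩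
  intro a b ha hab hbx₂ hεF
  have hbpos : 0 < b := lt_of_lt_of_le ha hab
  have hbx₁ : b ≤ x₁ := le_trans hbx₂ hx₂x₁
  have hbδ' : b < δ' := by have := hx₁δ'; linarith
  have hfa := fpos a ha
  have hfb := fpos b hbpos
  have hQKnn : (0:ℝ) ≤ Q ^ (K + 1) := by positivity
  have hex : ∃ n : ℕ, b ≤ 2 ^ n * a := by
    obtain ⟨n, hn⟩ := pow_unbounded_of_one_lt (b / a) (one_lt_two (α := ℝ))
    exact ⟨n, by rw [div_lt_iff₀ ha] at hn; linarith⟩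
  have hkb : b ≤ 2 ^ Nat.find hex * a := Nat.find_spec hex
  by_cases hk0 : Nat.find hex = 0
  · have hba : b ≤ a := by rw [hk0] at hkb; simpa using hkb
    have hm := hMc b a hbpos hba (by linarith)
    linarith [mul_nonneg hQKnn hfa.le]
  · set m := Nat.find hex - 1 with hmdef
    have hkm : Nat.find hex = m + 1 := (Nat.succ_pred_eq_of_pos (Nat.pos_of_ne_zero hk0)).symm
    have hmb : 2 ^ m * a < b := by
      have h := Nat.find_min hex (m := m) (by omega)
      push_neg at h
      exact h
    rw [hkm] at hkb
    have hkb' : b ≤ 2 * (2 ^ m * a) := by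
      have he : (2:ℝ) ^ (m + 1) * a = 2 * (2 ^ m * a) := by ring
      rw [he] at hkb; exact hkb
    have h2ma_pos : (0:ℝ) < 2 ^ m * a := by positivity
    have hDLm : q ^ m * f a ≤ f (2 ^ m * a) :=
      DL m a ha (by linarith [hmb, hbx₁, hx₁pos])
    have hMcb : f (2 ^ m * a) ≤ 2 * f b := hMc (2 ^ m * a) b h2ma_pos hmb.le hbδ'
    have qm_fb : q ^ m * f a ≤ 2 * f b := le_trans hDLm hMcb
    have hFbup : F b ≤ (4 / (1 - θ)) * (b / f b) := SA b hbpos hbx₂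
    have hFalow : (1 / (2 * Q)) * (a / f a) ≤ F a := SB a ha (le_trans hab hbx₂)
    have hqm : (0:ℝ) < q ^ m * f a := by positivity
    have hfbinv : b / f b ≤ (2 ^ (m + 1) * a) * 2 / (q ^ m * f a) := by
      rw [div_le_div_iff₀ hfb hqm]
      have h1 : b * (q ^ m * f a) ≤ b * (2 * f b) :=
        mul_le_mul_of_nonneg_left qm_fb hbpos.le
      have h2 : b * (2 * f b) ≤ (2 ^ (m + 1) * a) * (2 * f b) := by
        apply mul_le_mul_of_nonneg_right _ (by positivity)
        have he : (2:ℝ) ^ (m + 1) * a = 2 * (2 ^ m * a) := by ring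
        rw [he]; exact hkb'
      calc b * (q ^ m * f a) ≤ b * (2 * f b) := h1
        _ ≤ (2 ^ (m + 1) * a) * (2 * f b) := h2
        _ = 2 ^ (m + 1) * a * 2 * f b := by ring
    have hchain : ε * ((1 / (2 * Q)) * (a / f a)) ≤ (4 / (1 - θ)) * (b / f b) :=
      calc ε * ((1 / (2 * Q)) * (a / f a)) ≤ ε * F a :=
            mul_le_mul_of_nonneg_left hFalow hε0.le
        _ ≤ F b := hεF
        _ ≤ (4 / (1 - θ)) * (b / f b) := hFbup
    have hchain2 : ε * ((1 / (2 * Q)) * (a / f a)) ≤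
        (4 / (1 - θ)) * ((2 ^ (m + 1) * a) * 2 / (q ^ m * f a)) :=
      le_trans hchain (mul_le_mul_of_nonneg_left hfbinv (by positivity))
    have hqm2 : θ ^ m * q ^ m = 2 ^ m := by
      rw [← mul_pow, hθq]
    have hle : (2 ^ (m + 1) * a) * 2 / (q ^ m * f a) ≤ (4 * θ ^ m) * (a / f a) := by
      rw [div_le_iff₀ hqm]
      have e2 : (4 * θ ^ m) * (a / f a) * (q ^ m * f a) = 4 * a * (θ ^ m * q ^ m) := by
        field_simp
      rw [e2, hqm2]
      refine le_of_eq ?_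
      rw [pow_succ]
      ring
    have hRHS : (4 / (1 - θ)) * ((4 * θ ^ m) * (a / f a)) =
        ((16 / (1 - θ)) * θ ^ m) * (a / f a) := by ring
    replace hchain2 : ε * ((1 / (2 * Q)) * (a / f a)) ≤
        ((16 / (1 - θ)) * θ ^ m) * (a / f a) := by
      rw [← hRHS]
      exact le_trans hchain2 (mul_le_mul_of_nonneg_left hle (by positivity))
    have hA : 0 < a / f a := by positivity
    have hfinal1 : ε * (1 / (2 * Q)) ≤ (16 / (1 - θ)) * θ ^ m := by
      have h'' : (ε * (1 / (2 * Q))) * (a / f a) ≤ ((16 / (1 - θ)) * θ ^ m) * (a / f a) := by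
        linarith
      exact le_of_mul_le_mul_right h'' hA
    have hθm : ε * (1 - θ) / (32 * Q) ≤ θ ^ m := by
      have h2Q : (0:ℝ) < 2 * Q := by positivity
      have hcan : (1 / (2 * Q)) * (2 * Q) = 1 := one_div_mul_cancel (by positivity)
      have hstep1 : ε ≤ (16 / (1 - θ)) * θ ^ m * (2 * Q) := by
        have h := mul_le_mul_of_nonneg_right hfinal1 h2Q.le
        calc ε = ε * ((1 / (2 * Q)) * (2 * Q)) := by rw [hcan, mul_one]
          _ = ε * (1 / (2 * Q)) * (2 * Q) := by ring
          _ ≤ (16 / (1 - θ)) * θ ^ m * (2 * Q) := h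
      have hstep2 : ε * (1 - θ) ≤ 32 * Q * θ ^ m := by
        have h := mul_le_mul_of_nonneg_right hstep1 h1θ.le
        calc ε * (1 - θ) ≤ (16 / (1 - θ)) * θ ^ m * (2 * Q) * (1 - θ) := h
          _ = 32 * Q * θ ^ m := by
            field_simp
            ring
      rw [div_le_iff₀ (by positivity)]
      linarith [hstep2]
    have hmK : m ≤ K := by
      by_contra hc
      push_neg at hc
      have : θ ^ m ≤ θ ^ K := pow_le_pow_of_le_one hθ0.le hθ1.le hc.le
      linarith
    have hQk : Q ^ (m + 1) ≤ Q ^ (K + 1) := by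
      apply pow_le_pow_right₀ (by linarith) (by omega)
    have h2kb : (2:ℝ) ^ (m + 1) * a ≤ 2 * b := by
      have he : (2:ℝ) ^ (m + 1) * a = 2 * (2 ^ m * a) := by ring
      rw [he]; linarith
    have hδ2k : (2:ℝ) ^ (m + 1) * a < δ' := by
      have := hx₁δ'; linarith
    have hf1 : f b ≤ 2 * f (2 ^ (m + 1) * a) := hMc b (2 ^ (m + 1) * a) hbpos hkb hδ2k
    have hf2 : f (2 ^ (m + 1) * a) ≤ Q ^ (m + 1) * f a :=
      DU (m + 1) a ha (by linarith)
    linarith [hf1, hf2, mul_le_mul_of_nonneg_right hQk hfa.le, hfa.le]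

/-- Theorem 2.4 (Theorem `Fxtto0`): under the base hypotheses and Condition (M), if
`g(t)/(f∘F⁻¹)(t) → +∞`, the solution `x` of `x' = -f(x) + g`, `x(0) = ξ > 0`,
satisfies `x(t) → 0`, and either `f ∈ RV₀(β)` for some `β > 1` or
`f∘F⁻¹ ∈ RV_∞(-1)`, then `F(x(t))/t → 0`. -/
theorem stmt_4
    (f g F Finv : ℝ → ℝ) (ξ : ℝ) (x : ℝ → ℝ)
    (hf_cont : Continuous f) (hf_lip : LocallyLipschitz f)
    (hf_sign : ∀ y : ℝ, y ≠ 0 → 0 < y * f y) (hf_zero : f 0 = 0)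
    (hg_cont : ContinuousOn g (Set.Ici 0)) (hg_pos : ∀ t : ℝ, 0 < t → 0 < g t)
    (hF : ∀ y : ℝ, 0 < y → F y = ∫ u in y..(1:ℝ), 1 / f u)
    (hF_top : Tendsto F (nhdsWithin 0 (Set.Ioi 0)) atTop)
    (hF_anti : StrictAntiOn F (Set.Ioi 0))
    (hFinv : ∀ t : ℝ, 0 ≤ t → 0 < Finv t ∧ F (Finv t) = t)
    (hFinv_to0 : Tendsto Finv atTop (nhds 0))
    (hξ : 0 < ξ) (hx : IsSol f g ξ x)
    (hM : ∃ δ : ℝ, 0 < δ ∧ ∃ φ : ℝ → ℝ, StrictMonoOn φ (Set.Ioo 0 δ) ∧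
      Tendsto (fun y => f y / φ y) (nhdsWithin 0 (Set.Ioi 0)) (nhds 1))
    (hLinf : Tendsto (fun t => g t / f (Finv t)) atTop atTop)
    (hx_to0 : Tendsto x atTop (nhds 0))
    (hreg : (∃ β : ℝ, 1 < β ∧ RVat0 f β) ∨ RVatInf (fun t => f (Finv t)) (-1)) :
    Tendsto (fun t => F (x t) / t) atTop (nhds 0) := by
  obtain ⟨hxcont, hx0, hxderiv⟩ := hx
  have fpos : ∀ y : ℝ, 0 < y → 0 < f y := by
    intro y hy
    have := hf_sign y hy.ne'
    nlinarith
  have xpos : ∀ t : ℝ, 0 ≤ t → 0 < x t :=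
    my_sol_pos f g ξ x hf_sign hf_zero hg_pos hξ ⟨hxcont, hx0, hxderiv⟩
  have hc1 : ContinuousOn (fun u : ℝ => 1 / f u) (Ioi 0) :=
    ContinuousOn.div continuousOn_const hf_cont.continuousOn
      (fun u hu => (fpos u hu).ne')
  -- derivative of F on (0,∞)
  have hFd : ∀ y : ℝ, 0 < y → HasDerivAt F (-(1 / f y)) y := by
    intro y hy
    have hint : IntervalIntegrable (fun u : ℝ => 1 / f u) volume y 1 := by
      apply ContinuousOn.intervalIntegrable (hc1.mono ?_)
      intro u hu
      exact lt_of_lt_of_le (lt_min hy one_pos) hu.1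
    have hmeas : StronglyMeasurableAtFilter (fun u : ℝ => 1 / f u) (𝓝 y) volume :=
      ContinuousOn.stronglyMeasurableAtFilter isOpen_Ioi hc1 y hy
    have hca : ContinuousAt (fun u : ℝ => 1 / f u) y :=
      hc1.continuousAt (Ioi_mem_nhds hy)
    have hd := intervalIntegral.integral_hasDerivAt_left hint hmeas hca
    apply hd.congr_of_eventuallyEq
    filter_upwards [Ioi_mem_nhds hy] with z hz
    exact hF z hz
  have hD : ∀ t : ℝ, 0 < t → HasDerivAt (fun s => F (x s)) (1 - g t / f (x t)) t := by
    intro t ht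
    have hxt := xpos t ht.le
    have hfxt := fpos _ hxt
    have hcomp := (hFd (x t) hxt).comp t (hxderiv t ht)
    have he : -(1 / f (x t)) * (-f (x t) + g t) = 1 - g t / f (x t) := by
      field_simp
      ring
    rw [he] at hcomp
    exact hcomp
  -- condition (M) comparison
  obtain ⟨δ, hδpos, φ, hφmono, hφlim⟩ := hM
  have hMev : ∀ᶠ y in 𝓝[>](0:ℝ), f y / φ y ∈ Ioo (3/4 : ℝ) (4/3 : ℝ) :=
    hφlim.eventually (Ioo_mem_nhds (by norm_num) (by norm_num))
  rw [eventually_nhdsWithin_iff, Metric.eventually_nhds_iff] at hMev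
  obtain ⟨δ₂, hδ₂, hb2⟩ := hMev
  obtain ⟨δ', hδ'pos, hδ'δ, hδ'2⟩ : ∃ d : ℝ, 0 < d ∧ d ≤ δ ∧ d ≤ δ₂ :=
    ⟨min δ δ₂, lt_min hδpos hδ₂, min_le_left _ _, min_le_right _ _⟩
  have hMc : ∀ a b : ℝ, 0 < a → a ≤ b → b < δ' → f a ≤ 2 * f b := by
    intro a b ha hab hbδ
    have hbpos : 0 < b := lt_of_lt_of_le ha hab
    have hfa := fpos a ha
    have hfb := fpos b hbpos
    have hra := hb2 (y := a)
      (by rw [Real.dist_eq, sub_zero, abs_of_pos ha]; linarith) ha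
    have hrb := hb2 (y := b)
      (by rw [Real.dist_eq, sub_zero, abs_of_pos hbpos]; linarith) hbpos
    have hφa : 0 < φ a := by
      rcases le_or_gt (φ a) 0 with h | h
      · exfalso
        have h0 : f a / φ a ≤ 0 := div_nonpos_iff.2 (Or.inl ⟨hfa.le, h⟩)
        have := hra.1
        norm_num at this
        linarith
      · exact h
    have hφb : 0 < φ b := by
      rcases le_or_gt (φ b) 0 with h | h
      · exfalso
        have h0 : f b / φ b ≤ 0 := div_nonpos_iff.2 (Or.inl ⟨hfb.le, h⟩)
        have := hrb.1
        norm_num at this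
        linarith
      · exact h
    have h1 : f a < (4/3) * φ a := by
      have := hra.2
      rw [mem_Ioo] at *
      exact (div_lt_iff₀ hφa).1 hra.2
    have h2 : φ a ≤ φ b := by
      rcases eq_or_lt_of_le hab with h | h
      · rw [h]
      · exact (hφmono ⟨ha, by linarith⟩ ⟨hbpos, by linarith⟩ h).le
    have h3 : (3/4) * φ b < f b := by
      have := hrb.1
      rw [show (3:ℝ)/4 * φ b = (3/4) * φ b from rfl]
      calc (3/4 : ℝ) * φ b < (f b / φ b) * φ b := by
            apply mul_lt_mul_of_pos_right hrb.1 hφb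
        _ = f b := by field_simp
    linarith
  -- the key regular-variation bound
  have hKEY : ∀ ε : ℝ, 0 < ε → ε < 1 → ∃ C : ℝ, 0 < C ∧
      ∀ᶠ t in atTop, f (Finv (ε * t)) ≤ C * f (Finv t) := by
    intro ε hε0 hε1
    have htend : Tendsto (fun t : ℝ => ε * t) atTop atTop :=
      Tendsto.const_mul_atTop hε0 tendsto_id
    have hFinvε : Tendsto (fun t => Finv (ε * t)) atTop (𝓝 0) := hFinv_to0.comp htend
    rcases hreg with ⟨β, hβ, hrv⟩ | hrvinf
    · obtain ⟨C, x₂, hC, hx₂, hbound⟩ := my_key_rv0 f F β hβ fpos hf_cont hF hF_top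
        (hrv 2 two_pos) δ' hδ'pos hMc ε hε0
      refine ⟨C, hC, ?_⟩
      have hev1 : ∀ᶠ t in atTop, Finv (ε * t) < x₂ := hFinvε.eventually_lt_const hx₂
      filter_upwards [hev1, eventually_gt_atTop (0:ℝ)] with t hev1t htpos
      have hεt0 : 0 ≤ ε * t := by positivity
      obtain ⟨hFit_pos, hFit⟩ := hFinv t htpos.le
      obtain ⟨hFiε_pos, hFiε⟩ := hFinv (ε * t) hεt0
      have hab : Finv t ≤ Finv (ε * t) := by
        by_contra hlt
        push_neg at hlt
        have h4 := hF_anti (mem_Ioi.2 hFiε_pos) (mem_Ioi.2 hFit_pos) hlt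
        rw [hFit, hFiε] at h4
        have : ε * t < 1 * t := mul_lt_mul_of_pos_right hε1 htpos
        linarith
      apply hbound (Finv t) (Finv (ε * t)) hFit_pos hab hev1t.le
      rw [hFit, hFiε]
    · have h := hrvinf ε hε0
      have hcpos : 0 < ε ^ (-1 : ℝ) := Real.rpow_pos_of_pos hε0 _
      refine ⟨ε ^ (-1 : ℝ) + 1, by linarith, ?_⟩
      have hev := h.eventually_lt_const (lt_add_one (ε ^ (-1:ℝ)))
      filter_upwards [hev, eventually_ge_atTop (0:ℝ)] with t hlt ht0
      have hfp := fpos _ (hFinv t ht0).1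
      have := (div_lt_iff₀ hfp).1 hlt
      linarith
  -- lower bound: eventually F (x t) ≥ 0
  have hFinv0 := hFinv 0 le_rfl
  have hlow : ∀ᶠ t in atTop, 0 ≤ F (x t) := by
    filter_upwards [hx_to0.eventually_lt_const hFinv0.1, eventually_ge_atTop (0:ℝ)]
      with t h1 h2
    have hxt := xpos t h2
    have h3 := hF_anti (mem_Ioi.2 hxt) (mem_Ioi.2 hFinv0.1) h1
    rw [hFinv0.2] at h3
    exact h3.le
  -- main descent
  have main : ∀ ε : ℝ, 0 < ε → ε < 1 → ∀ᶠ t in atTop, F (x t) ≤ ε * t := by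
    intro ε hε0 hε1
    obtain ⟨C, hC, hCev⟩ := hKEY ε hε0 hε1
    have htendε : Tendsto (fun t : ℝ => ε * t) atTop atTop :=
      Tendsto.const_mul_atTop hε0 tendsto_id
    have hE3 : ∀ᶠ t in atTop, Finv (ε * t) < δ' :=
      (hFinv_to0.comp htendε).eventually_lt_const hδ'pos
    have hE1 : ∀ᶠ t in atTop, 4 * C ≤ g t / f (Finv t) :=
      hLinf.eventually (eventually_ge_atTop _)
    obtain ⟨T₀, hT₀⟩ := eventually_atTop.1 (((hCev.and hE3).and hE1).and
      (eventually_ge_atTop (1:ℝ)))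
    obtain ⟨T, hTT₀, hT1⟩ : ∃ T : ℝ, T₀ ≤ T ∧ 1 ≤ T :=
      ⟨max T₀ 1, le_max_left _ _, le_max_right _ _⟩
    have hTprop : ∀ t, T ≤ t →
        ((f (Finv (ε * t)) ≤ C * f (Finv t) ∧ Finv (ε * t) < δ') ∧
          4 * C ≤ g t / f (Finv t)) :=
      fun t ht => (hT₀ t (le_trans hTT₀ ht)).1
    have hDB : ∀ t, T ≤ t → ε * t ≤ F (x t) → 1 - g t / f (x t) ≤ -1 := by
      intro t ht hFxt
      have htpos : (0:ℝ) < t := lt_of_lt_of_le one_pos (le_trans hT1 ht)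
      obtain ⟨⟨hCf, hδf⟩, hgf⟩ := hTprop t ht
      have hεt0 : (0:ℝ) ≤ ε * t := by positivity
      obtain ⟨hFiε_pos, hFiε⟩ := hFinv (ε * t) hεt0
      obtain ⟨hFit_pos, hFit⟩ := hFinv t htpos.le
      have hxt := xpos t htpos.le
      have hxle : x t ≤ Finv (ε * t) := by
        by_contra hgt
        push_neg at hgt
        have h4 := hF_anti (mem_Ioi.2 hFiε_pos) (mem_Ioi.2 hxt) hgt
        rw [hFiε] at h4
        linarith
      have hfx : f (x t) ≤ 2 * f (Finv (ε * t)) := hMc (x t) (Finv (ε * t)) hxt hxle hδf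
      have hfiv := fpos _ hFit_pos
      have hg4 : 4 * C * f (Finv t) ≤ g t := (le_div_iff₀ hfiv).1 hgf
      have hfxpos := fpos _ hxt
      have h2 : 2 * f (x t) ≤ g t := by linarith
      have h3 : (2:ℝ) ≤ g t / f (x t) := (le_div_iff₀ hfxpos).2 (by linarith)
      linarith
    have hMVT : ∀ s t : ℝ, T ≤ s → s < t → (∀ u, s < u → u < t → ε * u ≤ F (x u)) →
        F (x t) - F (x s) ≤ -(t - s) := by
      intro s t hTs hst hcond
      have hspos : (0:ℝ) < s := lt_of_lt_of_le one_pos (le_trans hT1 hTs)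
      have hcont : ContinuousOn (fun u => F (x u)) (Icc s t) := by
        intro u hu
        exact ((hD u (lt_of_lt_of_le hspos hu.1)).continuousAt).continuousWithinAt
      obtain ⟨c, hc, hceq⟩ := exists_hasDerivAt_eq_slope (fun u => F (x u))
        (fun u => 1 - g u / f (x u)) hst hcont
        (fun u hu => hD u (lt_trans hspos hu.1))
      have hcb : 1 - g c / f (x c) ≤ -1 := hDB c (le_trans hTs hc.1.le) (hcond c hc.1 hc.2)
      rw [hceq] at hcb
      have := (div_le_iff₀ (by linarith : (0:ℝ) < t - s)).1 hcb
      linarith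
    have hex : ∃ t₀, T ≤ t₀ ∧ F (x t₀) < ε * t₀ := by
      by_contra hno
      push_neg at hno
      have hTpos : (0:ℝ) < T := lt_of_lt_of_le one_pos hT1
      have hFT : ε * T ≤ F (x T) := hno T le_rfl
      have hFT0 : 0 < F (x T) + 1 := by nlinarith
      have hlt : T < T + (F (x T) + 1) := by linarith
      have hm := hMVT T (T + (F (x T) + 1)) le_rfl hlt (fun u hu _ => hno u hu.le)
      have h2 := hno (T + (F (x T) + 1)) (by linarith)
      nlinarith
    obtain ⟨t₀, hTt₀, ht₀⟩ := hex
    rw [eventually_atTop]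
    refine ⟨t₀, ?_⟩
    intro t₁ ht₁
    by_contra hgt
    push_neg at hgt
    have ht₀t₁ : t₀ < t₁ := by
      rcases eq_or_lt_of_le ht₁ with h | h
      · exfalso; rw [← h] at hgt; linarith
      · exact h
    have hcontS : ContinuousOn (fun u => F (x u) - ε * u) (Icc t₀ t₁) := by
      intro u hu
      have hupos : (0:ℝ) < u :=
        lt_of_lt_of_le (lt_of_lt_of_le one_pos (le_trans hT1 hTt₀)) hu.1
      exact (((hD u hupos).continuousAt).sub
        ((continuous_const.mul continuous_id).continuousAt)).continuousWithinAt
    have hSeq : {u | u ∈ Icc t₀ t₁ ∧ F (x u) ≤ ε * u} =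
        Icc t₀ t₁ ∩ (fun u => F (x u) - ε * u) ⁻¹' Iic 0 := by
      ext u
      simp only [mem_setOf_eq, mem_inter_iff, mem_preimage, mem_Iic]
      constructor
      · intro h; exact ⟨h.1, by linarith [h.2]⟩
      · intro h; exact ⟨h.1, by linarith [h.2]⟩
    have hScl : IsClosed {u | u ∈ Icc t₀ t₁ ∧ F (x u) ≤ ε * u} := by
      rw [hSeq]
      exact hcontS.preimage_isClosed_of_isClosed isClosed_Icc isClosed_Iic
    have ht₀S : t₀ ∈ {u | u ∈ Icc t₀ t₁ ∧ F (x u) ≤ ε * u} :=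
      ⟨⟨le_rfl, ht₀t₁.le⟩, ht₀.le⟩
    have hSbdd : BddAbove {u | u ∈ Icc t₀ t₁ ∧ F (x u) ≤ ε * u} :=
      BddAbove.mono (fun u hu => hu.1) bddAbove_Icc
    have hsup := hScl.csSup_mem ⟨t₀, ht₀S⟩ hSbdd
    set s := sSup {u | u ∈ Icc t₀ t₁ ∧ F (x u) ≤ ε * u} with hsdef
    have hst₁ : s < t₁ := by
      rcases eq_or_lt_of_le hsup.1.2 with h | h
      · exfalso
        have h5 := hsup.2
        rw [h] at h5
        linarith
      · exact h
    have hcond : ∀ u, s < u → u < t₁ → ε * u ≤ F (x u) := by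
      intro u hsu hut₁
      by_contra hltu
      push_neg at hltu
      have huS : u ∈ {u | u ∈ Icc t₀ t₁ ∧ F (x u) ≤ ε * u} :=
        ⟨⟨le_trans hsup.1.1 hsu.le, hut₁.le⟩, hltu.le⟩
      have := le_csSup hSbdd huS
      linarith
    have hMv := hMVT s t₁ (le_trans hTt₀ hsup.1.1) hst₁ hcond
    have hFs : F (x s) ≤ ε * s := hsup.2
    have hq : ε * (t₁ - s) < 1 * (t₁ - s) :=
      mul_lt_mul_of_pos_right hε1 (by linarith)
    nlinarith
  -- conclude
  rw [tendsto_order]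
  constructor
  · intro a ha
    filter_upwards [hlow, eventually_ge_atTop (1:ℝ)] with t h1 h2
    have : 0 ≤ F (x t) / t := div_nonneg h1 (by linarith)
    linarith
  · intro a ha
    obtain ⟨ε, hε0, hε1, hεa⟩ : ∃ ε : ℝ, 0 < ε ∧ ε < 1 ∧ ε < a :=
      ⟨min (a/2) 2⁻¹, lt_min (by linarith) (by norm_num),
        lt_of_le_of_lt (min_le_right _ _) (by norm_num),
        lt_of_le_of_lt (min_le_left _ _) (by linarith)⟩
    filter_upwards [main ε hε0 hε1, eventually_ge_atTop (1:ℝ)] with t h1 h2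
    have htpos : (0:ℝ) < t := by linarith
    have : F (x t) / t ≤ ε := (div_le_iff₀ htpos).2 h1
    linarith
end
end

section
/- Assume the base hypotheses. Suppose lim_{t→∞} g(t)/(f∘F⁻¹)(t) = +∞, f ∈ RV₀(β) for some β > 1, g ∈ RV_∞(0) (g is slowly varying at infinity), g is asymptotic to a decreasing function (i.e., there exists a positive decreasing function γ₁ on (0,∞) with lim_{t→∞} g(t)/γ₁(t) = 1), and the unique continuous solution x of x'(t) = -f(x(t)) + g(t), x(0) = ξ > 0, satisfies x(t) → 0 as t → ∞. Then lim_{t→∞} f(x(t))/g(t) = 1. -/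
open Filter Real Set Topology MeasureTheory

noncomputable section

/-!
Write `f (exp (-u)) = exp (-β u + K u)`. Regular variation of `f` at `0` says that
`K (u + c) - K u → 0` for every `c`; by the Baire category theorem this convergence is locally
uniform in `c`, which makes `f` almost increasing near `0`: `f a ≤ (1 + δ) f b` for `0 < a ≤ b`
small. Likewise `g`, being asymptotic to a decreasing slowly varying function, is almost constant
on the windows `[t/2, t]`, and `t g(t) → ∞`.

Fix a large `t` and suppose `f (x t) < (1 - ε) g t`. Wherever `x s ≤ x t` on the window, almost
monotonicity gives `x' s = g s - f (x s) ≥ ε g(t) / 2`, and a barrier argument run backwards from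
`t` yields `x (t/2) ≤ x t - ε t g(t) / 4`, impossible since `x` is small while `t g(t)` is large.
The case `f (x t) > (1 + ε) g t` is symmetric.
-/

open Asymptotics

lemma exists_pos_eventually_abs_add_sub_le {K : ℝ → ℝ} (hK : Continuous K)
    (hlim : ∀ c, Tendsto (fun u => K (u + c) - K u) atTop (𝓝 0)) {ε : ℝ} (hε : 0 < ε) :
    ∃ r > 0, ∀ᶠ u in atTop, ∀ e, |e| < r → |K (u + e) - K u| ≤ ε := by
  set C : ℕ → Set ℝ := fun n => {c | ∀ u ≥ (n : ℝ), |K (u + c) - K u| ≤ ε / 2}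
  have hC_closed : ∀ n, IsClosed (C n) := fun n => by
    simp only [C, Set.ofPred_forall]
    exact isClosed_iInter fun u => isClosed_iInter fun _ =>
      isClosed_le (by fun_prop) continuous_const
  have hC_cover : ⋃ n, C n = univ := by
    refine eq_univ_of_forall fun c => mem_iUnion.2 ?_
    obtain ⟨U, hU⟩ := eventually_atTop.1
      ((hlim c).eventually (Metric.closedBall_mem_nhds 0 (half_pos hε)))
    exact ⟨⌈U⌉₊, fun u hu => by simpa using hU u ((Nat.le_ceil U).trans hu)⟩
  obtain ⟨n, c₀, hc₀⟩ := nonempty_interior_of_iUnion_of_closed hC_closed hC_cover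
  obtain ⟨r, hr, hball⟩ := Metric.isOpen_iff.1 isOpen_interior c₀ hc₀
  refine ⟨r, hr, eventually_atTop.2 ⟨n + c₀, fun u hu e he => ?_⟩⟩
  -- both `c₀` and `c₀ + e` lie in `C n`: compare the two increments from `u - c₀`
  have he' : c₀ + e ∈ Metric.ball c₀ r := by simpa [Real.dist_eq] using he
  have h₁ := interior_subset (hball he') (u - c₀) (by linarith)
  have h₂ := interior_subset (hball (Metric.mem_ball_self hr)) (u - c₀) (by linarith)
  calc |K (u + e) - K u|
      = |(K (u - c₀ + (c₀ + e)) - K (u - c₀)) - (K (u - c₀ + c₀) - K (u - c₀))| := by ring_nf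
    _ ≤ ε / 2 + ε / 2 := (abs_sub _ _).trans (add_le_add h₁ h₂)
    _ = ε := add_halves ε

theorem tendstoLocallyUniformly_add_sub {K : ℝ → ℝ} (hK : Continuous K)
    (hlim : ∀ c, Tendsto (fun u => K (u + c) - K u) atTop (𝓝 0)) :
    TendstoLocallyUniformly (fun u c => K (u + c) - K u) 0 atTop := by
  refine Metric.tendstoLocallyUniformly_iff.2 fun ε hε d => ?_
  obtain ⟨r, hr, hnear⟩ := exists_pos_eventually_abs_add_sub_le hK hlim (half_pos hε)
  refine ⟨Metric.ball d r, Metric.ball_mem_nhds d hr, ?_⟩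
  have hshift := (tendsto_atTop_add_const_right _ d tendsto_id).eventually hnear
  have hd := (hlim d).eventually (Metric.ball_mem_nhds 0 (half_pos hε))
  filter_upwards [hshift, hd] with u h₁ h₂ c hc
  rw [Metric.mem_ball, Real.dist_eq] at hc
  rw [Real.dist_eq, sub_zero] at h₂
  rw [Pi.zero_apply, dist_zero_left, Real.norm_eq_abs]
  calc |K (u + c) - K u| = |(K (u + d + (c - d)) - K (u + d)) + (K (u + d) - K u)| := by
        ring_nf
    _ ≤ ε / 2 + |K (u + d) - K u| := (abs_add_le _ _).trans (add_le_add_left (h₁ _ hc) _)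
    _ < ε := by linarith

lemma le_add_of_forall_Icc_zero_one {H : ℝ → ℝ} {U η : ℝ}
    (hstep : ∀ v ≥ U, ∀ c ∈ Icc (0 : ℝ) 1, H (v + c) ≤ H v + η)
    (hone : ∀ v ≥ U, H (v + 1) ≤ H v) :
    ∀ v ≥ U, ∀ c ≥ 0, H (v + c) ≤ H v + η := by
  suffices h : ∀ n : ℕ, ∀ v ≥ U, ∀ c ∈ Icc (0 : ℝ) (n + 1), H (v + c) ≤ H v + η from
    fun v hv c hc => h ⌈c⌉₊ v hv c ⟨hc, (Nat.le_ceil c).trans (le_add_of_nonneg_right zero_le_one)⟩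
  intro n
  induction n with
  | zero => simpa using hstep
  | succ n ih =>
    intro v hv c hc
    rcases le_or_gt c 1 with hc1 | hc1
    · exact hstep v hv c ⟨hc.1, hc1⟩
    · push_cast at hc
      calc H (v + c) = H (v + 1 + (c - 1)) := by ring_nf
        _ ≤ H (v + 1) + η := ih (v + 1) (by linarith) (c - 1) ⟨by linarith, by linarith [hc.2]⟩
        _ ≤ H v + η := by linarith [hone v hv]

lemma RVat0.tendsto_log_sub_comp_exp_neg {f : ℝ → ℝ} {β : ℝ} (hpos : ∀ y, 0 < y → 0 < f y)
    (hRV : RVat0 f β) (c : ℝ) :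
    Tendsto (fun u => log (f (exp (-(u + c)))) - log (f (exp (-u)))) atTop (𝓝 (-(β * c))) := by
  have hexp : Tendsto (fun u => exp (-u)) atTop (𝓝[>] 0) :=
    tendsto_nhdsWithin_iff.2 ⟨tendsto_exp_neg_atTop_nhds_zero, .of_forall fun u => exp_pos _⟩
  have hlog := ((hRV _ (exp_pos (-c))).comp hexp).log (rpow_pos_of_pos (exp_pos _) β).ne'
  rw [log_rpow (exp_pos _), log_exp, mul_neg] at hlog
  refine hlog.congr fun u => ?_
  rw [Function.comp_apply, ← exp_add, log_div (hpos _ (exp_pos _)).ne' (hpos _ (exp_pos _)).ne',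
    neg_add_rev]

theorem RVat0.eventually_le_one_add_mul {f : ℝ → ℝ} {β δ : ℝ} (hf : ContinuousOn f (Ioi 0))
    (hpos : ∀ y, 0 < y → 0 < f y) (hβ : 0 < β) (hRV : RVat0 f β) (hδ : 0 < δ) :
    ∀ᶠ b in 𝓝[>] 0, ∀ a ∈ Ioc 0 b, f a ≤ (1 + δ) * f b := by
  set H : ℝ → ℝ := fun u => log (f (exp (-u)))
  set η := min (log (1 + δ)) β
  have hη : 0 < η := lt_min (log_pos (by linarith)) hβ
  have hK : Continuous fun u => H u + β * u :=
    ((hf.comp_continuous (by fun_prop) fun u => exp_pos (-u)).log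
      fun u => (hpos _ (exp_pos _)).ne').add (by fun_prop)
  have hunif := tendstoLocallyUniformly_iff_forall_isCompact.1
    (tendstoLocallyUniformly_add_sub hK fun c => by
      simpa using ((hRV.tendsto_log_sub_comp_exp_neg hpos c).add_const (β * c)).congr fun u => by
        simp only [H]; ring) (Icc 0 1) isCompact_Icc
  obtain ⟨U, hU⟩ := eventually_atTop.1 (Metric.tendstoUniformlyOn_iff.1 hunif η hη)
  have hHU : ∀ v ≥ U, ∀ c ∈ Icc (0 : ℝ) 1, H (v + c) ≤ H v + η - β * c := fun v hv c hc => by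
    have := hU v hv c hc
    rw [Pi.zero_apply, dist_zero_left, Real.norm_eq_abs, abs_lt] at this
    linarith [this.2]
  have hηδ : η ≤ log (1 + δ) := min_le_left _ _
  have hηβ : η ≤ β := min_le_right _ _
  have hchain := le_add_of_forall_Icc_zero_one (η := log (1 + δ))
    (fun v hv c hc => (hHU v hv c hc).trans (by nlinarith [hc.1]))
    (fun v hv => (hHU v hv 1 (right_mem_Icc.2 zero_le_one)).trans (by linarith))
  filter_upwards [Ioo_mem_nhdsGT (exp_pos (-U))] with b hb a ha
  have hab := hchain (-log b) (by linarith [(log_lt_iff_lt_exp hb.1).2 hb.2])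
    (log b - log a) (sub_nonneg.2 (log_le_log ha.1 ha.2))
  simp only [H, neg_add_rev, neg_sub, neg_neg, sub_add_cancel, exp_log ha.1, exp_log hb.1] at hab
  rwa [add_comm, ← log_mul (by linarith) (hpos b hb.1).ne', log_le_log_iff (hpos a ha.1)
    (mul_pos (by linarith) (hpos b hb.1))] at hab

lemma eventually_forall_ge_half {p : ℝ → Prop} (h : ∀ᶠ s in atTop, p s) :
    ∀ᶠ t in atTop, ∀ s ≥ t / 2, p s :=
  (tendsto_id.atTop_div_const two_pos).eventually (eventually_forall_ge_atTop.2 h)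

lemma RVatInf.tendsto_comp_mul_div_of_isEquivalent {g γ : ℝ → ℝ} {c : ℝ} (hg : RVatInf g 0)
    (hgγ : g ~[atTop] γ) (hc : 0 < c) : Tendsto (fun t => γ (c * t) / γ t) atTop (𝓝 1) := by
  have hgc : Tendsto (fun t => g (c * t) / g t) atTop (𝓝 1) := by
    simpa only [rpow_zero] using hg c hc
  exact ((hgγ.comp_tendsto (tendsto_id.const_mul_atTop hc)).div hgγ).tendsto_nhds hgc

lemma eventually_forall_Icc_half_le_and_le {g γ : ℝ → ℝ} {δ : ℝ}
    (hγ_pos : ∀ t, 0 < t → 0 < γ t) (hγ_anti : AntitoneOn γ (Ioi 0))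
    (hgγ : Tendsto (fun t => g t / γ t) atTop (𝓝 1))
    (hhalf : Tendsto (fun t => γ (t / 2) / γ t) atTop (𝓝 1)) (hδ : 0 < δ) (hδ1 : δ ≤ 1) :
    ∀ᶠ t in atTop, ∀ s ∈ Icc (t / 2) t, (1 - δ) * g t ≤ g s ∧ g s ≤ (1 + δ) * g t := by
  have hr : ∀ᶠ t in atTop, (1 - δ / 8) * γ t ≤ g t ∧ g t ≤ (1 + δ / 8) * γ t := by
    have hI : Icc (1 - δ / 8) (1 + δ / 8) ∈ 𝓝 (1 : ℝ) := Icc_mem_nhds (by linarith) (by linarith)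
    filter_upwards [hgγ.eventually hI, eventually_gt_atTop 0] with t ht ht0
    rwa [le_div_iff₀ (hγ_pos t ht0), div_le_iff₀ (hγ_pos t ht0)] at ht
  have hq : ∀ᶠ t in atTop, γ (t / 2) ≤ (1 + δ / 8) * γ t := by
    filter_upwards [hhalf.eventually (eventually_le_nhds (by linarith : 1 < 1 + δ / 8)),
      eventually_gt_atTop 0] with t ht ht0
    rwa [div_le_iff₀ (hγ_pos t ht0)] at ht
  filter_upwards [eventually_forall_ge_half hr, hq, eventually_gt_atTop 0] with t hrt hqt ht s hs
  have hs0 : 0 < s := by linarith [hs.1]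
  have hγt := hγ_pos t ht
  obtain ⟨hs₁, hs₂⟩ := hrt s hs.1
  obtain ⟨ht₁, ht₂⟩ := hrt t (by linarith)
  have hγts : γ t ≤ γ s := hγ_anti hs0 ht hs.2
  have hγst : γ s ≤ γ (t / 2) := hγ_anti (half_pos ht) hs0 hs.1
  constructor
  · calc (1 - δ) * g t ≤ (1 - δ) * ((1 + δ / 8) * γ t) :=
          mul_le_mul_of_nonneg_left ht₂ (by linarith)
      _ ≤ (1 - δ / 8) * γ t := by nlinarith
      _ ≤ (1 - δ / 8) * γ s := mul_le_mul_of_nonneg_left hγts (by linarith)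
      _ ≤ g s := hs₁
  · calc g s ≤ (1 + δ / 8) * γ (t / 2) :=
          hs₂.trans (mul_le_mul_of_nonneg_left hγst (by linarith))
      _ ≤ (1 + δ / 8) * ((1 + δ / 8) * γ t) := mul_le_mul_of_nonneg_left hqt (by linarith)
      _ ≤ (1 + δ) * ((1 - δ / 8) * γ t) := by nlinarith
      _ ≤ (1 + δ) * g t := mul_le_mul_of_nonneg_left ht₁ (by linarith)

lemma tendsto_mul_atTop_of_antitoneOn {γ : ℝ → ℝ} (hγ_pos : ∀ t, 0 < t → 0 < γ t)
    (hγ_anti : AntitoneOn γ (Ioi 0)) (hhalf : Tendsto (fun t => γ (t / 2) / γ t) atTop (𝓝 1)) :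
    Tendsto (fun t => t * γ t) atTop atTop := by
  set v : ℕ → ℝ := fun n => 2 ^ n * γ (2 ^ n)
  have hv : Tendsto v atTop atTop := by
    have h2n : Tendsto (fun n : ℕ => (2 : ℝ) ^ (n + 1)) atTop atTop :=
      (tendsto_pow_atTop_atTop_of_one_lt one_lt_two).comp (tendsto_add_atTop_nat 1)
    obtain ⟨N, hN⟩ := eventually_atTop.1
      ((hhalf.comp h2n).eventually (eventually_le_nhds (by norm_num : (1 : ℝ) < 4 / 3)))
    rw [← tendsto_add_atTop_iff_nat N]
    refine tendsto_atTop_of_geom_le (c := 3 / 2)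
      (mul_pos (by positivity) (hγ_pos _ (by positivity))) (by norm_num) fun n => ?_
    have h := hN (n + N) le_add_self
    rw [Function.comp_apply, pow_succ, mul_div_cancel_right₀ _ two_ne_zero,
      div_le_iff₀ (hγ_pos _ (by positivity))] at h
    simp only [v, add_right_comm n 1 N, pow_succ]
    nlinarith [pow_pos (two_pos : (0 : ℝ) < 2) (n + N)]
  rw [tendsto_atTop]
  intro C
  obtain ⟨n₀, hn₀⟩ := eventually_atTop.1 (hv.eventually_ge_atTop (2 * C))
  filter_upwards [eventually_ge_atTop ((2 : ℝ) ^ n₀)] with t ht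
  obtain ⟨n, hn, hn'⟩ := exists_nat_pow_near ((one_le_pow₀ one_le_two).trans ht) one_lt_two
  have ht0 : 0 < t := (pow_pos two_pos n).trans_le hn
  have hn₀n : n₀ ≤ n + 1 := ((pow_lt_pow_iff_right₀ one_lt_two).1 (ht.trans_lt hn')).le
  calc C ≤ v (n + 1) / 2 := by linarith [hn₀ (n + 1) hn₀n]
    _ = 2 ^ n * γ (2 ^ (n + 1)) := by simp only [v, pow_succ]; ring
    _ ≤ t * γ t := mul_le_mul hn (hγ_anti ht0 (mem_Ioi.2 (by positivity)) hn'.le)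
      (hγ_pos _ (by positivity)).le ht0.le

lemma mul_sub_le_sub_of_lt_deriv {x x' : ℝ → ℝ} {a b w : ℝ} (hab : a ≤ b) (hw : 0 ≤ w)
    (hx : ∀ s ∈ Icc a b, HasDerivAt x (x' s) s) (hlt : ∀ s ∈ Ioc a b, x s ≤ x b → w < x' s) :
    w * (b - a) ≤ x b - x a := by
  -- run time backwards from `b` and compare with the line of slope `-w` through `(b, x b)`
  have hy : ∀ σ ∈ Icc 0 (b - a), HasDerivAt (fun σ => x (b - σ)) (-x' (b - σ)) σ := fun σ hσ =>
    (hx (b - σ) ⟨by linarith [hσ.2], by linarith [hσ.1]⟩).comp_const_sub b σ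
  have key := image_le_of_deriv_right_lt_deriv_boundary (f := fun σ => x (b - σ))
    (B := fun σ => x b - w * σ) (B' := fun _ => -w)
    (fun σ hσ => (hy σ hσ).continuousAt.continuousWithinAt)
    (fun σ hσ => (hy σ (Ico_subset_Icc_self hσ)).hasDerivWithinAt) (by simp)
    (fun σ => by simpa using ((hasDerivAt_id σ).const_mul w).const_sub (x b))
    (fun σ hσ hcontact => by
      have := hlt (b - σ) ⟨by linarith [hσ.2], by linarith [hσ.1]⟩
        (by rw [hcontact]; nlinarith [hσ.1])
      linarith)
    (right_mem_Icc.2 (sub_nonneg.2 hab))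
  simp only [sub_sub_cancel] at key
  linarith

lemma one_sub_mul_le_of_window {f g x : ℝ → ℝ} {ε t : ℝ} (ht : 0 < t) (hε : 0 < ε) (hε1 : ε ≤ 1)
    (hf_nonpos : ∀ y ≤ 0, f y ≤ 0)
    (hx : ∀ s ∈ Icc (t / 2) t, HasDerivAt x (-f (x s) + g s) s)
    (hx1 : ∀ s ∈ Icc (t / 2) t, |x s| < 1)
    (hf_mono : ∀ s ∈ Icc (t / 2) t, 0 < x s → ∀ a ∈ Ioc 0 (x s), f a ≤ (1 + ε / 8) * f (x s))
    (hg : ∀ s ∈ Icc (t / 2) t, (1 - ε / 8) * g t ≤ g s ∧ g s ≤ (1 + ε / 8) * g t)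
    (htg : 8 ≤ ε * (t * g t)) :
    (1 - ε) * g t ≤ f (x t) := by
  by_contra! hlt
  have hgt : 0 < g t := pos_of_mul_pos_right (pos_of_mul_pos_right (by linarith) hε.le) ht.le
  have htt : t ∈ Icc (t / 2) t := right_mem_Icc.2 (by linarith)
  have hdrift : ∀ s ∈ Ioc (t / 2) t, x s ≤ x t → ε / 2 * g t < -f (x s) + g s := by
    intro s hs hxs
    have hgs := (hg s (Ioc_subset_Icc_self hs)).1
    rcases le_or_gt (x s) 0 with h0 | h0
    · nlinarith [hf_nonpos _ h0]
    · have hfs := hf_mono t htt (h0.trans_le hxs) (x s) ⟨h0, hxs⟩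
      nlinarith [mul_lt_mul_of_pos_left hlt (by positivity : (0 : ℝ) < 1 + ε / 8),
        mul_pos (mul_pos hε hε) hgt]
  have hrise := mul_sub_le_sub_of_lt_deriv (by linarith) (by positivity) hx hdrift
  have h₁ := (abs_lt.1 (hx1 t htt)).2
  have h₂ := (abs_lt.1 (hx1 (t / 2) (left_mem_Icc.2 (by linarith)))).1
  nlinarith

lemma le_one_add_mul_of_window {f g x : ℝ → ℝ} {ε t : ℝ} (ht : 0 < t) (hε : 0 < ε) (hε1 : ε ≤ 1)
    (hf_nonpos : ∀ y ≤ 0, f y ≤ 0)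
    (hx : ∀ s ∈ Icc (t / 2) t, HasDerivAt x (-f (x s) + g s) s)
    (hx1 : ∀ s ∈ Icc (t / 2) t, |x s| < 1)
    (hf_mono : ∀ s ∈ Icc (t / 2) t, 0 < x s → ∀ a ∈ Ioc 0 (x s), f a ≤ (1 + ε / 8) * f (x s))
    (hg : ∀ s ∈ Icc (t / 2) t, (1 - ε / 8) * g t ≤ g s ∧ g s ≤ (1 + ε / 8) * g t)
    (htg : 8 ≤ ε * (t * g t)) :
    f (x t) ≤ (1 + ε) * g t := by
  by_contra! hlt
  have hgt : 0 < g t := pos_of_mul_pos_right (pos_of_mul_pos_right (by linarith) hε.le) ht.le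
  have hxt : 0 < x t := by
    by_contra! h
    nlinarith [hf_nonpos _ h]
  have hdrift : ∀ s ∈ Ioc (t / 2) t, x t ≤ x s → -f (x s) + g s < -(ε / 2 * g t) := by
    intro s hs hxs
    have hs' := Ioc_subset_Icc_self hs
    have hgs := (hg s hs').2
    have hft := hf_mono s hs' (hxt.trans_le hxs) (x t) ⟨hxt, hxs⟩
    nlinarith [mul_le_mul_of_nonneg_left hgs (by positivity : (0 : ℝ) ≤ 1 + ε / 8),
      mul_pos (mul_pos hε hε) hgt]
  have hfall := mul_sub_le_sub_of_lt_deriv (x := fun s => -x s)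
    (x' := fun s => -(-f (x s) + g s)) (w := ε / 2 * g t) (by linarith) (by positivity)
    (fun s hs => (hx s hs).neg) fun s hs h => by linarith [hdrift s hs (neg_le_neg_iff.1 h)]
  have h₂ := (abs_lt.1 (hx1 (t / 2) (left_mem_Icc.2 (by linarith)))).2
  nlinarith

lemma eventually_one_sub_mul_le_and_le_one_add_mul {f g x : ℝ → ℝ} {ε : ℝ} (hε : 0 < ε)
    (hε1 : ε ≤ 1) (hf_nonpos : ∀ y ≤ 0, f y ≤ 0)
    (hode : ∀ t, 0 < t → HasDerivAt x (-f (x t) + g t) t) (hx_to0 : Tendsto x atTop (𝓝 0))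
    (hf_mono : ∀ᶠ b in 𝓝[>] 0, ∀ a ∈ Ioc 0 b, f a ≤ (1 + ε / 8) * f b)
    (hg : ∀ᶠ t in atTop, ∀ s ∈ Icc (t / 2) t, (1 - ε / 8) * g t ≤ g s ∧ g s ≤ (1 + ε / 8) * g t)
    (htg : Tendsto (fun t => t * g t) atTop atTop) :
    ∀ᶠ t in atTop, (1 - ε) * g t ≤ f (x t) ∧ f (x t) ≤ (1 + ε) * g t := by
  have hx_small := hx_to0.eventually
    ((show ∀ᶠ y in 𝓝 (0 : ℝ), y ∈ Ioo (-1) 1 from Ioo_mem_nhds (by norm_num) one_pos).and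
      (eventually_nhdsWithin_iff.1 hf_mono))
  filter_upwards [eventually_forall_ge_half hx_small, hg, htg.eventually_ge_atTop (8 / ε),
    eventually_gt_atTop 0] with t hxt hgt htgt ht
  have hwin : ∀ s ∈ Icc (t / 2) t, HasDerivAt x (-f (x s) + g s) s :=
    fun s hs => hode s (by linarith [hs.1])
  have hx1 : ∀ s ∈ Icc (t / 2) t, |x s| < 1 := fun s hs => abs_lt.2 (hxt s hs.1).1
  have hmono : ∀ s ∈ Icc (t / 2) t, 0 < x s → ∀ a ∈ Ioc 0 (x s), f a ≤ (1 + ε / 8) * f (x s) :=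
    fun s hs => (hxt s hs.1).2
  have htg' : 8 ≤ ε * (t * g t) := by rwa [div_le_iff₀' hε] at htgt
  exact ⟨one_sub_mul_le_of_window ht hε hε1 hf_nonpos hwin hx1 hmono hgt htg',
    le_one_add_mul_of_window ht hε hε1 hf_nonpos hwin hx1 hmono hgt htg'⟩

theorem stmt_6_general
    (f g : ℝ → ℝ) (ξ : ℝ) (x : ℝ → ℝ)
    (hf_cont : Continuous f)
    (hf_sign : ∀ y : ℝ, y ≠ 0 → 0 < y * f y) (hf_zero : f 0 = 0)
    (hg_pos : ∀ t : ℝ, 0 < t → 0 < g t)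
    (hx : IsSol f g ξ x)
    (β : ℝ) (hβ : 1 < β) (hfRV : RVat0 f β)
    (hgSV : RVatInf g 0)
    (γ₁ : ℝ → ℝ) (hγ₁_pos : ∀ t : ℝ, 0 < t → 0 < γ₁ t)
    (hγ₁_anti : StrictAntiOn γ₁ (Set.Ioi 0))
    (hgγ₁ : Tendsto (fun t => g t / γ₁ t) atTop (nhds 1))
    (hx_to0 : Tendsto x atTop (nhds 0)) :
    Tendsto (fun t => f (x t) / g t) atTop (nhds 1) := by
  obtain ⟨-, -, hode⟩ := hx
  have hf_pos : ∀ y, 0 < y → 0 < f y := fun y hy =>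
    pos_of_mul_pos_right (hf_sign y hy.ne') hy.le
  have hf_nonpos : ∀ y ≤ 0, f y ≤ 0 := fun y hy => hy.eq_or_lt.elim (fun h => h ▸ hf_zero.le)
    fun h => (neg_of_mul_pos_right (hf_sign y h.ne) h.le).le
  have hgγ : g ~[atTop] γ₁ := (isEquivalent_iff_tendsto_one
    ((eventually_gt_atTop 0).mono fun t ht => (hγ₁_pos t ht).ne')).2 hgγ₁
  have hhalf : Tendsto (fun t => γ₁ (t / 2) / γ₁ t) atTop (𝓝 1) := by
    simpa only [inv_mul_eq_div] using
      hgSV.tendsto_comp_mul_div_of_isEquivalent hgγ (inv_pos.2 two_pos)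
  have htg : Tendsto (fun t => t * g t) atTop atTop :=
    (IsEquivalent.refl.mul hgγ.symm).tendsto_atTop
      (tendsto_mul_atTop_of_antitoneOn hγ₁_pos hγ₁_anti.antitoneOn hhalf)
  refine Metric.nhds_basis_closedBall.tendsto_right_iff.2 fun ε hε => ?_
  have hδ : 0 < min ε 1 := lt_min hε one_pos
  filter_upwards [eventually_one_sub_mul_le_and_le_one_add_mul hδ (min_le_right ε 1) hf_nonpos
      hode hx_to0 (hfRV.eventually_le_one_add_mul hf_cont.continuousOn hf_pos (by linarith)
        (by positivity))
      (eventually_forall_Icc_half_le_and_le hγ₁_pos hγ₁_anti.antitoneOn hgγ₁ hhalf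
        (by positivity) (by linarith [min_le_right ε 1])) htg,
    eventually_gt_atTop 0] with t ⟨hlow, hup⟩ ht
  have hgt := hg_pos t ht
  rw [Real.closedBall_eq_Icc, mem_Icc, le_div_iff₀ hgt, div_le_iff₀ hgt]
  constructor <;> nlinarith [min_le_left ε 1]

/-- Theorem 2.5(ii) (Theorem `fxtgt1`, part (ii)): under the base hypotheses, if
`g(t)/(f∘F⁻¹)(t) → +∞`, `f ∈ RV₀(β)` with `β > 1`, `g` is slowly varying at infinity
and asymptotic to a positive decreasing function `γ₁` on `(0,∞)`, and the solution `x`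
of `x' = -f(x) + g`, `x(0) = ξ > 0`, satisfies `x(t) → 0`, then `f(x(t))/g(t) → 1`. -/
theorem stmt_6
    (f g F Finv : ℝ → ℝ) (ξ : ℝ) (x : ℝ → ℝ)
    (hf_cont : Continuous f) (hf_lip : LocallyLipschitz f)
    (hf_sign : ∀ y : ℝ, y ≠ 0 → 0 < y * f y) (hf_zero : f 0 = 0)
    (hg_cont : ContinuousOn g (Set.Ici 0)) (hg_pos : ∀ t : ℝ, 0 < t → 0 < g t)
    (hF : ∀ y : ℝ, 0 < y → F y = ∫ u in y..(1:ℝ), 1 / f u)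
    (hF_top : Tendsto F (nhdsWithin 0 (Set.Ioi 0)) atTop)
    (hF_anti : StrictAntiOn F (Set.Ioi 0))
    (hFinv : ∀ t : ℝ, 0 ≤ t → 0 < Finv t ∧ F (Finv t) = t)
    (hFinv_to0 : Tendsto Finv atTop (nhds 0))
    (hξ : 0 < ξ) (hx : IsSol f g ξ x)
    (hLinf : Tendsto (fun t => g t / f (Finv t)) atTop atTop)
    (β : ℝ) (hβ : 1 < β) (hfRV : RVat0 f β)
    (hgSV : RVatInf g 0)
    (γ₁ : ℝ → ℝ) (hγ₁_pos : ∀ t : ℝ, 0 < t → 0 < γ₁ t)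
    (hγ₁_anti : StrictAntiOn γ₁ (Set.Ioi 0))
    (hgγ₁ : Tendsto (fun t => g t / γ₁ t) atTop (nhds 1))
    (hx_to0 : Tendsto x atTop (nhds 0)) :
    Tendsto (fun t => f (x t) / g t) atTop (nhds 1) :=
  stmt_6_general f g ξ x hf_cont hf_sign hf_zero hg_pos hx β hβ hfRV hgSV γ₁ hγ₁_pos hγ₁_anti hgγ₁
    hx_to0
end
end

section
/- Let f : (0,∞) → (0,∞) be continuous with F(x) = ∫_x^1 du/f(u) satisfying F(x) → +∞ as x → 0⁺, so that F is strictly decreasing with inverse F⁻¹ and F⁻¹(t) → 0 as t → ∞. If f∘F⁻¹ ∈ RV_∞(-1), then F⁻¹ ∈ RV_∞(0), i.e., F⁻¹ is slowly varying at infinity. -/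
/-!
Write `φ = F⁻¹` and `h = f ∘ F⁻¹`, so that `φ' = -h`. For `t > 0` and `M ≥ 1`,
`φ(t) > φ(t) - φ(tM) = t h(t) ∫₁ᴹ h(tu)/h(t) du`, and since `h ∈ RV_∞(-1)`,
Fatou's lemma bounds the liminf of the last integral from below by `∫₁ᴹ du/u = log M`.
Hence `t h(t)/φ(t) → 0`. This is `-t (log φ)'(t)`, so by the mean value theorem
`log φ(λt) - log φ(t) → 0`.
-/

open Filter Real Set Topology MeasureTheory

noncomputable section

theorem eventually_lt_integral_of_tendsto {ι α : Type*} [MeasurableSpace α] {μ : Measure α}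
    {l : Filter ι} [l.IsCountablyGenerated] {g : ι → α → ℝ} {G : α → ℝ}
    (hg_int : ∀ᶠ i in l, Integrable (g i) μ) (hg_nonneg : ∀ᶠ i in l, 0 ≤ᵐ[μ] g i)
    (hG : ∀ᵐ a ∂μ, Tendsto (g · a) l (𝓝 (G a))) (hG_int : Integrable G μ)
    (hG_nonneg : 0 ≤ᵐ[μ] G) {c : ℝ} (hc : c < ∫ a, G a ∂μ) :
    ∀ᶠ i in l, c < ∫ a, g i a ∂μ := by
  classical
  rcases l.eq_or_neBot with rfl | hl
  · exact eventually_bot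
  rcases lt_or_ge c 0 with hc0 | hc0
  · filter_upwards [hg_nonneg] with i hi using hc0.trans_le (integral_nonneg_of_ae hi)
  by_contra hfreq
  rw [not_eventually] at hfreq
  -- Fatou's lemma needs every member of the family to be measurable, not just eventually.
  set g' : ι → α → ENNReal :=
    fun i a => if Integrable (g i) μ then ENNReal.ofReal (g i a) else 0
  have hg'_eq : ∀ᶠ i in l, g' i = fun a => ENNReal.ofReal (g i a) :=
    hg_int.mono fun i hi => by simp only [g', if_pos hi]
  have hlim : ∀ᵐ a ∂μ, liminf (g' · a) l = ENNReal.ofReal (G a) :=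
    hG.mono fun a ha => (((ENNReal.continuous_ofReal.tendsto _).comp ha).congr'
      (hg'_eq.mono fun i hi => by simp [hi])).liminf_eq
  have hint : ∀ᶠ i in l, ∫⁻ a, g' i a ∂μ = ENNReal.ofReal (∫ a, g i a ∂μ) := by
    filter_upwards [hg'_eq, hg_int, hg_nonneg] with i hi hint hnn
    rw [hi, ofReal_integral_eq_lintegral_ofReal hint hnn]
  have hmeas : ∀ i, AEMeasurable (g' i) μ := fun i => by
    by_cases hi : Integrable (g i) μ
    · simpa [g', hi] using hi.aemeasurable.ennreal_ofReal
    · simp [g', hi]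
  have : ENNReal.ofReal (∫ a, G a ∂μ) ≤ ENNReal.ofReal c := calc
    _ = ∫⁻ a, liminf (g' · a) l ∂μ := by
      rw [ofReal_integral_eq_lintegral_ofReal hG_int hG_nonneg, lintegral_congr_ae hlim]
    _ ≤ liminf (fun i => ∫⁻ a, g' i a ∂μ) l := lintegral_liminf_le' hmeas
    _ = liminf (fun i => ENNReal.ofReal (∫ a, g i a ∂μ)) l := liminf_congr hint
    _ ≤ ENNReal.ofReal c := liminf_le_of_frequently_le'
      (hfreq.mono fun i hi => ENNReal.ofReal_le_ofReal (not_lt.1 hi))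
  exact ((ENNReal.ofReal_le_ofReal_iff hc0).1 this).not_gt hc

theorem RVatInf.eventually_lt_integral_comp_mul_div {h : ℝ → ℝ} {α : ℝ}
    (hRV : RVatInf h α) (h_pos : ∀ t, 0 < t → 0 < h t) (h_cont : ContinuousOn h (Ioi 0))
    {a b c : ℝ} (ha : 0 < a) (hab : a ≤ b) (hc : c < ∫ u in a..b, u ^ α) :
    ∀ᶠ t in atTop, c < ∫ u in a..b, h (t * u) / h t := by
  have hIcc : Icc a b ⊆ Ioi 0 := fun u hu => ha.trans_le hu.1
  rw [intervalIntegral.integral_of_le hab] at hc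
  have hlim : ∀ᵐ u ∂volume.restrict (Ioc a b),
      Tendsto (fun t => h (t * u) / h t) atTop (𝓝 (u ^ α)) :=
    ae_restrict_of_forall_mem measurableSet_Ioc fun u hu =>
      (hRV u (ha.trans hu.1)).congr fun t => by rw [mul_comm]
  have hpow : ContinuousOn (fun u : ℝ => u ^ α) (Icc a b) :=
    continuousOn_id.rpow_const fun u hu => Or.inl (hIcc hu).ne'
  have hint : ∀ᶠ t in atTop, IntegrableOn (fun u => h (t * u) / h t) (Ioc a b) := by
    filter_upwards [eventually_gt_atTop 0] with t ht
    have : ContinuousOn (fun u => h (t * u) / h t) (Icc a b) :=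
      (h_cont.comp (continuousOn_const.mul continuousOn_id)
        fun u hu => mul_pos ht (hIcc hu)).div_const _
    exact this.integrableOn_Icc.mono_set Ioc_subset_Icc_self
  have hnonneg :
      ∀ᶠ t in atTop, 0 ≤ᵐ[volume.restrict (Ioc a b)] fun u => h (t * u) / h t := by
    filter_upwards [eventually_gt_atTop 0] with t ht
    exact ae_restrict_of_forall_mem measurableSet_Ioc fun u hu =>
      (div_pos (h_pos _ (mul_pos ht (ha.trans hu.1))) (h_pos t ht)).le
  filter_upwards [eventually_lt_integral_of_tendsto hint hnonneg hlim
    (hpow.integrableOn_Icc.mono_set Ioc_subset_Icc_self)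
    (ae_restrict_of_forall_mem measurableSet_Ioc fun u hu =>
      (rpow_pos_of_pos (ha.trans hu.1) α).le) hc]
    with t ht
  rwa [intervalIntegral.integral_of_le hab]

theorem tendsto_sub_comp_mul_of_tendsto_mul_deriv_of_one_le {g g' : ℝ → ℝ}
    (hg : ∀ t, 0 < t → HasDerivAt g (g' t) t) (hg' : Tendsto (fun t => t * g' t) atTop (𝓝 0))
    {c : ℝ} (hc : 1 ≤ c) : Tendsto (fun t => g (c * t) - g t) atTop (𝓝 0) := by
  rw [Metric.tendsto_nhds]
  intro ε hε
  have hc0 : 0 < c := one_pos.trans_le hc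
  obtain ⟨T, hT⟩ := eventually_atTop.1 (Metric.tendsto_nhds.1 hg' (ε / c) (by positivity))
  filter_upwards [eventually_ge_atTop T, eventually_gt_atTop 0] with t hTt ht
  have hbound : ∀ x ∈ Ico t (c * t), ‖g' x‖ ≤ ε / c / t := fun x hx => by
    have hx0 : 0 < x := ht.trans_le hx.1
    have hxT := hT x (hTt.trans hx.1)
    rw [Real.dist_eq, sub_zero, abs_mul, abs_of_pos hx0] at hxT
    rw [Real.norm_eq_abs, le_div_iff₀ ht]
    nlinarith [abs_nonneg (g' x), hx.1]
  have hmvt := norm_image_sub_le_of_norm_deriv_le_segment'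
    (fun x hx => (hg x (ht.trans_le hx.1)).hasDerivWithinAt) hbound (c * t)
    ⟨le_mul_of_one_le_left ht.le hc, le_rfl⟩
  rw [dist_zero_right]
  calc ‖g (c * t) - g t‖ ≤ ε / c / t * (c * t - t) := hmvt
    _ = ε - ε / c := by field_simp
    _ < ε := sub_lt_self ε (by positivity)

theorem tendsto_sub_comp_mul_of_tendsto_mul_deriv {g g' : ℝ → ℝ}
    (hg : ∀ t, 0 < t → HasDerivAt g (g' t) t) (hg' : Tendsto (fun t => t * g' t) atTop (𝓝 0))
    {c : ℝ} (hc : 0 < c) : Tendsto (fun t => g (c * t) - g t) atTop (𝓝 0) := by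
  rcases le_or_gt 1 c with h1 | h1
  · exact tendsto_sub_comp_mul_of_tendsto_mul_deriv_of_one_le hg hg' h1
  · have := (tendsto_sub_comp_mul_of_tendsto_mul_deriv_of_one_le hg hg'
      (one_le_inv_iff₀.2 ⟨hc, h1.le⟩)).comp (tendsto_id.const_mul_atTop hc)
    simpa [Function.comp_def, inv_mul_cancel_left₀ hc.ne'] using this.neg

section Antiderivative

variable {φ h : ℝ → ℝ} (hφ_pos : ∀ t, 0 < t → 0 < φ t)
  (hφ' : ∀ t, 0 < t → HasDerivAt φ (-h t) t) (h_pos : ∀ t, 0 < t → 0 < h t)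
  (h_cont : ContinuousOn h (Ioi 0))
include hφ_pos hφ' h_pos h_cont

theorem integral_comp_mul_div_le {t M : ℝ} (ht : 0 < t) (hM : 1 ≤ M) :
    ∫ u in 1..M, h (t * u) / h t ≤ φ t / (t * h t) := by
  have htM : t ≤ t * M := le_mul_of_one_le_right ht.le hM
  have hIcc : uIcc t (t * M) ⊆ Ioi 0 := fun s hs => ht.trans_le (by simpa [htM] using hs.1)
  have hftc : ∫ s in t..t * M, h s = φ t - φ (t * M) := by
    have := intervalIntegral.integral_eq_sub_of_hasDerivAt (fun s hs => hφ' s (hIcc hs))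
      ((h_cont.mono hIcc).intervalIntegrable.neg)
    rw [intervalIntegral.integral_neg] at this
    linarith
  have hth : 0 < t * h t := mul_pos ht (h_pos t ht)
  calc ∫ u in 1..M, h (t * u) / h t = (∫ s in t..t * M, h s) / (t * h t) := by
        rw [intervalIntegral.integral_div, intervalIntegral.integral_comp_mul_left _ ht.ne',
          mul_one, smul_eq_mul]
        field_simp
    _ ≤ φ t / (t * h t) := by
        rw [hftc]
        gcongr
        linarith [hφ_pos (t * M) (ht.trans_le htM)]

theorem tendsto_mul_div_of_hasDerivAt_neg (hRV : RVatInf h (-1)) :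
    Tendsto (fun t => t * h t / φ t) atTop (𝓝 0) := by
  suffices Tendsto (fun t => φ t / (t * h t)) atTop atTop by
    exact this.inv_tendsto_atTop.congr fun t => inv_div _ _
  refine tendsto_atTop.2 fun C => ?_
  set M := exp (|C| + 1)
  have hM : 1 ≤ M := one_le_exp (by positivity)
  have hlog : C < ∫ u in 1..M, u ^ (-1 : ℝ) := by
    simp only [rpow_neg_one]
    rw [integral_inv_of_pos one_pos (exp_pos _), div_one, log_exp]
    linarith [le_abs_self C]
  filter_upwards [hRV.eventually_lt_integral_comp_mul_div h_pos h_cont one_pos hM hlog,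
    eventually_gt_atTop 0] with t hC ht
  exact (hC.trans_le (integral_comp_mul_div_le hφ_pos hφ' h_pos h_cont ht hM)).le

theorem rVatInf_zero_of_hasDerivAt_neg (hRV : RVatInf h (-1)) : RVatInf φ 0 := by
  intro c hc
  have hlog : Tendsto (fun t => log (φ (c * t)) - log (φ t)) atTop (𝓝 0) := by
    refine tendsto_sub_comp_mul_of_tendsto_mul_deriv (g' := fun t => -h t / φ t)
      (fun t ht => by simpa [neg_div] using (hφ' t ht).log (hφ_pos t ht).ne') ?_ hc
    simpa [mul_neg, neg_div, mul_div_assoc] using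
      (tendsto_mul_div_of_hasDerivAt_neg hφ_pos hφ' h_pos h_cont hRV).neg
  rw [rpow_zero]
  refine ((continuous_exp.tendsto 0).comp hlog).congr' ?_ |>.trans (by rw [exp_zero])
  filter_upwards [eventually_gt_atTop 0] with t ht
  rw [Function.comp_apply, exp_sub, exp_log (hφ_pos _ (mul_pos hc ht)), exp_log (hφ_pos t ht)]

end Antiderivative

theorem hasDerivAt_of_eq_integral_Ioi {F g : ℝ → ℝ} {a b : ℝ} (hb : a < b)
    (hg : ContinuousOn g (Ioi a)) (hF : ∀ y, a < y → F y = ∫ u in y..b, g u) {x : ℝ}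
    (hx : a < x) : HasDerivAt F (-g x) x := by
  have hsub : uIcc x b ⊆ Ioi a := fun u hu => (lt_min hx hb).trans_le hu.1
  exact (intervalIntegral.integral_hasDerivAt_left (hg.mono hsub).intervalIntegrable
    (hg.stronglyMeasurableAtFilter isOpen_Ioi x hx) (hg.continuousAt (Ioi_mem_nhds hx))
    ).congr_of_eventuallyEq (eventually_of_mem (Ioi_mem_nhds hx) hF)

theorem StrictAntiOn.strictAntiOn_of_rightInvOn {α β : Type*} [LinearOrder α] [LinearOrder β]
    {F : α → β} {g : β → α} {s : Set α} {u : Set β} (hF : StrictAntiOn F s)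
    (hmaps : MapsTo g u s) (hinv : RightInvOn g F u) : StrictAntiOn g u :=
  fun a ha b hb hab => (hF.lt_iff_gt (hmaps ha) (hmaps hb)).1 (by rwa [hinv ha, hinv hb])

theorem continuousOn_Ioi_of_rightInvOn {F g : ℝ → ℝ} (hF : StrictAntiOn F (Ioi 0))
    (hmaps : MapsTo g (Ici 0) (Ioi 0)) (hinv : RightInvOn g F (Ici 0)) :
    ContinuousOn g (Ioi 0) := by
  intro t ht
  have hg : StrictAntiOn g (Ici 0) := hF.strictAntiOn_of_rightInvOn hmaps hinv
  have hsurj : Ioo 0 (g 0) ⊆ g '' Ioi 0 := fun y hy => by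
    have hFy : 0 < F y := by simpa [hinv self_mem_Ici] using hF hy.1 (hmaps self_mem_Ici) hy.2
    exact ⟨F y, hFy, hF.injOn (hmaps hFy.le) hy.1 (hinv hFy.le)⟩
  have hmono : MonotoneOn (-g) (Ioi 0) := fun a ha b hb hab =>
    neg_le_neg (hg.antitoneOn (Ioi_subset_Ici_self ha) (Ioi_subset_Ici_self hb) hab)
  have himage : (-g) '' Ioi 0 ∈ 𝓝 (-g t) := by
    refine mem_of_superset (Ioo_mem_nhds (neg_lt_neg (hg self_mem_Ici (Ioi_subset_Ici_self ht) ht))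
      (neg_neg_of_pos (hmaps (Ioi_subset_Ici_self ht)))) fun z hz => ?_
    obtain ⟨s, hs, hgs⟩ :=
      hsurj (show -z ∈ Ioo 0 (g 0) from ⟨by linarith [hz.2], by linarith [hz.1]⟩)
    exact ⟨s, hs, by simp [hgs]⟩
  have := continuousAt_of_monotoneOn_of_image_mem_nhds hmono (Ioi_mem_nhds ht) himage
  exact (by simpa only [neg_neg] using this.neg : ContinuousAt g t).continuousWithinAt

theorem stmt_9_general (f F Finv : ℝ → ℝ)
    (hf_pos : ∀ y : ℝ, 0 < y → 0 < f y)
    (hf_cont : ContinuousOn f (Set.Ioi 0))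
    (hF : ∀ y : ℝ, 0 < y → F y = ∫ u in y..(1:ℝ), 1 / f u)
    (hF_anti : StrictAntiOn F (Set.Ioi 0))
    (hFinv : ∀ t : ℝ, 0 ≤ t → 0 < Finv t ∧ F (Finv t) = t)
    (hfFinvRV : RVatInf (fun t => f (Finv t)) (-1)) :
    RVatInf Finv 0 := by
  have hFinv_pos : ∀ t, 0 < t → 0 < Finv t := fun t ht => (hFinv t ht.le).1
  have hFinv_cont : ContinuousOn Finv (Ioi 0) :=
    continuousOn_Ioi_of_rightInvOn hF_anti (fun t ht => (hFinv t ht).1) fun t ht => (hFinv t ht).2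
  have hF' : ∀ x, 0 < x → HasDerivAt F (-(1 / f x)) x :=
    fun x hx => hasDerivAt_of_eq_integral_Ioi one_pos
      (continuousOn_const.div hf_cont fun y hy => (hf_pos y hy).ne') hF hx
  have hFinv' : ∀ t, 0 < t → HasDerivAt Finv (-f (Finv t)) t := fun t ht => by
    have hloc : ∀ᶠ s in 𝓝 t, F (Finv s) = s :=
      eventually_of_mem (Ioi_mem_nhds ht) fun s hs => (hFinv s (le_of_lt hs)).2
    simpa using (hF' _ (hFinv_pos t ht)).of_local_left_inverse
      (hFinv_cont.continuousAt (Ioi_mem_nhds ht)) (by simp [(hf_pos _ (hFinv_pos t ht)).ne']) hloc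
  exact rVatInf_zero_of_hasDerivAt_neg hFinv_pos hFinv' (fun t ht => hf_pos _ (hFinv_pos t ht))
    (hf_cont.comp hFinv_cont fun t ht => hFinv_pos t ht) hfFinvRV

/-- Remark after Theorem 2.3: if `f : (0,∞) → (0,∞)` is continuous,
`F(x) = ∫_x^1 du/f(u)` tends to `+∞` as `x → 0⁺` (so that `F` is strictly decreasing
with inverse `F⁻¹` and `F⁻¹(t) → 0` as `t → ∞`), and `f∘F⁻¹ ∈ RV_∞(-1)`, then
`F⁻¹` is slowly varying at infinity. -/
theorem stmt_9 (f F Finv : ℝ → ℝ)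
    (hf_pos : ∀ y : ℝ, 0 < y → 0 < f y)
    (hf_cont : ContinuousOn f (Set.Ioi 0))
    (hF : ∀ y : ℝ, 0 < y → F y = ∫ u in y..(1:ℝ), 1 / f u)
    (hF_top : Tendsto F (nhdsWithin 0 (Set.Ioi 0)) atTop)
    (hF_anti : StrictAntiOn F (Set.Ioi 0))
    (hFinv : ∀ t : ℝ, 0 ≤ t → 0 < Finv t ∧ F (Finv t) = t)
    (hFinv_to0 : Tendsto Finv atTop (nhds 0))
    (hfFinvRV : RVatInf (fun t => f (Finv t)) (-1)) :
    RVatInf Finv 0 :=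
  stmt_9_general f F Finv hf_pos hf_cont hF hF_anti hFinv hfFinvRV
end
end

section
/- Let f : (0,∞) → (0,∞) be continuous with F(x) = ∫_x^1 du/f(u) satisfying F(x) → +∞ as x → 0⁺, so that F is strictly decreasing with inverse F⁻¹ and F⁻¹(t) → 0 as t → ∞. If f is rapidly varying at 0 with index +∞, i.e., lim_{x→0⁺} f(λx)/f(x) = +∞ for every λ > 1 and = 0 for every λ ∈ (0,1), then F⁻¹ ∈ RV_∞(0), i.e., F⁻¹ is slowly varying at infinity. -/
/-!
Write `g = 1/f`. Rapid variation of `f` says that for `μ < 1` and every `C`, `g(μv) ≥ C g(v)` for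
small `v`; substituting `u = μv` in `F(μx) = ∫_{μx}^1 g` then gives
`F(μx) ≥ μC (F(x) - F(d))` for a fixed small `d`, and since `F(x) → ∞` this forces
`F(μx)/F(x) → ∞`. At `x = F⁻¹(t)`, monotonicity of `F` turns this into
`μ F⁻¹(t) ≤ F⁻¹(λt) ≤ μ⁻¹ F⁻¹(t)` for large `t`, for every `μ < 1`.
-/

open Filter Real Set Topology MeasureTheory

noncomputable section

lemma ContinuousOn.intervalIntegrable_of_pos {g : ℝ → ℝ} (hg : ContinuousOn g (Ioi 0))
    {a b : ℝ} (ha : 0 < a) (hb : 0 < b) : IntervalIntegrable g volume a b :=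
  (hg.mono fun _ hu => lt_of_lt_of_le (lt_min ha hb) hu.1).intervalIntegrable

namespace IntegralToOne

variable {g G : ℝ → ℝ} (hg : ContinuousOn g (Ioi 0))
  (hG : ∀ y : ℝ, 0 < y → G y = ∫ u in y..(1:ℝ), g u)

include hG in
lemma nonneg_of_le_one (hg₀ : ∀ y : ℝ, 0 < y → 0 ≤ g y) {y : ℝ} (hy : 0 < y) (hy1 : y ≤ 1) :
    0 ≤ G y := by
  rw [hG y hy]
  exact intervalIntegral.integral_nonneg hy1 fun u hu => hg₀ u (hy.trans_le hu.1)

include hg hG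

lemma sub_eq_intervalIntegral {x d : ℝ} (hx : 0 < x) (hd : 0 < d) :
    G x - G d = ∫ u in x..d, g u := by
  rw [hG x hx, hG d hd, ← intervalIntegral.integral_add_adjacent_intervals
    (hg.intervalIntegrable_of_pos hx hd) (hg.intervalIntegrable_of_pos hd one_pos),
    add_sub_cancel_right]

lemma mul_sub_le_sub_of_le_comp_mul {μ C x d : ℝ} (hμ : 0 < μ) (hx : 0 < x) (hxd : x ≤ d)
    (hC : ∀ v ∈ Icc x d, C * g v ≤ g (μ * v)) :
    μ * C * (G x - G d) ≤ G (μ * x) - G (μ * d) := by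
  have hd : 0 < d := hx.trans_le hxd
  have hcomp : IntervalIntegrable (fun v => g (μ * v)) volume x d :=
    ContinuousOn.intervalIntegrable_of_pos
      (hg.comp (continuousOn_const.mul continuousOn_id) fun _ hv => mul_pos hμ hv) hx hd
  calc μ * C * (G x - G d) = μ * ∫ v in x..d, C * g v := by
        rw [sub_eq_intervalIntegral hg hG hx hd, intervalIntegral.integral_const_mul, mul_assoc]
    _ ≤ μ * ∫ v in x..d, g (μ * v) := by
        gcongr
        exact intervalIntegral.integral_mono_on hxd
          ((hg.intervalIntegrable_of_pos hx hd).const_mul C) hcomp hC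
    _ = G (μ * x) - G (μ * d) := by
        rw [sub_eq_intervalIntegral hg hG (mul_pos hμ hx) (mul_pos hμ hd)]
        rw [← intervalIntegral.smul_integral_comp_mul_left, smul_eq_mul]

lemma eventually_mul_le_comp_mul (hg₀ : ∀ y : ℝ, 0 < y → 0 ≤ g y)
    (hG_top : Tendsto G (𝓝[>] 0) atTop) {μ : ℝ} (hμ0 : 0 < μ) (hμ1 : μ ≤ 1)
    (hgμ : ∀ C : ℝ, ∀ᶠ v in 𝓝[>] 0, C * g v ≤ g (μ * v)) (K : ℝ) :
    ∀ᶠ x in 𝓝[>] 0, K * G x ≤ G (μ * x) := by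
  set K' := max K 0
  obtain ⟨δ, hδ, hδC⟩ := mem_nhdsGT_iff_exists_Ioc_subset.1 (hgμ (2 * K' / μ))
  set d := min δ 1
  have hd : 0 < d := lt_min hδ one_pos
  have hμd : 0 ≤ G (μ * d) :=
    nonneg_of_le_one hG hg₀ (mul_pos hμ0 hd) (mul_le_one₀ hμ1 hd.le (min_le_right _ _))
  filter_upwards [hG_top.eventually_ge_atTop (2 * |G d|), Ioo_mem_nhdsGT hd]
    with x hGx ⟨hx, hxd⟩
  have hC : ∀ v ∈ Icc x d, 2 * K' / μ * g v ≤ g (μ * v) := fun v hv =>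
    hδC ⟨hx.trans_le hv.1, hv.2.trans (min_le_left _ _)⟩
  have hmain := mul_sub_le_sub_of_le_comp_mul hg hG hμ0 hx hxd.le hC
  rw [mul_div_cancel₀ _ hμ0.ne'] at hmain
  have hK' : 0 ≤ K' := le_max_right _ _
  have hGx0 : 0 ≤ G x := (mul_nonneg zero_le_two (abs_nonneg _)).trans hGx
  calc K * G x ≤ K' * G x := mul_le_mul_of_nonneg_right (le_max_left _ _) hGx0
    _ ≤ 2 * K' * (G x - G d) := by nlinarith [le_abs_self (G d)]
    _ ≤ G (μ * x) := by linarith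

end IntegralToOne

lemma Filter.Tendsto.const_mul_nhdsGT_zero {α : Type*} {l : Filter α} {φ : α → ℝ}
    (h : Tendsto φ l (𝓝 0)) (hpos : ∀ᶠ t in l, 0 < φ t) {c : ℝ} (hc : 0 < c) :
    Tendsto (fun t => c * φ t) l (𝓝[>] 0) :=
  tendsto_nhdsWithin_iff.2 ⟨by simpa using h.const_mul c, hpos.mono fun _ ht => mul_pos hc ht⟩

section InverseOfDecreasing

variable {F Finv : ℝ → ℝ} (hF_anti : StrictAntiOn F (Ioi 0))
  (hFinv : ∀ t : ℝ, 0 ≤ t → 0 < Finv t ∧ F (Finv t) = t)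
include hF_anti hFinv

lemma le_apply_inv_of_le {y s : ℝ} (hy : 0 < y) (hs : 0 ≤ s) (h : s ≤ F y) : y ≤ Finv s := by
  rwa [← (hFinv s hs).2, hF_anti.le_iff_ge (hFinv s hs).1 hy] at h

lemma apply_inv_le_of_le {y s : ℝ} (hy : 0 < y) (hs : 0 ≤ s) (h : F y ≤ s) : Finv s ≤ y := by
  rwa [← (hFinv s hs).2, hF_anti.le_iff_ge hy (hFinv s hs).1] at h

theorem rvAtInf_zero_of_eventually_mul_le_comp_mul (hFinv_to0 : Tendsto Finv atTop (𝓝 0))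
    (hgrow : ∀ μ : ℝ, 0 < μ → μ < 1 → ∀ K : ℝ, ∀ᶠ x in 𝓝[>] 0, K * F x ≤ F (μ * x)) :
    RVatInf Finv 0 := by
  have hFinv_pos : ∀ᶠ t in atTop, 0 < Finv t :=
    (eventually_ge_atTop 0).mono fun t ht => (hFinv t ht).1
  intro lam hlam
  rw [Real.rpow_zero]
  refine tendsto_order.2 ⟨fun a ha => ?_, fun b hb => ?_⟩
  · obtain ⟨μ, haμ, hμ1⟩ := exists_between (max_lt ha one_pos)
    have hμ0 : 0 < μ := (le_max_right _ _).trans_lt haμ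
    filter_upwards [(hFinv_to0.const_mul_nhdsGT_zero hFinv_pos one_pos).eventually
      (hgrow μ hμ0 hμ1 lam), eventually_ge_atTop 0] with t ht ht0
    obtain ⟨hpos, hFt⟩ := hFinv t ht0
    simp only [one_mul, hFt] at ht
    have := le_apply_inv_of_le hF_anti hFinv (mul_pos hμ0 hpos) (by positivity) ht
    rw [lt_div_iff₀ hpos]
    nlinarith [le_max_left a 0]
  · obtain ⟨c, hc1, hcb⟩ := exists_between hb
    have hc0 : 0 < c := one_pos.trans hc1
    filter_upwards [(hFinv_to0.const_mul_nhdsGT_zero hFinv_pos hc0).eventually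
      (hgrow c⁻¹ (inv_pos.2 hc0) (inv_lt_one_of_one_lt₀ hc1) lam⁻¹), eventually_ge_atTop 0]
      with t ht ht0
    obtain ⟨hpos, hFt⟩ := hFinv t ht0
    rw [inv_mul_cancel_left₀ hc0.ne', hFt, inv_mul_le_iff₀ hlam] at ht
    have := apply_inv_le_of_le hF_anti hFinv (mul_pos hc0 hpos) (by positivity) ht
    rw [div_lt_iff₀ hpos]
    nlinarith

end InverseOfDecreasing

lemma eventually_mul_inv_le_inv_comp_mul {f : ℝ → ℝ} (hf_pos : ∀ y : ℝ, 0 < y → 0 < f y)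
    {μ : ℝ} (hμ : 0 < μ)
    (hf : Tendsto (fun y => f (μ * y) / f y) (𝓝[>] 0) (𝓝 0)) (C : ℝ) :
    ∀ᶠ v in 𝓝[>] 0, C * (1 / f v) ≤ 1 / f (μ * v) := by
  set C' := max C 1
  have hC' : 0 < C' := one_pos.trans_le (le_max_right _ _)
  filter_upwards [hf.eventually_lt_const (inv_pos.2 hC'), self_mem_nhdsWithin] with v hv hv0
  have hfv := hf_pos v hv0
  have hfμv := hf_pos _ (mul_pos hμ hv0)
  rw [div_lt_iff₀ hfv] at hv
  calc C * (1 / f v) ≤ C' * (1 / f v) := by gcongr; exact le_max_left _ _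
    _ ≤ 1 / f (μ * v) := by
        rw [mul_one_div, div_le_div_iff₀ hfv hfμv]
        nlinarith [mul_lt_mul_of_pos_left hv hC', mul_inv_cancel₀ hC'.ne']

theorem stmt_10_general (f F Finv : ℝ → ℝ)
    (hf_pos : ∀ y : ℝ, 0 < y → 0 < f y)
    (hf_cont : ContinuousOn f (Set.Ioi 0))
    (hF : ∀ y : ℝ, 0 < y → F y = ∫ u in y..(1:ℝ), 1 / f u)
    (hF_top : Tendsto F (nhdsWithin 0 (Set.Ioi 0)) atTop)
    (hF_anti : StrictAntiOn F (Set.Ioi 0))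
    (hFinv : ∀ t : ℝ, 0 ≤ t → 0 < Finv t ∧ F (Finv t) = t)
    (hFinv_to0 : Tendsto Finv atTop (nhds 0))
    (hrap_zero : ∀ lam : ℝ, 0 < lam → lam < 1 →
      Tendsto (fun y => f (lam * y) / f y) (nhdsWithin 0 (Set.Ioi 0)) (nhds 0)) :
    RVatInf Finv 0 := by
  have hg : ContinuousOn (fun u => 1 / f u) (Ioi 0) :=
    continuousOn_const.div hf_cont fun u hu => (hf_pos u hu).ne'
  exact rvAtInf_zero_of_eventually_mul_le_comp_mul hF_anti hFinv hFinv_to0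
    fun μ hμ0 hμ1 => IntegralToOne.eventually_mul_le_comp_mul hg hF
      (fun y hy => (one_div_pos.2 (hf_pos y hy)).le) hF_top hμ0 hμ1.le
      (eventually_mul_inv_le_inv_comp_mul hf_pos hμ0 (hrap_zero μ hμ0 hμ1))

/-- Remark after Theorem 2.3 (second remark): if `f : (0,∞) → (0,∞)` is continuous,
`F(x) = ∫_x^1 du/f(u)` tends to `+∞` as `x → 0⁺` (so that `F` is strictly decreasing
with inverse `F⁻¹` and `F⁻¹(t) → 0` as `t → ∞`), and `f` is rapidly varying at `0`
with index `+∞`, then `F⁻¹` is slowly varying at infinity. -/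
theorem stmt_10 (f F Finv : ℝ → ℝ)
    (hf_pos : ∀ y : ℝ, 0 < y → 0 < f y)
    (hf_cont : ContinuousOn f (Set.Ioi 0))
    (hF : ∀ y : ℝ, 0 < y → F y = ∫ u in y..(1:ℝ), 1 / f u)
    (hF_top : Tendsto F (nhdsWithin 0 (Set.Ioi 0)) atTop)
    (hF_anti : StrictAntiOn F (Set.Ioi 0))
    (hFinv : ∀ t : ℝ, 0 ≤ t → 0 < Finv t ∧ F (Finv t) = t)
    (hFinv_to0 : Tendsto Finv atTop (nhds 0))
    (hrap_top : ∀ lam : ℝ, 1 < lam →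
      Tendsto (fun y => f (lam * y) / f y) (nhdsWithin 0 (Set.Ioi 0)) atTop)
    (hrap_zero : ∀ lam : ℝ, 0 < lam → lam < 1 →
      Tendsto (fun y => f (lam * y) / f y) (nhdsWithin 0 (Set.Ioi 0)) (nhds 0)) :
    RVatInf Finv 0 :=
  stmt_10_general f F Finv hf_pos hf_cont hF hF_top hF_anti hFinv hFinv_to0 hrap_zero
end
end

section
/- Let f satisfy the base hypotheses with f ∈ RV₀(β) for some β > 1. Let φ ∈ C¹((0,∞);(0,∞)) be increasing with lim_{x→0⁺} f(x)/φ(x) = 1 and lim_{x→0⁺} x·φ'(x)/φ(x) = β, and let γ ∈ C¹((0,∞);(0,∞)) be decreasing with lim_{t→∞} g(t)/γ(t) = 1 and lim_{t→∞} t·γ'(t)/γ(t) = -θ for some θ > 0. If lim_{t→∞} g(t)/(f∘F⁻¹)(t) = +∞, then lim_{t→∞} φ⁻¹(γ(t))/(t·γ(t)) = 0. -/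
open Filter Real Set Topology MeasureTheory

noncomputable section

/-!
Put `z = F⁻¹(t)`, `a = φ⁻¹(γ(t))` and `M = γ(t)/φ(z)`. Both `z` and `a` tend to `0⁺` (the latter
because `tγ'/γ → -θ < 0` forces `γ(t) = O(t^{-θ/2})`), and `M → ∞` because `g ~ γ` and `f ~ φ`
turn `g/(f∘F⁻¹) → ∞` into it. Since `yφ'(y)/φ(y) → β`, for `p < β < q` the ratio `φ(y)/y^p`
increases and `φ(y)/y^q` decreases near `0` (Potter bounds). As `M ≥ 1` gives `z ≤ a`, the first
yields `φ(z)(a/z)^p ≤ φ(a) = Mφ(z)`, i.e. `a ≤ M^{1/p} z`; the second gives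
`f ≤ 2φ ≤ 2·2^q φ(z)` on `[z, 2z]`, hence `t = F(z) ≥ ∫_z^{2z} du/f(u) ≥ z/(2·2^q φ(z))`.
Together, `a/(tγ(t)) ≤ 2·2^q M^{1/p-1} → 0` since `p > 1`.
-/

open Asymptotics

theorem hasDerivAt_div_rpow {φ : ℝ → ℝ} {φ' y : ℝ} (p : ℝ) (hφ : HasDerivAt φ φ' y)
    (hy : 0 < y) (hφy : φ y ≠ 0) :
    HasDerivAt (fun y => φ y / y ^ p) ((y * φ' / φ y - p) * (φ y / y ^ p) / y) y := by
  refine (hφ.div (hasDerivAt_rpow_const (p := p) (Or.inl hy.ne'))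
    (rpow_pos_of_pos hy p).ne').congr_deriv ?_
  have hyp := rpow_pos_of_pos hy p
  rw [rpow_sub_one hy.ne']
  field_simp

section Potter

variable {φ φ' : ℝ → ℝ} {s : Set ℝ}

theorem monotoneOn_div_rpow_of_le_elasticity {p : ℝ} (hs : Convex ℝ s) (hs0 : s ⊆ Ioi 0)
    (hpos : ∀ y ∈ s, 0 < φ y) (hderiv : ∀ y ∈ s, HasDerivAt φ (φ' y) y)
    (hp : ∀ y ∈ interior s, p ≤ y * φ' y / φ y) :
    MonotoneOn (fun y => φ y / y ^ p) s := by
  have hd y (hy : y ∈ s) := hasDerivAt_div_rpow p (hderiv y hy) (hs0 hy) (hpos y hy).ne'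
  refine monotoneOn_of_deriv_nonneg hs (fun y hy => (hd y hy).continuousAt.continuousWithinAt)
    (fun y hy => (hd y (interior_subset hy)).differentiableAt.differentiableWithinAt)
    fun y hy => ?_
  have hy' := interior_subset hy
  have hy0 : 0 < y := hs0 hy'
  rw [(hd y hy').deriv]
  exact div_nonneg (mul_nonneg (sub_nonneg.2 (hp y hy))
    (div_pos (hpos y hy') (rpow_pos_of_pos hy0 p)).le) hy0.le

theorem antitoneOn_div_rpow_of_elasticity_le {q : ℝ} (hs : Convex ℝ s) (hs0 : s ⊆ Ioi 0)
    (hpos : ∀ y ∈ s, 0 < φ y) (hderiv : ∀ y ∈ s, HasDerivAt φ (φ' y) y)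
    (hq : ∀ y ∈ interior s, y * φ' y / φ y ≤ q) :
    AntitoneOn (fun y => φ y / y ^ q) s := by
  have hd y (hy : y ∈ s) := hasDerivAt_div_rpow q (hderiv y hy) (hs0 hy) (hpos y hy).ne'
  refine antitoneOn_of_deriv_nonpos hs (fun y hy => (hd y hy).continuousAt.continuousWithinAt)
    (fun y hy => (hd y (interior_subset hy)).differentiableAt.differentiableWithinAt)
    fun y hy => ?_
  have hy' := interior_subset hy
  have hy0 : 0 < y := hs0 hy'
  rw [(hd y hy').deriv]
  exact div_nonpos_of_nonpos_of_nonneg (mul_nonpos_of_nonpos_of_nonneg (sub_nonpos.2 (hq y hy))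
    (div_pos (hpos y hy') (rpow_pos_of_pos hy0 q)).le) hy0.le

theorem exists_potter_bounds_nhdsGT_zero {β p q : ℝ} (hpos : ∀ y, 0 < y → 0 < φ y)
    (hderiv : ∀ y, 0 < y → HasDerivAt φ (φ' y) y)
    (hlim : Tendsto (fun y => y * φ' y / φ y) (𝓝[>] 0) (𝓝 β)) (hp : p < β) (hq : β < q) :
    ∃ Y > 0, MonotoneOn (fun y => φ y / y ^ p) (Ioo 0 Y) ∧
      AntitoneOn (fun y => φ y / y ^ q) (Ioo 0 Y) := by
  obtain ⟨Y, hY, hsub⟩ := mem_nhdsGT_iff_exists_Ioo_subset.1 (hlim (Ioo_mem_nhds hp hq))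
  have hs0 : Ioo 0 Y ⊆ Ioi 0 := fun y hy => hy.1
  refine ⟨Y, hY, ?_, ?_⟩
  · exact monotoneOn_div_rpow_of_le_elasticity (convex_Ioo 0 Y) hs0 (fun y hy => hpos y hy.1)
      (fun y hy => hderiv y hy.1) (by rw [isOpen_Ioo.interior_eq]; exact fun y hy => (hsub hy).1.le)
  · exact antitoneOn_div_rpow_of_elasticity_le (convex_Ioo 0 Y) hs0 (fun y hy => hpos y hy.1)
      (fun y hy => hderiv y hy.1) (by rw [isOpen_Ioo.interior_eq]; exact fun y hy => (hsub hy).2.le)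

end Potter

theorem tendsto_zero_of_tendsto_elasticity_neg {γ γ' : ℝ → ℝ} {θ : ℝ} (hθ : 0 < θ)
    (hpos : ∀ t, 0 < t → 0 < γ t) (hderiv : ∀ t, 0 < t → HasDerivAt γ (γ' t) t)
    (hlim : Tendsto (fun t => t * γ' t / γ t) atTop (𝓝 (-θ))) :
    Tendsto γ atTop (𝓝 0) := by
  obtain ⟨t₀, ht₀⟩ := eventually_atTop.1 (hlim (Iio_mem_nhds (by linarith : -θ < -θ / 2)))
  set t₁ := max t₀ 1
  have ht₁ : 0 < t₁ := lt_max_of_lt_right one_pos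
  have hs0 : Ici t₁ ⊆ Ioi 0 := fun t ht => ht₁.trans_le ht
  have hanti := antitoneOn_div_rpow_of_elasticity_le (convex_Ici t₁) hs0
    (fun t ht => hpos t (hs0 ht)) (fun t ht => hderiv t (hs0 ht))
    (q := -(θ / 2)) fun t ht => by
      rw [interior_Ici] at ht
      exact neg_div 2 θ ▸ (ht₀ t ((le_max_left _ _).trans ht.le)).le
  have hbound : ∀ᶠ t in atTop, γ t ≤ γ t₁ / t₁ ^ (-(θ / 2)) * t ^ (-(θ / 2)) := by
    filter_upwards [eventually_ge_atTop t₁] with t ht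
    have := hanti self_mem_Ici ht ht
    rwa [div_le_iff₀ (rpow_pos_of_pos (hs0 ht) _)] at this
  refine squeeze_zero' ?_ hbound ?_
  · filter_upwards [eventually_gt_atTop 0] with t ht using (hpos t ht).le
  · simpa using
      (tendsto_rpow_neg_atTop (by linarith : 0 < θ / 2)).const_mul (γ t₁ / t₁ ^ (-(θ / 2)))

theorem div_le_integral_one_div {f : ℝ → ℝ} {z K : ℝ} (hz : 0 ≤ z) (hz1 : 2 * z ≤ 1)
    (hf : ContinuousOn f (Icc z 1)) (hpos : ∀ u ∈ Icc z 1, 0 < f u)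
    (hK : ∀ u ∈ Icc z (2 * z), f u ≤ K) :
    z / K ≤ ∫ u in z..1, 1 / f u := by
  have hint : IntervalIntegrable (fun u => 1 / f u) volume z 1 :=
    (continuousOn_const.div hf fun u hu => (hpos u hu).ne').intervalIntegrable_of_Icc (by linarith)
  have hsub : ∫ u in z..2 * z, 1 / f u ≤ ∫ u in z..1, 1 / f u := by
    refine intervalIntegral.integral_mono_interval le_rfl (by linarith) hz1 ?_ hint
    refine (ae_restrict_mem measurableSet_Ioc).mono fun u hu => ?_
    exact (one_div_pos.2 (hpos u (Ioc_subset_Icc_self hu))).le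
  refine le_trans ?_ hsub
  calc z / K = ∫ _ in z..2 * z, 1 / K := by
        simp only [intervalIntegral.integral_const, smul_eq_mul]; ring
    _ ≤ ∫ u in z..2 * z, 1 / f u := by
      refine intervalIntegral.integral_mono_on (by linarith) intervalIntegrable_const
        (hint.mono_set ?_) fun u hu => ?_
      · rw [uIcc_of_le (by linarith), uIcc_of_le (by linarith)]
        exact Icc_subset_Icc le_rfl hz1
      · exact one_div_le_one_div_of_le (hpos u ⟨hu.1, hu.2.trans hz1⟩) (hK u hu)

theorem tendsto_nhdsGT_zero_of_comp_tendsto_zero {α : Type*} {l : Filter α} {φ : ℝ → ℝ}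
    {u : α → ℝ} (hφ : StrictMonoOn φ (Ioi 0)) (hpos : ∀ y, 0 < y → 0 < φ y)
    (hu : ∀ᶠ x in l, 0 < u x) (hφu : Tendsto (fun x => φ (u x)) l (𝓝 0)) :
    Tendsto u l (𝓝[>] 0) := by
  refine tendsto_nhdsWithin_iff.2 ⟨tendsto_order.2 ⟨fun b hb => hu.mono fun x hx => hb.trans hx,
    fun ε hε => ?_⟩, hu⟩
  filter_upwards [hu, hφu.eventually (gt_mem_nhds (hpos ε hε))] with x hx hlt
  exact (hφ.lt_iff_lt hx hε).1 hlt

theorem eventually_div_le_integral_one_div {f φ : ℝ → ℝ} {c q Y : ℝ} (hc : 0 ≤ c) (hq : 0 ≤ q)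
    (hf : Continuous f) (hfpos : ∀ y, 0 < y → 0 < f y) (hφpos : ∀ y, 0 < y → 0 < φ y)
    (hfφ : ∀ᶠ y in 𝓝[>] 0, f y ≤ c * φ y)
    (hY : 0 < Y) (hφ : AntitoneOn (fun y => φ y / y ^ q) (Ioo 0 Y)) :
    ∀ᶠ z in 𝓝[>] 0, z / (c * 2 ^ q * φ z) ≤ ∫ u in z..1, 1 / f u := by
  obtain ⟨Y', hY', hsub⟩ := mem_nhdsGT_iff_exists_Ioo_subset.1 hfφ
  filter_upwards [Ioo_mem_nhdsGT (half_pos (lt_min (lt_min hY hY') one_pos))] with z ⟨hz, hzY⟩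
  have hzY : 2 * z < Y ∧ 2 * z < Y' ∧ 2 * z < 1 := by
    simp only [lt_div_iff₀ (two_pos : (0 : ℝ) < 2), lt_min_iff] at hzY
    exact ⟨by linarith, by linarith, by linarith⟩
  refine div_le_integral_one_div hz.le hzY.2.2.le hf.continuousOn
    (fun u hu => hfpos u (hz.trans_le hu.1)) fun u ⟨hzu, hu⟩ => ?_
  have hu0 : 0 < u := hz.trans_le hzu
  have hdouble : φ u ≤ 2 ^ q * φ z := by
    have h := hφ ⟨hz, by linarith⟩ ⟨hu0, by linarith⟩ hzu
    have hz' := rpow_pos_of_pos hz q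
    rw [div_le_div_iff₀ (rpow_pos_of_pos hu0 q) hz'] at h
    have : u ^ q ≤ 2 ^ q * z ^ q := by
      rw [← mul_rpow zero_le_two hz.le]; exact rpow_le_rpow hu0.le hu hq
    nlinarith [hφpos z hz, hφpos u hu0]
  calc f u ≤ c * φ u := hsub ⟨hu0, by linarith⟩
    _ ≤ c * 2 ^ q * φ z := by rw [mul_assoc]; exact mul_le_mul_of_nonneg_left hdouble hc

theorem div_mul_le_rpow_of_div_rpow_le {φ : ℝ → ℝ} {a z t C p : ℝ} (hp : 0 < p) (hz : 0 < z)
    (ha : 0 < a) (hC : 0 < C) (hφz : 0 < φ z) (hratio : φ z / z ^ p ≤ φ a / a ^ p)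
    (ht : z / (C * φ z) ≤ t) :
    a / (t * φ a) ≤ C * (φ a / φ z) ^ (-(1 - p⁻¹)) := by
  have hzp := rpow_pos_of_pos hz p
  have hap := rpow_pos_of_pos ha p
  have hφa : 0 < φ a := (div_pos_iff_of_pos_right hap).1 ((div_pos hφz hzp).trans_le hratio)
  set M := φ a / φ z
  have hM : 0 < M := div_pos hφa hφz
  have ha_le : a ≤ M ^ p⁻¹ * z := by
    have h : a ^ p ≤ M * z ^ p := by
      rw [div_le_div_iff₀ hzp hap] at hratio
      rw [div_mul_eq_mul_div, le_div_iff₀ hφz]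
      linarith
    calc a = (a ^ p) ^ p⁻¹ := (rpow_rpow_inv ha.le hp.ne').symm
      _ ≤ (M * z ^ p) ^ p⁻¹ := rpow_le_rpow hap.le h (inv_nonneg.2 hp.le)
      _ = M ^ p⁻¹ * z := by rw [mul_rpow hM.le hzp.le, rpow_rpow_inv hz.le hp.ne']
  have ht0 : 0 < t := (div_pos hz (mul_pos hC hφz)).trans_le ht
  rw [div_le_iff₀ (mul_pos ht0 hφa)]
  calc a ≤ M ^ p⁻¹ * z := ha_le
    _ ≤ M ^ p⁻¹ * (t * (C * φ z)) :=
      mul_le_mul_of_nonneg_left ((div_le_iff₀ (mul_pos hC hφz)).1 ht) (by positivity)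
    _ = C * M ^ (-(1 - p⁻¹)) * (t * φ a) := by
      rw [neg_sub, rpow_sub_one hM.ne']
      simp only [M]
      field_simp

theorem tendsto_div_mul_zero_of_potter {φ z a γ : ℝ → ℝ} {C p Y : ℝ} (hp : 1 < p)
    (hC : 0 < C) (hY : 0 < Y) (hφ_mono : StrictMonoOn φ (Ioi 0)) (hφ_pos : ∀ y, 0 < y → 0 < φ y)
    (hpotter : MonotoneOn (fun y => φ y / y ^ p) (Ioo 0 Y))
    (hz : Tendsto z atTop (𝓝[>] 0)) (ha : Tendsto a atTop (𝓝[>] 0))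
    (hφa : ∀ᶠ t in atTop, φ (a t) = γ t) (hM : Tendsto (fun t => γ t / φ (z t)) atTop atTop)
    (hzt : ∀ᶠ t in atTop, z t / (C * φ (z t)) ≤ t) :
    Tendsto (fun t => a t / (t * γ t)) atTop (𝓝 0) := by
  have hlim : Tendsto (fun t => C * (γ t / φ (z t)) ^ (-(1 - p⁻¹))) atTop (𝓝 0) := by
    simpa using
      ((tendsto_rpow_neg_atTop (sub_pos.2 (inv_lt_one_of_one_lt₀ hp))).comp hM).const_mul C
  have hzY := hz.eventually (Ioo_mem_nhdsGT hY)
  have haY := ha.eventually (Ioo_mem_nhdsGT hY)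
  refine squeeze_zero' ?_ ?_ hlim
  · filter_upwards [hzt, hφa, haY, hzY] with t ht hφat haY hzY
    have ht0 := (div_pos hzY.1 (mul_pos hC (hφ_pos _ hzY.1))).trans_le ht
    exact div_nonneg haY.1.le (mul_nonneg ht0.le (hφat ▸ hφ_pos _ haY.1).le)
  · filter_upwards [hzt, hφa, haY, hzY, hM.eventually_ge_atTop 1] with t ht hφat haY hzY hM1
    have hza : z t ≤ a t := by
      rw [← hφ_mono.le_iff_le hzY.1 haY.1, hφat]
      exact (one_le_div (hφ_pos _ hzY.1)).1 hM1
    have key := div_mul_le_rpow_of_div_rpow_le (by positivity) hzY.1 haY.1 hC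
      (hφ_pos _ hzY.1) (hpotter hzY haY hza) ht
    rwa [hφat] at key

theorem stmt_12_general
    (f g F Finv : ℝ → ℝ)
    (hf_cont : Continuous f)
    (hf_sign : ∀ y : ℝ, y ≠ 0 → 0 < y * f y)
    (hF : ∀ y : ℝ, 0 < y → F y = ∫ u in y..(1:ℝ), 1 / f u)
    (hFinv : ∀ t : ℝ, 0 ≤ t → 0 < Finv t ∧ F (Finv t) = t)
    (hFinv_to0 : Tendsto Finv atTop (nhds 0))
    (β : ℝ) (hβ : 1 < β)
    (φ φ' φinv : ℝ → ℝ)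
    (hφ_pos : ∀ y : ℝ, 0 < y → 0 < φ y)
    (hφ_deriv : ∀ y : ℝ, 0 < y → HasDerivAt φ (φ' y) y)
    (hφ_mono : StrictMonoOn φ (Set.Ioi 0))
    (hfφ : Tendsto (fun y => f y / φ y) (nhdsWithin 0 (Set.Ioi 0)) (nhds 1))
    (hφ'_lim : Tendsto (fun y => y * φ' y / φ y) (nhdsWithin 0 (Set.Ioi 0)) (nhds β))
    (hφinv : ∀ y : ℝ, 0 < y → 0 < φinv y ∧ φ (φinv y) = y)
    (γ γ' : ℝ → ℝ)
    (hγ_pos : ∀ t : ℝ, 0 < t → 0 < γ t)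
    (hγ_deriv : ∀ t : ℝ, 0 < t → HasDerivAt γ (γ' t) t)
    (hgγ : Tendsto (fun t => g t / γ t) atTop (nhds 1))
    (θ : ℝ) (hθ : 0 < θ)
    (hγ'_lim : Tendsto (fun t => t * γ' t / γ t) atTop (nhds (-θ)))
    (hLinf : Tendsto (fun t => g t / f (Finv t)) atTop atTop) :
    Tendsto (fun t => φinv (γ t) / (t * γ t)) atTop (nhds 0) := by
  obtain ⟨Y, hY, hmono, hanti⟩ := exists_potter_bounds_nhdsGT_zero hφ_pos hφ_deriv hφ'_lim
    (by linarith : (β + 1) / 2 < β) (lt_add_one β)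
  have hfpos : ∀ y, 0 < y → 0 < f y := fun y hy => pos_of_mul_pos_right (hf_sign y hy.ne') hy.le
  have hz : Tendsto Finv atTop (𝓝[>] 0) := tendsto_nhdsWithin_iff.2
    ⟨hFinv_to0, (eventually_ge_atTop 0).mono fun t ht => (hFinv t ht).1⟩
  have hφa : ∀ᶠ t in atTop, φ (φinv (γ t)) = γ t :=
    (eventually_gt_atTop 0).mono fun t ht => (hφinv _ (hγ_pos t ht)).2
  have ha : Tendsto (fun t => φinv (γ t)) atTop (𝓝[>] 0) :=
    tendsto_nhdsGT_zero_of_comp_tendsto_zero hφ_mono hφ_pos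
      ((eventually_gt_atTop 0).mono fun t ht => (hφinv _ (hγ_pos t ht)).1)
      ((tendsto_zero_of_tendsto_elasticity_neg hθ hγ_pos hγ_deriv hγ'_lim).congr'
        (hφa.mono fun _ h => h.symm))
  have hM : Tendsto (fun t => γ t / φ (Finv t)) atTop atTop :=
    ((isEquivalent_of_tendsto_one hgγ).div
      ((isEquivalent_of_tendsto_one hfφ).comp_tendsto hz)).tendsto_atTop hLinf
  have hf2φ : ∀ᶠ y in 𝓝[>] 0, f y ≤ 2 * φ y := by
    filter_upwards [hfφ.eventually (gt_mem_nhds one_lt_two), self_mem_nhdsWithin] with y hy hy0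
    exact ((div_lt_iff₀ (hφ_pos y hy0)).1 hy).le
  have hF_le : ∀ᶠ t in atTop, Finv t / (2 * 2 ^ (β + 1) * φ (Finv t)) ≤ t := by
    filter_upwards [hz.eventually (eventually_div_le_integral_one_div zero_le_two (by linarith)
      hf_cont hfpos hφ_pos hf2φ hY hanti), eventually_ge_atTop 0] with t h ht
    rwa [← hF _ (hFinv t ht).1, (hFinv t ht).2] at h
  exact tendsto_div_mul_zero_of_potter (by linarith) (by positivity) hY hφ_mono hφ_pos hmono
    hz ha hφa hM hF_le

/-- STEP 1 of the proof of Theorem 2.5(i): under the base hypotheses, with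
`f ∈ RV₀(β)` for some `β > 1`, let `φ ∈ C¹((0,∞);(0,∞))` be increasing with
`f(x)/φ(x) → 1` and `xφ'(x)/φ(x) → β` as `x → 0⁺`, and let `γ ∈ C¹((0,∞);(0,∞))`
be decreasing with `g(t)/γ(t) → 1` and `tγ'(t)/γ(t) → -θ` as `t → ∞`, for some
`θ > 0`.  If `g(t)/(f∘F⁻¹)(t) → +∞`, then `φ⁻¹(γ(t))/(tγ(t)) → 0`. -/
theorem stmt_12
    (f g F Finv : ℝ → ℝ) (ξ : ℝ) (x : ℝ → ℝ)
    (hf_cont : Continuous f) (hf_lip : LocallyLipschitz f)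
    (hf_sign : ∀ y : ℝ, y ≠ 0 → 0 < y * f y) (hf_zero : f 0 = 0)
    (hg_cont : ContinuousOn g (Set.Ici 0)) (hg_pos : ∀ t : ℝ, 0 < t → 0 < g t)
    (hF : ∀ y : ℝ, 0 < y → F y = ∫ u in y..(1:ℝ), 1 / f u)
    (hF_top : Tendsto F (nhdsWithin 0 (Set.Ioi 0)) atTop)
    (hF_anti : StrictAntiOn F (Set.Ioi 0))
    (hFinv : ∀ t : ℝ, 0 ≤ t → 0 < Finv t ∧ F (Finv t) = t)
    (hFinv_to0 : Tendsto Finv atTop (nhds 0))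
    (hξ : 0 < ξ) (hx : IsSol f g ξ x)
    (β : ℝ) (hβ : 1 < β) (hfRV : RVat0 f β)
    (φ φ' φinv : ℝ → ℝ)
    (hφ_pos : ∀ y : ℝ, 0 < y → 0 < φ y)
    (hφ_deriv : ∀ y : ℝ, 0 < y → HasDerivAt φ (φ' y) y)
    (hφ'_cont : ContinuousOn φ' (Set.Ioi 0))
    (hφ_mono : StrictMonoOn φ (Set.Ioi 0))
    (hfφ : Tendsto (fun y => f y / φ y) (nhdsWithin 0 (Set.Ioi 0)) (nhds 1))
    (hφ'_lim : Tendsto (fun y => y * φ' y / φ y) (nhdsWithin 0 (Set.Ioi 0)) (nhds β))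
    (hφinv : ∀ y : ℝ, 0 < y → 0 < φinv y ∧ φ (φinv y) = y)
    (γ γ' : ℝ → ℝ)
    (hγ_pos : ∀ t : ℝ, 0 < t → 0 < γ t)
    (hγ_deriv : ∀ t : ℝ, 0 < t → HasDerivAt γ (γ' t) t)
    (hγ'_cont : ContinuousOn γ' (Set.Ioi 0))
    (hγ_anti : StrictAntiOn γ (Set.Ioi 0))
    (hgγ : Tendsto (fun t => g t / γ t) atTop (nhds 1))
    (θ : ℝ) (hθ : 0 < θ)
    (hγ'_lim : Tendsto (fun t => t * γ' t / γ t) atTop (nhds (-θ)))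
    (hLinf : Tendsto (fun t => g t / f (Finv t)) atTop atTop) :
    Tendsto (fun t => φinv (γ t) / (t * γ t)) atTop (nhds 0) :=
  stmt_12_general f g F Finv hf_cont hf_sign hF hFinv hFinv_to0 β hβ φ φ' φinv hφ_pos hφ_deriv
    hφ_mono hfφ hφ'_lim hφinv γ γ' hγ_pos hγ_deriv hgγ θ hθ hγ'_lim hLinf
end
end

section
/- Let f : ℝ → ℝ be continuous with x·f(x) > 0 for x ≠ 0 and f(0) = 0, let F(x) = ∫_x^1 du/f(u) for x > 0 satisfy F(x) → +∞ as x → 0⁺, and let F⁻¹ be the inverse of F (so F⁻¹(0) = 1 and F⁻¹(t) → 0 as t → ∞). Then for every T > 0, ∫_0^T f(F⁻¹(s)) ds = 1 - F⁻¹(T); consequently f∘F⁻¹ is integrable on (0,∞) with ∫_0^∞ f(F⁻¹(s)) ds = 1. -/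
open Filter Real Set Topology MeasureTheory

noncomputable section

/-!
`F` is strictly decreasing with `F' = -1/f` and `F 1 = 0`, so its right inverse `F⁻¹` is a
decreasing bijection of `[0, ∞)` onto the interval `(0, 1]`, hence continuous, and, by the inverse function theorem,
`(F⁻¹)' = -f ∘ F⁻¹`. Hence `f ∘ F⁻¹ ≥ 0` is minus the derivative of `F⁻¹`, and the fundamental
theorem of calculus on `[0, T]` and on `[0, ∞)` (using `F⁻¹(0) = 1` and `F⁻¹(t) → 0`) gives
all three claims.
-/

theorem hasDerivAt_of_eq_integral_left {φ F : ℝ → ℝ} {b : ℝ} (hb : 0 < b)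
    (hφ : ContinuousOn φ (Ioi 0)) (hF : ∀ y, 0 < y → F y = ∫ u in y..b, φ u)
    {x : ℝ} (hx : 0 < x) : HasDerivAt F (-φ x) x := by
  have hsub : uIcc x b ⊆ Ioi 0 := fun u hu => (lt_min hx hb).trans_le hu.1
  have hderiv := intervalIntegral.integral_hasDerivAt_left
    ((hφ.mono hsub).intervalIntegrable) (hφ.stronglyMeasurableAtFilter isOpen_Ioi x hx)
    (hφ.continuousAt (Ioi_mem_nhds hx))
  refine hderiv.congr_of_eventuallyEq ?_
  filter_upwards [Ioi_mem_nhds hx] with y hy using hF y hy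

section RightInverse

variable {F G : ℝ → ℝ}

theorem strictAntiOn_Ici_of_rightInverse (hF : StrictAntiOn F (Ioi 0))
    (hG : ∀ t, 0 ≤ t → 0 < G t ∧ F (G t) = t) : StrictAntiOn G (Ici 0) := by
  intro s hs t ht hst
  by_contra! h
  have := hF.antitoneOn (hG s hs).1 (hG t ht).1 h
  rw [(hG s hs).2, (hG t ht).2] at this
  linarith

theorem rightInverse_apply_of_mem_Ioc (hF : StrictAntiOn F (Ioi 0))
    (hG : ∀ t, 0 ≤ t → 0 < G t ∧ F (G t) = t) (hF1 : F 1 = 0) {x : ℝ} (hx : x ∈ Ioc 0 1) :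
    G (F x) = x := by
  have hFx : 0 ≤ F x := hF1 ▸ hF.antitoneOn hx.1 (mem_Ioi.2 one_pos) hx.2
  exact hF.injOn (hG _ hFx).1 hx.1 (hG _ hFx).2

theorem rightInverse_zero (hF : StrictAntiOn F (Ioi 0))
    (hG : ∀ t, 0 ≤ t → 0 < G t ∧ F (G t) = t) (hF1 : F 1 = 0) : G 0 = 1 := by
  simpa [hF1] using rightInverse_apply_of_mem_Ioc hF hG hF1 (x := 1) ⟨one_pos, le_rfl⟩

theorem continuousOn_Ici_of_rightInverse (hF : StrictAntiOn F (Ioi 0))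
    (hG : ∀ t, 0 ≤ t → 0 < G t ∧ F (G t) = t) (hF1 : F 1 = 0) : ContinuousOn G (Ici 0) := by
  have hanti := strictAntiOn_Ici_of_rightInverse hF hG
  have hG0 := rightInverse_zero hF hG hF1
  have hmono : StrictMonoOn (fun s => -G s) (Ici 0) :=
    fun s hs t ht hst => neg_lt_neg (hanti hs ht hst)
  -- `x = G (F x)` for `x ∈ (0, 1]`, so the image of `-G` fills `[-1, 0)`.
  have himg : Ico (-1) 0 ⊆ (fun s => -G s) '' Ici 0 := by
    intro y hy
    have hy' : -y ∈ Ioc 0 1 := ⟨by linarith [hy.2], by linarith [hy.1]⟩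
    have hFy : 0 ≤ F (-y) := hF1 ▸ hF.antitoneOn hy'.1 (mem_Ioi.2 one_pos) hy'.2
    exact ⟨F (-y), hFy, by simp [rightInverse_apply_of_mem_Ioc hF hG hF1 hy']⟩
  intro t ht
  suffices ContinuousWithinAt (fun s => -G s) (Ici 0) t by
    simpa only [Pi.neg_def, neg_neg] using this.neg
  rcases (mem_Ici.1 ht).eq_or_lt with rfl | ht
  · refine hmono.continuousWithinAt_right_of_image_mem_nhdsWithin self_mem_nhdsWithin
      (mem_of_superset ?_ himg)
    simpa [hG0] using Ico_mem_nhdsGE (by norm_num : (-1 : ℝ) < 0)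
  · have hGt : G t < 1 := hG0 ▸ hanti self_mem_Ici ht.le ht
    have hmem : Ico (-1) 0 ∈ 𝓝 (-G t) :=
      Ico_mem_nhds (by linarith) (by linarith [(hG t ht.le).1])
    exact (hmono.continuousAt_of_image_mem_nhds (Ici_mem_nhds ht)
      (mem_of_superset hmem himg)).continuousWithinAt

theorem hasDerivAt_of_rightInverse {F' : ℝ → ℝ} (hF' : ∀ x, 0 < x → HasDerivAt F (F' x) x)
    (hF'0 : ∀ x, 0 < x → F' x ≠ 0) (hG : ∀ t, 0 ≤ t → 0 < G t ∧ F (G t) = t)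
    (hGc : ContinuousOn G (Ici 0)) {t : ℝ} (ht : 0 < t) : HasDerivAt G (F' (G t))⁻¹ t := by
  refine (hF' _ (hG t ht.le).1).of_local_left_inverse (hGc.continuousAt (Ici_mem_nhds ht))
    (hF'0 _ (hG t ht.le).1) ?_
  filter_upwards [Ici_mem_nhds ht] with s hs using (hG s hs).2

end RightInverse

theorem stmt_13_general (f F Finv : ℝ → ℝ)
    (hf_cont : Continuous f)
    (hf_sign : ∀ y : ℝ, y ≠ 0 → 0 < y * f y)
    (hF : ∀ y : ℝ, 0 < y → F y = ∫ u in y..(1:ℝ), 1 / f u)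
    (hF_anti : StrictAntiOn F (Set.Ioi 0))
    (hFinv : ∀ t : ℝ, 0 ≤ t → 0 < Finv t ∧ F (Finv t) = t)
    (hFinv_to0 : Tendsto Finv atTop (nhds 0)) :
    (∀ T : ℝ, 0 < T → ∫ s in (0:ℝ)..T, f (Finv s) = 1 - Finv T) ∧
    IntegrableOn (fun s => f (Finv s)) (Set.Ioi 0) ∧
    ∫ s in Set.Ioi (0:ℝ), f (Finv s) = 1 := by
  have hfpos : ∀ y, 0 < y → 0 < f y := fun y hy => pos_of_mul_pos_right (hf_sign y hy.ne') hy.le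
  have hF1 : F 1 = 0 := by rw [hF 1 one_pos, intervalIntegral.integral_same]
  have hFinv_cont := continuousOn_Ici_of_rightInverse hF_anti hFinv hF1
  have hFinv_zero := rightInverse_zero hF_anti hFinv hF1
  have hinv_f_cont : ContinuousOn (fun u => 1 / f u) (Ioi 0) :=
    continuousOn_const.div hf_cont.continuousOn fun u hu => (hfpos u hu).ne'
  have hFinv_deriv : ∀ t ∈ Ioi 0, HasDerivAt Finv (-f (Finv t)) t := fun t ht => by
    simpa using hasDerivAt_of_rightInverse
      (fun x hx => hasDerivAt_of_eq_integral_left one_pos hinv_f_cont hF hx)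
      (fun x hx => by simp [(hfpos x hx).ne']) hFinv hFinv_cont ht
  have hFinv_deriv_nonpos : ∀ t ∈ Ioi 0, -f (Finv t) ≤ 0 :=
    fun t ht => neg_nonpos.2 (hfpos _ (hFinv t (le_of_lt ht)).1).le
  have hFinv_cont0 : ContinuousWithinAt Finv (Ici 0) 0 := hFinv_cont 0 self_mem_Ici
  refine ⟨fun T hT => ?_, ?_, ?_⟩
  · have hcont : ContinuousOn Finv (Icc 0 T) := hFinv_cont.mono Icc_subset_Ici_self
    have hFTC := intervalIntegral.integral_eq_sub_of_hasDerivAt_of_le hT.le hcont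
      (fun t ht => hFinv_deriv t ht.1)
      ((hf_cont.comp_continuousOn hcont).neg.intervalIntegrable_of_Icc hT.le)
    rw [intervalIntegral.integral_neg, hFinv_zero] at hFTC
    linarith
  · simpa using (integrableOn_Ioi_deriv_of_nonpos hFinv_cont0 hFinv_deriv
      hFinv_deriv_nonpos hFinv_to0).neg
  · have hFTC := integral_Ioi_of_hasDerivAt_of_nonpos hFinv_cont0 hFinv_deriv
      hFinv_deriv_nonpos hFinv_to0
    rw [integral_neg, hFinv_zero] at hFTC
    linarith

/-- Computation from the proof of Theorem 2.2: if `f` is continuous with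
`x f(x) > 0` for `x ≠ 0` and `f(0) = 0`, `F(x) = ∫_x^1 du/f(u)` tends to `+∞` as
`x → 0⁺`, and `F⁻¹` is the inverse of `F` (so `F⁻¹(0) = 1` and `F⁻¹(t) → 0`), then
`∫_0^T f(F⁻¹(s)) ds = 1 - F⁻¹(T)` for every `T > 0`; consequently `f∘F⁻¹` is
integrable on `(0,∞)` with total integral `1`. -/
theorem stmt_13 (f F Finv : ℝ → ℝ)
    (hf_cont : Continuous f)
    (hf_sign : ∀ y : ℝ, y ≠ 0 → 0 < y * f y) (hf_zero : f 0 = 0)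
    (hF : ∀ y : ℝ, 0 < y → F y = ∫ u in y..(1:ℝ), 1 / f u)
    (hF_top : Tendsto F (nhdsWithin 0 (Set.Ioi 0)) atTop)
    (hF_anti : StrictAntiOn F (Set.Ioi 0))
    (hFinv : ∀ t : ℝ, 0 ≤ t → 0 < Finv t ∧ F (Finv t) = t)
    (hFinv_zero : Finv 0 = 1)
    (hFinv_to0 : Tendsto Finv atTop (nhds 0)) :
    (∀ T : ℝ, 0 < T → ∫ s in (0:ℝ)..T, f (Finv s) = 1 - Finv T) ∧
    IntegrableOn (fun s => f (Finv s)) (Set.Ioi 0) ∧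
    ∫ s in Set.Ioi (0:ℝ), f (Finv s) = 1 :=
  stmt_13_general f F Finv hf_cont hf_sign hF hF_anti hFinv hFinv_to0
end
end

section
/- Let δ ∈ (e^{-(√2-1)}, 1), let f(x) = x/log(1/x) for x ∈ (0,δ) with f(0) = 0, and let g(t) = e^{-√2(1+t)^{1/2}+(1+t)^{1/3}}·(1+t)^{-2/3}·((5√2/6) - (1/3)(1+t)^{-1/6})/(√2 - (1+t)^{-1/6}) for t ≥ 0, which is continuous and positive. Then x(t) = exp(-√2(1+t)^{1/2}+(1+t)^{1/3}) is the unique continuous solution of x'(t) = -f(x(t)) + g(t), t > 0, x(0) = e^{-(√2-1)}; moreover, with F(x) = ∫_x^δ du/f(u), one has lim_{t→∞} (f∘F⁻¹)(t) / (e^{-√2 t^{1/2}}/(√2·t^{1/2})) = 1, lim_{t→∞} g(t)/(f∘F⁻¹)(t) = +∞, and nevertheless lim_{t→∞} F(x(t))/t = 1. -/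
open Filter Real Set Topology MeasureTheory

noncomputable section

open scoped NNReal

/-!
With `s = (1 + t)^(1/6)` the candidate is `x = exp (-(√2 s³ - s²))`, so `log (1/x) = √2 s³ - s²`
and `x'/x`, `f(x)/x`, `g/x` are all rational in `s`: the equation becomes a rational identity.
Uniqueness holds because `f` is `C¹`, hence locally Lipschitz, on `(0, δ)`, where `x` stays.

Since `F y = (log² y - log² δ)/2`, we get `f (F⁻¹ t) = e^{-a}/a` with `a = √(2t + log² δ)`, and
`a - √(2t + e) → 0` for every constant `e`. Comparing with `b = √(2t + 2) = √2 s³` shows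
`g / (f ∘ F⁻¹) ~ (5/6) √2 e^{s²}/s → ∞`, while `F (x t) / t` is the rational function
`((√2 s³ - s²)² - log² δ) / (2 (s⁶ - 1)) → 1`.
-/

theorem ODE_solution_unique_of_mem_Icc_of_hasDerivAt_Ioo {E : Type*} [NormedAddCommGroup E]
    [NormedSpace ℝ E] {v : ℝ → E → E} {s : Set E} {K : ℝ≥0} {f g : ℝ → E} {a b : ℝ}
    (hv : ∀ t ∈ Ioo a b, LipschitzOnWith K (v t) s)
    (hf : ContinuousOn f (Icc a b)) (hf' : ∀ t ∈ Ioo a b, HasDerivAt f (v t (f t)) t)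
    (hfs : ∀ t ∈ Ioo a b, f t ∈ s)
    (hg : ContinuousOn g (Icc a b)) (hg' : ∀ t ∈ Ioo a b, HasDerivAt g (v t (g t)) t)
    (hgs : ∀ t ∈ Ioo a b, g t ∈ s)
    (ha : f a = g a) : EqOn f g (Icc a b) := by
  intro t ht
  rcases ht.1.eq_or_lt with rfl | hat
  · exact ha
  -- Gronwall on `[c, t]` for every `c ∈ (a, t)`, then let `c → a`.
  have gronwall : ∀ c ∈ Ioo a t, dist (f t) (g t) ≤ dist (f c) (g c) * exp (K * (t - c)) := by
    intro c hc
    have hsub : Icc c t ⊆ Icc a b := Icc_subset_Icc hc.1.le ht.2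
    have hIco : Ico c t ⊆ Ioo a b := fun u hu => ⟨hc.1.trans_le hu.1, hu.2.trans_le ht.2⟩
    exact dist_le_of_trajectories_ODE_of_mem (fun u hu => hv u (hIco hu)) (hf.mono hsub)
      (fun u hu => (hf' u (hIco hu)).hasDerivWithinAt) (fun u hu => hfs u (hIco hu))
      (hg.mono hsub) (fun u hu => (hg' u (hIco hu)).hasDerivWithinAt)
      (fun u hu => hgs u (hIco hu)) le_rfl t ⟨hc.2.le, le_rfl⟩
  have hlim : Tendsto (fun c => dist (f c) (g c) * exp (K * (t - c))) (𝓝[Ioo a t] a)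
      (𝓝 (dist (f a) (g a) * exp (K * (t - a)))) := by
    have hmono : 𝓝[Ioo a t] a ≤ 𝓝[Icc a b] a :=
      nhdsWithin_mono a fun u hu => ⟨hu.1.le, hu.2.le.trans ht.2⟩
    have hab : a ∈ Icc a b := ⟨le_rfl, hat.le.trans ht.2⟩
    refine (((hf a hab).dist (hg a hab)).mono_left hmono).mul ?_
    exact ((Real.continuous_exp.comp (continuous_const.mul
      (continuous_const.sub continuous_id))).tendsto a).mono_left nhdsWithin_le_nhds
  have : dist (f t) (g t) ≤ 0 := by
    have := left_nhdsWithin_Ioo_neBot hat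
    simpa [ha] using ge_of_tendsto hlim (eventually_nhdsWithin_of_forall gronwall)
  exact dist_le_zero.1 this

theorem IsSol.eq_of_locallyLipschitzOn {f g x y : ℝ → ℝ} {ξ : ℝ} {U : Set ℝ} (hU : IsOpen U)
    (hfU : LocallyLipschitzOn U f) (hx : IsSol f g ξ x) (hxU : ∀ t, 0 ≤ t → x t ∈ U)
    (hy : IsSol f g ξ y) : ∀ t, 0 ≤ t → y t = x t := by
  intro T hT
  suffices Icc 0 T ⊆ {t | y t = x t} from this ⟨hT, le_rfl⟩
  refine IsClosed.Icc_subset_of_forall_mem_nhdsWithin ?_ (hy.2.1.trans hx.2.1.symm) ?_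
  · have hsub : Icc 0 T ⊆ Ici 0 := Icc_subset_Ici_self
    rw [inter_comm]
    exact isClosed_Icc.isClosed_eq (hy.1.mono hsub) (hx.1.mono hsub)
  rintro t ⟨hyx, ht0, -⟩
  obtain ⟨K, N, hN, hK⟩ := hfU (hxU t ht0)
  rw [hU.nhdsWithin_eq (hxU t ht0)] at hN
  have hIci : Ici t ⊆ Ici 0 := Ici_subset_Ici.2 ht0
  have hxN : ∀ᶠ s in 𝓝[≥] t, x s ∈ N := (hx.1.continuousWithinAt ht0).mono hIci hN
  have hyN : ∀ᶠ s in 𝓝[≥] t, y s ∈ N :=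
    (hy.1.continuousWithinAt ht0).mono hIci (hyx.symm ▸ hN : N ∈ 𝓝 (y t))
  obtain ⟨u, htu, hu⟩ := mem_nhdsGE_iff_exists_Icc_subset.1 (hxN.and hyN)
  have hpos : ∀ s ∈ Ioo t u, 0 < s := fun s hs => ht0.trans_lt hs.1
  have hsub : Icc t u ⊆ Ici 0 := fun s hs => ht0.trans hs.1
  have hv (s : ℝ) : LipschitzOnWith K (fun z => -f z + g s) N := fun z hz w hw => by
    simpa only [edist_add_right, edist_neg_neg] using hK hz hw
  have heq := ODE_solution_unique_of_mem_Icc_of_hasDerivAt_Ioo (fun s _ => hv s)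
    (hy.1.mono hsub) (fun s hs => hy.2.2 s (hpos s hs))
    (fun s hs => (hu (Ioo_subset_Icc_self hs)).2) (hx.1.mono hsub)
    (fun s hs => hx.2.2 s (hpos s hs)) (fun s hs => (hu (Ioo_subset_Icc_self hs)).1) hyx
  exact nhdsWithin_mono t Ioi_subset_Ici_self (mem_of_superset (Icc_mem_nhdsGE htu) heq)

theorem integral_neg_log_div_self {a b : ℝ} (ha : 0 < a) (hb : 0 < b) :
    ∫ u in a..b, -log u / u = (log a ^ 2 - log b ^ 2) / 2 := by
  have hpos : ∀ u ∈ uIcc a b, 0 < u := fun u hu =>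
    (lt_min ha hb).trans_le (by simpa [uIcc] using hu.1)
  rw [intervalIntegral.integral_eq_sub_of_hasDerivAt (f := fun u => -log u ^ 2 / 2)]
  · linarith
  · intro u hu
    refine (((hasDerivAt_log (hpos u hu).ne').pow 2).neg.div_const 2).congr_deriv ?_
    push_cast
    ring
  · refine ContinuousOn.intervalIntegrable fun u hu => ContinuousAt.continuousWithinAt ?_
    exact (continuousAt_log (hpos u hu).ne').neg.div continuousAt_id (hpos u hu).ne'

section DivLog

variable {f : ℝ → ℝ} {δ : ℝ}

theorem locallyLipschitzOn_of_eq_div_log (hδ : δ ≤ 1)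
    (hf : ∀ y ∈ Ioo (0:ℝ) δ, f y = y / log (1 / y)) : LocallyLipschitzOn (Ioo 0 δ) f := by
  refine ContDiffOn.locallyLipschitzOn (convex_Ioo 0 δ) (ContDiffOn.congr ?_ hf)
  intro y hy
  have hlog : log (1 / y) ≠ 0 := by
    rw [one_div, log_inv, neg_ne_zero]
    exact (log_neg hy.1 (hy.2.trans_le hδ)).ne
  refine (contDiffAt_id.div ((contDiffAt_log.2 ?_).comp y
    (contDiffAt_const.div contDiffAt_id ?_)) hlog).contDiffWithinAt <;> simp [hy.1.ne']

theorem integral_one_div_eq_of_eq_div_log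
    (hf : ∀ y ∈ Ioo (0:ℝ) δ, f y = y / log (1 / y)) {y : ℝ} (hy : y ∈ Ioc 0 δ) :
    ∫ u in y..δ, 1 / f u = (log y ^ 2 - log δ ^ 2) / 2 := by
  rw [← integral_neg_log_div_self hy.1 (hy.1.trans_le hy.2)]
  refine intervalIntegral.integral_congr_Ioo_of_le hy.2 fun u hu => ?_
  rw [hf u ⟨hy.1.trans hu.1, hu.2⟩, one_div_div, one_div, log_inv, neg_div]

theorem log_eq_neg_sqrt_of_integral_eq {y t : ℝ} (hδ : δ < 1)
    (hf : ∀ y ∈ Ioo (0:ℝ) δ, f y = y / log (1 / y)) (hy : y ∈ Ioc 0 δ)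
    (hyt : ∫ u in y..δ, 1 / f u = t) : log y = -√(2 * t + log δ ^ 2) := by
  rw [integral_one_div_eq_of_eq_div_log hf hy] at hyt
  have hlog : log y < 0 := log_neg hy.1 (hy.2.trans_lt hδ)
  rw [show 2 * t + log δ ^ 2 = (-log y) ^ 2 by rw [← hyt]; ring, sqrt_sq (by linarith), neg_neg]

theorem eq_exp_neg_sqrt_div_of_integral_eq {y t : ℝ} (hδ : δ < 1)
    (hf : ∀ y ∈ Ioo (0:ℝ) δ, f y = y / log (1 / y)) (hy : y ∈ Ioc 0 δ) (ht : 0 < t)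
    (hyt : ∫ u in y..δ, 1 / f u = t) :
    f y = exp (-√(2 * t + log δ ^ 2)) / √(2 * t + log δ ^ 2) := by
  have hlog := log_eq_neg_sqrt_of_integral_eq hδ hf hy hyt
  have hyδ : y < δ := by
    refine hy.2.lt_of_ne fun h => ?_
    rw [h, intervalIntegral.integral_same] at hyt
    exact ht.ne hyt
  rw [hf y ⟨hy.1, hyδ⟩, one_div, log_inv, hlog, neg_neg]
  congr 1
  rw [← hlog, exp_log hy.1]

end DivLog

theorem tendsto_sqrt_add_sub_sqrt_add (c d : ℝ) :
    Tendsto (fun t => √(t + c) - √(t + d)) atTop (𝓝 0) := by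
  have hsqrt (e : ℝ) : Tendsto (fun t => √(t + e)) atTop atTop :=
    tendsto_sqrt_atTop.comp (tendsto_atTop_add_const_right _ e tendsto_id)
  have hsum := (hsqrt c).atTop_add_atTop (hsqrt d)
  refine (tendsto_const_nhds (x := c - d).div_atTop hsum).congr' ?_
  filter_upwards [eventually_gt_atTop (max (-c) (-d))] with t ht
  have hc : 0 < t + c := by linarith [le_max_left (-c) (-d)]
  have hd : 0 < t + d := by linarith [le_max_right (-c) (-d)]
  have hpos : 0 < √(t + c) + √(t + d) := by positivity
  rw [div_eq_iff hpos.ne']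
  nlinarith [sq_sqrt hc.le, sq_sqrt hd.le]

theorem tendsto_sqrt_two_mul_add_sub (c d : ℝ) :
    Tendsto (fun t => √(2 * t + c) - √(2 * t + d)) atTop (𝓝 0) :=
  (tendsto_sqrt_add_sub_sqrt_add c d).comp (tendsto_id.const_mul_atTop two_pos)

theorem tendsto_sqrt_two_mul_add_atTop (c : ℝ) : Tendsto (fun t => √(2 * t + c)) atTop atTop :=
  tendsto_sqrt_atTop.comp (tendsto_atTop_add_const_right _ c (tendsto_id.const_mul_atTop two_pos))

theorem tendsto_exp_neg_div_self_div {α : Type*} {l : Filter α} {a b : α → ℝ}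
    (ha : Tendsto a l atTop) (hab : Tendsto (fun t => a t - b t) l (𝓝 0)) :
    Tendsto (fun t => (exp (-a t) / a t) / (exp (-b t) / b t)) l (𝓝 1) := by
  have hlim : Tendsto (fun t => exp (-(a t - b t)) * (1 - (a t - b t) * (a t)⁻¹)) l
      (𝓝 (exp (-0) * (1 - 0 * 0))) :=
    ((continuous_exp.tendsto _).comp hab.neg).mul
      (tendsto_const_nhds.sub (hab.mul ha.inv_tendsto_atTop))
  rw [neg_zero, exp_zero, mul_zero, sub_zero, mul_one] at hlim
  refine hlim.congr' ?_
  filter_upwards [ha.eventually_gt_atTop 0] with t ht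
  rw [neg_sub, exp_sub, exp_neg, exp_neg]
  field_simp
  ring

def sixthRoot (t : ℝ) : ℝ := (1 + t) ^ ((1:ℝ) / 6)

def decayExponent (s : ℝ) : ℝ := √2 * s ^ 3 - s ^ 2

def gFactor (u : ℝ) : ℝ := (5 * √2 / 6 - (1/3) * u) / (√2 - u)

section sixthRoot

variable {t : ℝ}

theorem one_add_rpow_int_div_six (ht : -1 < t) (n : ℤ) :
    (1 + t) ^ ((n : ℝ) / 6) = sixthRoot t ^ n := by
  rw [sixthRoot, ← Real.rpow_intCast, ← Real.rpow_mul (by linarith)]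
  ring_nf

theorem sixthRoot_pos (ht : -1 < t) : 0 < sixthRoot t := Real.rpow_pos_of_pos (by linarith) _

theorem one_le_sixthRoot (ht : 0 ≤ t) : 1 ≤ sixthRoot t :=
  Real.one_le_rpow (by linarith) (by norm_num)

theorem sixthRoot_pow_six (ht : -1 < t) : sixthRoot t ^ 6 = 1 + t := by
  simpa using (one_add_rpow_int_div_six ht 6).symm

theorem tendsto_sixthRoot_atTop : Tendsto sixthRoot atTop atTop :=
  (tendsto_rpow_atTop (by norm_num)).comp (tendsto_atTop_add_const_left _ 1 tendsto_id)

theorem hasDerivAt_sixthRoot (ht : -1 < t) :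
    HasDerivAt sixthRoot (1 / (6 * sixthRoot t ^ 5)) t := by
  have := ((hasDerivAt_id' t).const_add 1).rpow_const (p := (1:ℝ) / 6)
    (Or.inl (by simp; linarith))
  refine HasDerivAt.congr_deriv (f := sixthRoot) this ?_
  rw [show (1:ℝ) / 6 - 1 = ((-5 : ℤ) : ℝ) / 6 by norm_num, one_add_rpow_int_div_six ht]
  simp only [zpow_neg, zpow_ofNat]
  ring

end sixthRoot

theorem sqrt_two_sub_one_le_decayExponent {s : ℝ} (hs : 1 ≤ s) : √2 - 1 ≤ decayExponent s := by
  unfold decayExponent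
  nlinarith [mul_nonneg (sub_nonneg.2 hs) (show 0 ≤ √2 * (s ^ 2 + s + 1) - (s + 1) by
    nlinarith [one_lt_sqrt_two])]

theorem gFactor_pos {u : ℝ} (hu : u ≤ 1) : 0 < gFactor u := by
  have := one_lt_sqrt_two
  apply div_pos <;> nlinarith

theorem tendsto_gFactor : Tendsto gFactor (𝓝 0) (𝓝 (5 / 6)) := by
  have hc : ContinuousAt gFactor 0 := by
    unfold gFactor
    exact ((continuousAt_const.sub (continuousAt_const.mul continuousAt_id)).div
      (continuousAt_const.sub continuousAt_id) (by simp))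
  convert hc.tendsto using 2
  simp only [gFactor, mul_zero, sub_zero]
  field_simp

-- `-f(x)/x + g/x = x'/x` for `x = exp (-decayExponent s)`, `s = sixthRoot t`, `ds/dt = 1/(6 s⁵)`.
theorem neg_inv_decayExponent_add_gFactor_eq {s : ℝ} (hs : 1 ≤ s) :
    -(decayExponent s)⁻¹ + gFactor s⁻¹ / s ^ 4 =
      -(3 * √2 * s ^ 2 - 2 * s) * (1 / (6 * s ^ 5)) := by
  have h2 : √2 ^ 2 = 2 := Real.sq_sqrt zero_le_two
  have h1 := one_lt_sqrt_two
  have hs0 : 0 < s := by linarith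
  have hD : 0 < decayExponent s := by
    linarith [sqrt_two_sub_one_le_decayExponent hs]
  have hd : 0 < √2 * s - 1 := by nlinarith
  unfold gFactor
  unfold decayExponent at hD ⊢
  field_simp
  linear_combination (9 * s ^ 2) * h2

def decaySolution (t : ℝ) : ℝ := exp (-decayExponent (sixthRoot t))

section decaySolution

variable {t : ℝ}

theorem exp_exponent_eq_decaySolution (ht : -1 < t) :
    exp (-√2 * (1 + t) ^ ((1:ℝ) / 2) + (1 + t) ^ ((1:ℝ) / 3)) = decaySolution t := by
  rw [decaySolution, decayExponent, show (1:ℝ) / 2 = ((3:ℤ):ℝ) / 6 by norm_num,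
    show (1:ℝ) / 3 = ((2:ℤ):ℝ) / 6 by norm_num, one_add_rpow_int_div_six ht,
    one_add_rpow_int_div_six ht, zpow_ofNat, zpow_ofNat]
  ring_nf

theorem perturbation_eq (ht : -1 < t) :
    exp (-√2 * (1 + t) ^ ((1:ℝ) / 2) + (1 + t) ^ ((1:ℝ) / 3)) * (1 + t) ^ (-(2:ℝ) / 3) *
        ((5 * √2 / 6 - (1/3) * (1 + t) ^ (-(1:ℝ) / 6)) / (√2 - (1 + t) ^ (-(1:ℝ) / 6))) =
      decaySolution t * gFactor (sixthRoot t)⁻¹ / sixthRoot t ^ 4 := by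
  rw [exp_exponent_eq_decaySolution ht, show -(2:ℝ) / 3 = ((-4:ℤ):ℝ) / 6 by norm_num,
    show -(1:ℝ) / 6 = ((-1:ℤ):ℝ) / 6 by norm_num, one_add_rpow_int_div_six ht,
    one_add_rpow_int_div_six ht, gFactor]
  simp only [zpow_neg, zpow_ofNat]
  ring

theorem decaySolution_pos : 0 < decaySolution t := exp_pos _

theorem decaySolution_le (ht : 0 ≤ t) : decaySolution t ≤ exp (-(√2 - 1)) :=
  exp_le_exp.2 (neg_le_neg (sqrt_two_sub_one_le_decayExponent (one_le_sixthRoot ht)))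

theorem log_one_div_decaySolution : log (1 / decaySolution t) = decayExponent (sixthRoot t) := by
  rw [one_div, log_inv, decaySolution, log_exp, neg_neg]

theorem hasDerivAt_decaySolution (ht : -1 < t) :
    HasDerivAt decaySolution (decaySolution t *
      (-(3 * √2 * sixthRoot t ^ 2 - 2 * sixthRoot t) * (1 / (6 * sixthRoot t ^ 5)))) t := by
  have hD : HasDerivAt decayExponent (3 * √2 * sixthRoot t ^ 2 - 2 * sixthRoot t)
      (sixthRoot t) := by
    refine HasDerivAt.congr_deriv (f := decayExponent)
      (((hasDerivAt_pow 3 _).const_mul √2).sub (hasDerivAt_pow 2 _)) ?_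
    push_cast
    ring
  exact HasDerivAt.congr_deriv (f := decaySolution) (hD.comp t (hasDerivAt_sixthRoot ht)).neg.exp
    (by rw [neg_mul]; rfl)

theorem sqrt_two_mul_add_two_eq (ht : -1 < t) : √(2 * t + 2) = √2 * sixthRoot t ^ 3 := by
  rw [show 2 * t + 2 = 2 * (sixthRoot t ^ 3) ^ 2 by rw [← pow_mul, sixthRoot_pow_six ht]; ring,
    sqrt_mul zero_le_two, sqrt_sq (pow_pos (sixthRoot_pos ht) 3).le]

theorem decaySolution_mul_gFactor_eq (ht : -1 < t) :
    decaySolution t * gFactor (sixthRoot t)⁻¹ / sixthRoot t ^ 4 =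
      √2 * gFactor (sixthRoot t)⁻¹ * (exp (sixthRoot t ^ 2) / sixthRoot t) *
        (exp (-√(2 * t + 2)) / √(2 * t + 2)) := by
  have hs := sixthRoot_pos ht
  rw [sqrt_two_mul_add_two_eq ht, decaySolution, decayExponent, neg_sub, exp_sub, exp_neg]
  field_simp

theorem decaySolution_mul_gFactor_pos (ht : 0 ≤ t) :
    0 < decaySolution t * gFactor (sixthRoot t)⁻¹ / sixthRoot t ^ 4 := by
  have hs := one_le_sixthRoot ht
  exact div_pos (mul_pos decaySolution_pos (gFactor_pos (inv_le_one_of_one_le₀ hs)))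
    (by positivity)

end decaySolution

theorem isSol_decaySolution {f g x : ℝ → ℝ} {δ : ℝ} (hδ : exp (-(√2 - 1)) < δ)
    (hf : ∀ y ∈ Ioo (0:ℝ) δ, f y = y / log (1 / y))
    (hg : ∀ t, 0 ≤ t → g t = decaySolution t * gFactor (sixthRoot t)⁻¹ / sixthRoot t ^ 4)
    (hx : ∀ t, 0 ≤ t → x t = decaySolution t) : IsSol f g (exp (-(√2 - 1))) x := by
  refine ⟨?_, ?_, fun t ht => ?_⟩
  · refine ContinuousOn.congr (fun t ht => ?_) hx
    exact (hasDerivAt_decaySolution (by linarith [mem_Ici.1 ht])).continuousAt.continuousWithinAt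
  · simp [hx 0 le_rfl, decaySolution, sixthRoot, decayExponent]
  have hs := one_le_sixthRoot ht.le
  have hmem : decaySolution t ∈ Ioo 0 δ :=
    ⟨decaySolution_pos, (decaySolution_le ht.le).trans_lt hδ⟩
  have hxt : x =ᶠ[𝓝 t] decaySolution :=
    eventually_of_mem (Ioi_mem_nhds ht) fun s hs => hx s (le_of_lt hs)
  have hrhs : -f (x t) + g t = decaySolution t *
      (-(3 * √2 * sixthRoot t ^ 2 - 2 * sixthRoot t) * (1 / (6 * sixthRoot t ^ 5))) := by
    rw [hx t ht.le, hf _ hmem, hg t ht.le, log_one_div_decaySolution,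
      ← neg_inv_decayExponent_add_gFactor_eq hs]
    ring
  rw [hrhs]
  exact (hasDerivAt_decaySolution (by linarith)).congr_of_eventuallyEq hxt

theorem tendsto_decayExponent_sq_sub_div (c : ℝ) :
    Tendsto (fun s => (decayExponent s ^ 2 - c) / 2 / (s ^ 6 - 1)) atTop (𝓝 1) := by
  have hc : ContinuousAt (fun u : ℝ => ((√2 - u) ^ 2 - c * u ^ 6) / (2 * (1 - u ^ 6))) 0 :=
    ((continuousAt_const.sub continuousAt_id).pow 2 |>.sub
      (continuousAt_const.mul (continuousAt_id.pow 6))).div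
      (continuousAt_const.mul (continuousAt_const.sub (continuousAt_id.pow 6))) (by simp)
  have hlim := hc.tendsto.comp tendsto_inv_atTop_zero
  rw [show ((√2 - 0) ^ 2 - c * 0 ^ 6) / (2 * (1 - 0 ^ 6)) = (1:ℝ) by simp] at hlim
  refine hlim.congr' ?_
  filter_upwards [eventually_gt_atTop 1] with s hs
  have h6 : s ^ 6 - 1 ≠ 0 := by
    have : 1 < s ^ 6 := one_lt_pow₀ hs (by norm_num)
    linarith
  simp only [Function.comp, decayExponent]
  field_simp

theorem tendsto_sqrt_two_mul_gFactor_mul_exp_sq_div :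
    Tendsto (fun s => √2 * gFactor s⁻¹ * (exp (s ^ 2) / s)) atTop atTop := by
  have hG : Tendsto (fun s : ℝ => √2 * gFactor s⁻¹) atTop (𝓝 (√2 * (5 / 6))) :=
    tendsto_const_nhds.mul (tendsto_gFactor.comp tendsto_inv_atTop_zero)
  refine hG.pos_mul_atTop (by positivity) (tendsto_atTop_mono' _ ?_ (by
    simpa using tendsto_exp_div_pow_atTop 1))
  filter_upwards [eventually_ge_atTop 1] with s hs
  gcongr
  nlinarith

section limits

variable {φ : ℝ → ℝ} {c : ℝ}

theorem tendsto_div_exp_neg_sqrt_two_mul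
    (hφ : ∀ t, 0 < t → φ t = exp (-√(2 * t + c)) / √(2 * t + c)) :
    Tendsto (fun t => φ t / (exp (-√2 * t ^ ((1:ℝ) / 2)) / (√2 * t ^ ((1:ℝ) / 2)))) atTop
      (𝓝 1) := by
  refine (tendsto_exp_neg_div_self_div (b := fun t => √(2 * t))
    (tendsto_sqrt_two_mul_add_atTop c) (by simpa using tendsto_sqrt_two_mul_add_sub c 0)).congr' ?_
  filter_upwards [eventually_gt_atTop 0] with t ht
  rw [hφ t ht, neg_mul, ← sqrt_eq_rpow, ← sqrt_mul zero_le_two]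

theorem tendsto_perturbation_div {g : ℝ → ℝ}
    (hφ : ∀ t, 0 < t → φ t = exp (-√(2 * t + c)) / √(2 * t + c))
    (hg : ∀ t, 0 ≤ t → g t = decaySolution t * gFactor (sixthRoot t)⁻¹ / sixthRoot t ^ 4) :
    Tendsto (fun t => g t / φ t) atTop atTop := by
  have hratio := tendsto_exp_neg_div_self_div (tendsto_sqrt_two_mul_add_atTop c)
    (tendsto_sqrt_two_mul_add_sub c 2)
  refine ((tendsto_sqrt_two_mul_gFactor_mul_exp_sq_div.comp tendsto_sixthRoot_atTop).atTop_mul_pos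
    one_pos (by simpa using hratio.inv₀ one_ne_zero)).congr' ?_
  filter_upwards [eventually_gt_atTop 0] with t ht
  rw [hg t ht.le, hφ t ht, decaySolution_mul_gFactor_eq (by linarith), mul_div_assoc]
  rfl

end limits

theorem tendsto_log_decaySolution_sq_sub_div (c : ℝ) :
    Tendsto (fun t => (log (decaySolution t) ^ 2 - c) / 2 / t) atTop (𝓝 1) := by
  refine ((tendsto_decayExponent_sq_sub_div c).comp tendsto_sixthRoot_atTop).congr' ?_
  filter_upwards [eventually_gt_atTop 0] with t ht
  rw [Function.comp_apply, sixthRoot_pow_six (by linarith), decaySolution, log_exp, neg_sq]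
  ring_nf

theorem stmt_14_general (δ : ℝ) (hδ : δ ∈ Set.Ioo (Real.exp (-(Real.sqrt 2 - 1))) 1)
    (f g F Finv x : ℝ → ℝ)
    (hf : ∀ y ∈ Set.Ioo (0:ℝ) δ, f y = y / Real.log (1 / y))
    (hg : ∀ t : ℝ, 0 ≤ t → g t =
      Real.exp (-(Real.sqrt 2) * (1 + t) ^ ((1:ℝ)/2) + (1 + t) ^ ((1:ℝ)/3)) *
        (1 + t) ^ (-(2:ℝ)/3) *
        ((5 * Real.sqrt 2 / 6 - (1/3) * (1 + t) ^ (-(1:ℝ)/6)) /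
          (Real.sqrt 2 - (1 + t) ^ (-(1:ℝ)/6))))
    (hxdef : ∀ t : ℝ, 0 ≤ t →
      x t = Real.exp (-(Real.sqrt 2) * (1 + t) ^ ((1:ℝ)/2) + (1 + t) ^ ((1:ℝ)/3)))
    (hF : ∀ y ∈ Set.Ioc (0:ℝ) δ, F y = ∫ u in y..δ, 1 / f u)
    (hFinv : ∀ t : ℝ, 0 ≤ t → Finv t ∈ Set.Ioc (0:ℝ) δ ∧ F (Finv t) = t) :
    (∀ t : ℝ, 0 ≤ t → 0 < g t) ∧
    IsSol f g (Real.exp (-(Real.sqrt 2 - 1))) x ∧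
    (∀ y : ℝ → ℝ, IsSol f g (Real.exp (-(Real.sqrt 2 - 1))) y →
      ∀ t : ℝ, 0 ≤ t → y t = x t) ∧
    Tendsto (fun t => f (Finv t) /
      (Real.exp (-(Real.sqrt 2) * t ^ ((1:ℝ)/2)) / (Real.sqrt 2 * t ^ ((1:ℝ)/2))))
      atTop (nhds 1) ∧
    Tendsto (fun t => g t / f (Finv t)) atTop atTop ∧
    Tendsto (fun t => F (x t) / t) atTop (nhds 1) := by
  obtain ⟨hδl, hδ1⟩ := hδ
  have hx : ∀ t, 0 ≤ t → x t = decaySolution t := fun t ht =>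
    (hxdef t ht).trans (exp_exponent_eq_decaySolution (by linarith))
  have hg' : ∀ t, 0 ≤ t → g t = decaySolution t * gFactor (sixthRoot t)⁻¹ / sixthRoot t ^ 4 :=
    fun t ht => (hg t ht).trans (perturbation_eq (by linarith))
  have hsol := isSol_decaySolution hδl hf hg' hx
  have hxmem : ∀ t, 0 ≤ t → x t ∈ Ioo 0 δ := fun t ht => hx t ht ▸
    ⟨decaySolution_pos, (decaySolution_le ht).trans_lt hδl⟩
  have hfFinv : ∀ t, 0 < t → f (Finv t) = exp (-√(2 * t + log δ ^ 2)) / √(2 * t + log δ ^ 2) :=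
    fun t ht => eq_exp_neg_sqrt_div_of_integral_eq hδ1 hf (hFinv t ht.le).1 ht
      ((hF _ (hFinv t ht.le).1).symm.trans (hFinv t ht.le).2)
  refine ⟨fun t ht => hg' t ht ▸ decaySolution_mul_gFactor_pos ht, hsol,
    fun y => hsol.eq_of_locallyLipschitzOn isOpen_Ioo (locallyLipschitzOn_of_eq_div_log hδ1.le hf)
      hxmem,
    tendsto_div_exp_neg_sqrt_two_mul hfFinv, tendsto_perturbation_div hfFinv hg', ?_⟩
  refine (tendsto_log_decaySolution_sq_sub_div (log δ ^ 2)).congr' ?_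
  filter_upwards [eventually_ge_atTop 0] with t ht
  rw [hF _ (Ioo_subset_Ioc_self (hxmem t ht)), integral_one_div_eq_of_eq_div_log hf
    (Ioo_subset_Ioc_self (hxmem t ht)), hx t ht]

/-- Example 2.1: with `δ ∈ (e^{-(√2-1)}, 1)`, `f(x) = x/log(1/x)` on `(0,δ)`, `f(0)=0`,
and the given perturbation `g`, the function `x(t) = exp(-√2(1+t)^{1/2}+(1+t)^{1/3})`
is the unique continuous solution of `x' = -f(x)+g`, `x(0) = e^{-(√2-1)}`; moreover
`(f∘F⁻¹)(t) ~ e^{-√2 t^{1/2}}/(√2 t^{1/2})`, `g(t)/(f∘F⁻¹)(t) → +∞`, and yet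
`F(x(t))/t → 1`. -/
theorem stmt_14 (δ : ℝ) (hδ : δ ∈ Set.Ioo (Real.exp (-(Real.sqrt 2 - 1))) 1)
    (f g F Finv x : ℝ → ℝ)
    (hf : ∀ y ∈ Set.Ioo (0:ℝ) δ, f y = y / Real.log (1 / y)) (hf_zero : f 0 = 0)
    (hg : ∀ t : ℝ, 0 ≤ t → g t =
      Real.exp (-(Real.sqrt 2) * (1 + t) ^ ((1:ℝ)/2) + (1 + t) ^ ((1:ℝ)/3)) *
        (1 + t) ^ (-(2:ℝ)/3) *
        ((5 * Real.sqrt 2 / 6 - (1/3) * (1 + t) ^ (-(1:ℝ)/6)) /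
          (Real.sqrt 2 - (1 + t) ^ (-(1:ℝ)/6))))
    (hxdef : ∀ t : ℝ, 0 ≤ t →
      x t = Real.exp (-(Real.sqrt 2) * (1 + t) ^ ((1:ℝ)/2) + (1 + t) ^ ((1:ℝ)/3)))
    (hF : ∀ y ∈ Set.Ioc (0:ℝ) δ, F y = ∫ u in y..δ, 1 / f u)
    (hFinv : ∀ t : ℝ, 0 ≤ t → Finv t ∈ Set.Ioc (0:ℝ) δ ∧ F (Finv t) = t) :
    (∀ t : ℝ, 0 ≤ t → 0 < g t) ∧
    IsSol f g (Real.exp (-(Real.sqrt 2 - 1))) x ∧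
    (∀ y : ℝ → ℝ, IsSol f g (Real.exp (-(Real.sqrt 2 - 1))) y →
      ∀ t : ℝ, 0 ≤ t → y t = x t) ∧
    Tendsto (fun t => f (Finv t) /
      (Real.exp (-(Real.sqrt 2) * t ^ ((1:ℝ)/2)) / (Real.sqrt 2 * t ^ ((1:ℝ)/2))))
      atTop (nhds 1) ∧
    Tendsto (fun t => g t / f (Finv t)) atTop atTop ∧
    Tendsto (fun t => F (x t) / t) atTop (nhds 1) :=
  stmt_14_general δ hδ f g F Finv x hf hg hxdef hF hFinv
end
end
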